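/- arXiv:quant-ph/0101030 — 7 statements merged into one kernel-verified Lean document; each statement's English description precedes it below -/
import Mathlib

section
/- Let V be a Hausdorff locally convex real topological vector space and S ⊆ V a nonempty compact convex subset. Then the barycenter map b : P(S) → S, sending a Borel probability measure μ on S to its barycenter b(μ), is well defined, continuous (with respect to the weak-* topology on P(S)), and surjective onto S. -/
open MeasureTheory

/-- `μ`, a Borel probability measure on the set `S`, has barycenter `ω`:
`ℓ ω = ∫_S ℓ φ dμ(φ)` for every continuous linear functional `ℓ` on `V`. -/
def HasBarycenter {V : Type*} [AddCommGroup V] [Module ℝ V] [TopologicalSpace V]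
    [MeasurableSpace V] {S : Set V} (μ : ProbabilityMeasure ↥S) (ω : V) : Prop :=
  ∀ ℓ : V →L[ℝ] ℝ, ℓ ω = ∫ φ : ↥S, ℓ (φ : V) ∂(μ : Measure ↥S)

section Aux

variable {V : Type*} [AddCommGroup V] [Module ℝ V] [TopologicalSpace V]
    [IsTopologicalAddGroup V] [ContinuousSMul ℝ V] [T2Space V] [LocallyConvexSpace ℝ V]
    [MeasurableSpace V] [BorelSpace V] {S : Set V}

/-- Every probability measure on a compact convex set has a barycenter in the set. -/
theorem exists_hasBarycenter (hScpt : IsCompact S) (hSconv : Convex ℝ S)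
    (μ : ProbabilityMeasure ↥S) : ∃ ω : ↥S, HasBarycenter μ (ω : V) := by
  haveI : CompactSpace ↥S := isCompact_iff_compactSpace.mp hScpt
  -- every continuous real function on S is integrable
  have hint : ∀ g : ↥S → ℝ, Continuous g → Integrable g (μ : Measure ↥S) := fun g hg =>
    (BoundedContinuousFunction.mkOfCompact ⟨g, hg⟩).integrable _
  set I : (V →L[ℝ] ℝ) → ℝ := fun ℓ => ∫ φ : ↥S, ℓ (φ : V) ∂(μ : Measure ↥S) with hI
  set t : (V →L[ℝ] ℝ) → Set V := fun ℓ => {x | ℓ x = I ℓ} with ht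
  have htc : ∀ ℓ, IsClosed (t ℓ) := fun ℓ => isClosed_eq ℓ.continuous continuous_const
  have hfin : ∀ u : Finset (V →L[ℝ] ℝ), (S ∩ ⋂ ℓ ∈ u, t ℓ).Nonempty := by
    intro u
    classical
    set W := ({ℓ // ℓ ∈ u} → ℝ) with hW
    set T : V →ₗ[ℝ] W := LinearMap.pi (fun i => (i.1 : V →L[ℝ] ℝ).toLinearMap) with hT
    have hTcont : Continuous T := continuous_pi fun i => (i.1 : V →L[ℝ] ℝ).continuous
    set K : Set W := T '' S with hK
    have hKcpt : IsCompact K := hScpt.image hTcont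
    have hKconv : Convex ℝ K := hSconv.linear_image T
    set p : W := fun i => I i.1 with hp
    have hpK : p ∈ K := by
      by_contra hpnot
      obtain ⟨f, r, hfK, hfp⟩ :=
        geometric_hahn_banach_closed_point hKconv hKcpt.isClosed hpnot
      set c : {ℓ // ℓ ∈ u} → ℝ := fun i => f (Pi.single i 1) with hc
      have hrep : ∀ w : W, f w = ∑ i, w i * c i := by
        intro w
        have hw : w = ∑ i, w i • Pi.single i (1 : ℝ) := by
          conv_lhs => rw [← Finset.univ_sum_single w]
          refine Finset.sum_congr rfl fun i _ => ?_
          rw [← Pi.single_smul, smul_eq_mul, mul_one]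
        have h1 : f w = ∑ i, f (w i • Pi.single i (1:ℝ)) := by
          rw [← map_sum]; exact congrArg f hw
        rw [h1]
        exact Finset.sum_congr rfl fun i _ => by rw [f.map_smul, smul_eq_mul]
      have hkey : f p = ∫ φ : ↥S, f (T φ) ∂(μ : Measure ↥S) := by
        have : ∀ φ : ↥S, f (T φ) = ∑ i, (i.1 : V →L[ℝ] ℝ) (φ : V) * c i := by
          intro φ; rw [hrep]; rfl
        rw [hrep p]
        rw [integral_congr_ae (Filter.Eventually.of_forall this)]
        rw [integral_finset_sum _ (fun i _ =>
          (hint _ ((i.1 : V →L[ℝ] ℝ).continuous.comp continuous_subtype_val)).mul_const _)]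
        exact Finset.sum_congr rfl fun i _ => by
          rw [integral_mul_const]
      have hle : f p ≤ r := by
        rw [hkey]
        calc ∫ φ : ↥S, f (T φ) ∂(μ : Measure ↥S)
            ≤ ∫ _ : ↥S, r ∂(μ : Measure ↥S) := by
              refine integral_mono (hint _ (f.continuous.comp (hTcont.comp
                continuous_subtype_val))) (integrable_const r) fun φ => ?_
              exact le_of_lt (hfK _ ⟨(φ : V), φ.2, rfl⟩)
          _ = r := by simp
      linarith
    obtain ⟨x, hxS, hTx⟩ := hpK
    refine ⟨x, hxS, ?_⟩
    rw [Set.mem_iInter₂]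
    intro ℓ hℓ
    have := congrFun hTx ⟨ℓ, hℓ⟩
    exact this
  obtain ⟨ω, hωS, hω⟩ := hScpt.inter_iInter_nonempty t htc (by
    intro u
    simpa using hfin u)
  refine ⟨⟨ω, hωS⟩, fun ℓ => ?_⟩
  have := Set.mem_iInter.mp hω ℓ
  exact this

theorem hasBarycenter_unique {μ : ProbabilityMeasure ↥S} {x y : V}
    (hx : HasBarycenter μ x) (hy : HasBarycenter μ y) : x = y := by
  by_contra hne
  obtain ⟨f, hf⟩ := geometric_hahn_banach_point_point hne
  rw [hx f, hy f] at hf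
  exact lt_irrefl _ hf

end Aux

/-- For a nonempty compact convex subset `S` of a Hausdorff locally convex
real topological vector space `V`, the barycenter map `b : P(S) → S` is well defined
(every probability measure on `S` has a unique barycenter, lying in `S`), continuous with
respect to the weak-* topology on `P(S)`, and surjective onto `S`. -/
theorem barycenter_map_wellDefined_continuous_surjective
    {V : Type*} [AddCommGroup V] [Module ℝ V] [TopologicalSpace V]
    [IsTopologicalAddGroup V] [ContinuousSMul ℝ V] [T2Space V] [LocallyConvexSpace ℝ V]
    [MeasurableSpace V] [BorelSpace V]
    (S : Set V) (hSne : S.Nonempty) (hScpt : IsCompact S) (hSconv : Convex ℝ S) :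
    ∃ b : ProbabilityMeasure ↥S → ↥S,
      (∀ μ : ProbabilityMeasure ↥S, HasBarycenter μ (b μ : V)) ∧
      (∀ (μ : ProbabilityMeasure ↥S) (ω : ↥S), HasBarycenter μ (ω : V) → ω = b μ) ∧
      Continuous b ∧ Function.Surjective b := by
  haveI : CompactSpace ↥S := isCompact_iff_compactSpace.mp hScpt
  choose b hb using fun μ : ProbabilityMeasure ↥S => exists_hasBarycenter hScpt hSconv μ
  have huniq : ∀ (μ : ProbabilityMeasure ↥S) (ω : ↥S), HasBarycenter μ (ω : V) → ω = b μ :=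
    fun μ ω hω => Subtype.ext (hasBarycenter_unique hω (hb μ))
  refine ⟨b, hb, huniq, ?_, ?_⟩
  · -- continuity
    set e : ↥S → ((V →L[ℝ] ℝ) → ℝ) := fun x ℓ => ℓ (x : V) with he
    have hecont : Continuous e :=
      continuous_pi fun ℓ => ℓ.continuous.comp continuous_subtype_val
    have heinj : Function.Injective e := by
      intro x y hxy
      by_contra hne
      obtain ⟨f, hf⟩ := geometric_hahn_banach_point_point
        (show (x : V) ≠ (y : V) from fun h => hne (Subtype.ext h))
      have h2 : f (x : V) = f (y : V) := congrFun hxy f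
      rw [h2] at hf
      exact lt_irrefl _ hf
    have hemb := hecont.isClosedEmbedding heinj
    rw [hemb.isEmbedding.continuous_iff]
    refine continuous_pi fun ℓ => ?_
    have : (fun μ : ProbabilityMeasure ↥S => (e ∘ b) μ ℓ) =
        fun μ : ProbabilityMeasure ↥S =>
          ∫ φ : ↥S, (BoundedContinuousFunction.mkOfCompact
            ⟨fun φ : ↥S => ℓ (φ : V), ℓ.continuous.comp continuous_subtype_val⟩) φ
              ∂(μ : Measure ↥S) := by
      funext μ
      exact hb μ ℓ
    exact this ▸ ProbabilityMeasure.continuous_integral_boundedContinuousFunction _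
  · -- surjectivity
    intro x
    refine ⟨⟨Measure.dirac x, inferInstance⟩, ?_⟩
    refine (huniq _ x ?_).symm
    intro ℓ
    have hsm : StronglyMeasurable fun φ : ↥S => ℓ (φ : V) :=
      (ℓ.continuous.comp continuous_subtype_val).stronglyMeasurable
    simp only [ProbabilityMeasure.coe_mk]
    rw [integral_dirac' _ x hsm]
end

section
/- Let V be a Hausdorff locally convex real topological vector space, S ⊆ V a nonempty compact convex subset, and f : S → ℝ a continuous function. Define E(ω) = inf_{μ ∈ M_ω(S)} ∫_S f dμ. Then E : S → ℝ is a convex function: E(λ₁ω₁ + λ₂ω₂) ≤ λ₁E(ω₁) + λ₂E(ω₂) for all ω₁, ω₂ ∈ S and λ₁, λ₂ ≥ 0 with λ₁ + λ₂ = 1. -/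
open MeasureTheory
open scoped ENNReal NNReal

/-- The entanglement-of-formation-type functional determined by a function `f` on `S`:
`E(ω) = inf_{μ ∈ M_ω(S)} ∫_S f dμ`, the infimum being taken over all Borel probability
measures on `S` with barycenter `ω`. -/
noncomputable def EoF {V : Type*} [AddCommGroup V] [Module ℝ V] [TopologicalSpace V]
    [MeasurableSpace V] {S : Set V} (f : ↥S → ℝ) (ω : V) : ℝ :=
  ⨅ μ : {μ : ProbabilityMeasure ↥S // HasBarycenter μ ω},
    ∫ φ : ↥S, f φ ∂(μ.1 : Measure ↥S)

/-- For a continuous `f : S → ℝ`, the functional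
`E(ω) = inf_{μ ∈ M_ω(S)} ∫_S f dμ` is convex on `S`. -/
theorem EoF_convexOn
    {V : Type*} [AddCommGroup V] [Module ℝ V] [TopologicalSpace V]
    [IsTopologicalAddGroup V] [ContinuousSMul ℝ V] [T2Space V] [LocallyConvexSpace ℝ V]
    [MeasurableSpace V] [BorelSpace V]
    (S : Set V) (hSne : S.Nonempty) (hScpt : IsCompact S) (hSconv : Convex ℝ S)
    (f : ↥S → ℝ) (hf : Continuous f) :
    ∀ ω₁ ∈ S, ∀ ω₂ ∈ S, ∀ l₁ l₂ : ℝ, 0 ≤ l₁ → 0 ≤ l₂ → l₁ + l₂ = 1 →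
      EoF f (l₁ • ω₁ + l₂ • ω₂) ≤ l₁ * EoF f ω₁ + l₂ * EoF f ω₂ := by
  intro ω₁ hω₁ ω₂ hω₂ l₁ l₂ hl₁ hl₂ hl
  haveI : CompactSpace ↥S := isCompact_iff_compactSpace.mp hScpt
  haveI : Nonempty ↥S := hSne.to_subtype
  -- integrability of continuous functions on S
  have hint : ∀ (g : ↥S → ℝ), Continuous g → ∀ (ν : Measure ↥S), IsFiniteMeasure ν →
      Integrable g ν := by
    intro g hg ν hν
    exact hg.integrable_of_hasCompactSupport (HasCompactSupport.of_compactSpace g)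
  -- f is bounded below on S
  obtain ⟨z, -, hz⟩ := isCompact_univ.exists_isMinOn Set.univ_nonempty hf.continuousOn
  have hzle : ∀ x : ↥S, f z ≤ f x := fun x => hz (Set.mem_univ x)
  -- lower bound for integrals of f against probability measures
  have hlow : ∀ μ : ProbabilityMeasure ↥S, f z ≤ ∫ φ, f φ ∂(μ : Measure ↥S) := by
    intro μ
    have h1 : ∫ _ : ↥S, f z ∂(μ : Measure ↥S) = f z := by
      simp [integral_const]
    calc f z = ∫ _ : ↥S, f z ∂(μ : Measure ↥S) := h1.symm
      _ ≤ ∫ φ, f φ ∂(μ : Measure ↥S) :=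
        integral_mono (integrable_const _) (hint f hf _ inferInstance) hzle
  -- bddBelow of the relevant ranges
  have hbdd : ∀ ω : V, BddBelow (Set.range fun μ : {μ : ProbabilityMeasure ↥S //
      HasBarycenter μ ω} => ∫ φ : ↥S, f φ ∂(μ.1 : Measure ↥S)) := by
    intro ω
    refine ⟨f z, ?_⟩
    rintro x ⟨μ, rfl⟩
    exact hlow μ.1
  -- dirac measures give nonempty index types
  have hdirac : ∀ ω : V, ∀ hω : ω ∈ S,
      Nonempty {μ : ProbabilityMeasure ↥S // HasBarycenter μ ω} := by
    intro ω hω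
    refine ⟨⟨⟨Measure.dirac ⟨ω, hω⟩, inferInstance⟩, fun ℓ => ?_⟩⟩
    exact (integral_dirac' (fun φ : ↥S => ℓ (φ : V)) ⟨ω, hω⟩
      ((ℓ.continuous.comp continuous_subtype_val).stronglyMeasurable)).symm
  haveI := hdirac ω₁ hω₁
  haveI := hdirac ω₂ hω₂
  -- main estimate
  rw [show l₁ * EoF f ω₁ = ⨅ μ : {μ : ProbabilityMeasure ↥S // HasBarycenter μ ω₁},
      l₁ * ∫ φ : ↥S, f φ ∂(μ.1 : Measure ↥S) from Real.mul_iInf_of_nonneg hl₁ _,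
    show l₂ * EoF f ω₂ = ⨅ μ : {μ : ProbabilityMeasure ↥S // HasBarycenter μ ω₂},
      l₂ * ∫ φ : ↥S, f φ ∂(μ.1 : Measure ↥S) from Real.mul_iInf_of_nonneg hl₂ _]
  refine le_ciInf_add_ciInf fun μ₁ μ₂ => ?_
  -- the mixture measure
  set ν : Measure ↥S := ENNReal.ofReal l₁ • (μ₁.1 : Measure ↥S)
      + ENNReal.ofReal l₂ • (μ₂.1 : Measure ↥S) with hν
  have hνprob : IsProbabilityMeasure ν := by
    constructor
    simp [hν, Measure.add_apply, Measure.smul_apply, smul_eq_mul, measure_univ,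
      ← ENNReal.ofReal_add hl₁ hl₂, hl]
  have hdecomp : ∀ g : ↥S → ℝ, Continuous g →
      ∫ φ, g φ ∂ν = l₁ * ∫ φ, g φ ∂(μ₁.1 : Measure ↥S) + l₂ * ∫ φ, g φ ∂(μ₂.1 : Measure ↥S) := by
    intro g hg
    rw [hν, integral_add_measure
        ((hint g hg _ inferInstance).smul_measure ENNReal.ofReal_ne_top)
        ((hint g hg _ inferInstance).smul_measure ENNReal.ofReal_ne_top),
      integral_smul_measure, integral_smul_measure,
      ENNReal.toReal_ofReal hl₁, ENNReal.toReal_ofReal hl₂, smul_eq_mul, smul_eq_mul]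
  have hbary : HasBarycenter (⟨ν, hνprob⟩ : ProbabilityMeasure ↥S) (l₁ • ω₁ + l₂ • ω₂) := by
    intro ℓ
    show ℓ (l₁ • ω₁ + l₂ • ω₂) = ∫ φ : ↥S, ℓ (φ : V) ∂ν
    rw [hdecomp (fun φ : ↥S => ℓ (φ : V)) (ℓ.continuous.comp continuous_subtype_val)]
    rw [map_add, ℓ.map_smul, ℓ.map_smul, smul_eq_mul, smul_eq_mul, μ₁.2 ℓ, μ₂.2 ℓ]
  calc EoF f (l₁ • ω₁ + l₂ • ω₂)
      ≤ ∫ φ : ↥S, f φ ∂((⟨⟨ν, hνprob⟩, hbary⟩ : {μ : ProbabilityMeasure ↥S //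
          HasBarycenter μ (l₁ • ω₁ + l₂ • ω₂)}).1 : Measure ↥S) :=
        ciInf_le (hbdd _) _
    _ = l₁ * ∫ φ : ↥S, f φ ∂(μ₁.1 : Measure ↥S) + l₂ * ∫ φ : ↥S, f φ ∂(μ₂.1 : Measure ↥S) :=
        hdecomp f hf
end

section
/- Let V be a Hausdorff locally convex real topological vector space, S ⊆ V a nonempty compact convex subset, and f : S → ℝ a continuous function. Then the function E(ω) = inf_{μ ∈ M_ω(S)} ∫_S f dμ is lower semicontinuous on S: if a net ω_α → ω in S and E(ω_α) ≤ s for all α, then E(ω) ≤ s. -/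
open MeasureTheory
open scoped ENNReal NNReal

set_option linter.unusedSectionVars false
set_option linter.unusedVariables false
set_option maxHeartbeats 1000000
section AuxEoF


section Sums

private lemma sum_clamp_eq (n : ℕ) (s : ℝ) (h0 : 0 ≤ s) (hn : s ≤ n) :
    ∑ i ∈ Finset.range n, min 1 (max 0 (s - (i : ℝ))) = s := by
  induction n with
  | zero =>
      simp only [Finset.range_zero, Finset.sum_empty]
      have : s = 0 := le_antisymm (by exact_mod_cast hn) h0
      linarith
  | succ m ih =>
      rw [Finset.sum_range_succ]
      rcases le_or_gt s m with h | h
      · rw [ih h]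
        have : s - (m : ℝ) ≤ 0 := by linarith
        have hmax : max 0 (s - (m : ℝ)) = 0 := max_eq_left this
        rw [hmax]
        have : min (1:ℝ) 0 = 0 := min_eq_right zero_le_one
        rw [this, add_zero]
      · have hterm : ∀ i ∈ Finset.range m, min 1 (max 0 (s - (i : ℝ))) = 1 := by
          intro i hi
          have hi' : (i : ℝ) ≤ (m : ℝ) - 1 := by
            have : (i : ℕ) < m := Finset.mem_range.mp hi
            have : (i : ℝ) + 1 ≤ (m : ℝ) := by exact_mod_cast this
            linarith
          have h1 : (1:ℝ) ≤ s - i := by linarith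
          have hmax : max 0 (s - (i : ℝ)) = s - i := max_eq_right (by linarith)
          rw [hmax]
          exact min_eq_left h1
        rw [Finset.sum_congr rfl hterm, Finset.sum_const, Finset.card_range]
        have hs1 : s - (m : ℝ) ≤ 1 := by
          have : s ≤ (m : ℝ) + 1 := by exact_mod_cast hn
          linarith
        have hmax : max 0 (s - (m : ℝ)) = s - m := max_eq_right (by linarith)
        rw [hmax, min_eq_right hs1]
        simp only [nsmul_eq_mul, mul_one]
        ring

private lemma sum_indicator_ge (m : ℕ) (s : ℝ) (h : s ≤ (m : ℝ) + 1) :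
    s - 1 ≤ ∑ i ∈ Finset.range m, (if ((i : ℝ) + 1) ≤ s then (1:ℝ) else 0) := by
  induction m with
  | zero =>
      simp only [Finset.range_zero, Finset.sum_empty]
      have h' : s ≤ 1 := by simpa using h
      linarith
  | succ m ih =>
      rw [Finset.sum_range_succ]
      rcases le_or_gt s ((m : ℝ) + 1) with h' | h'
      · have := ih h'
        have hnn : (0:ℝ) ≤ if ((m : ℝ) + 1) ≤ s then (1:ℝ) else 0 := by
          split_ifs <;> norm_num
        linarith
      · have hterm : ∀ i ∈ Finset.range m, (if ((i : ℝ) + 1) ≤ s then (1:ℝ) else 0) = 1 := by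
          intro i hi
          have : (i : ℕ) < m := Finset.mem_range.mp hi
          have : (i : ℝ) + 1 ≤ (m : ℝ) := by exact_mod_cast this
          exact if_pos (by linarith)
        rw [Finset.sum_congr rfl hterm, Finset.sum_const, Finset.card_range]
        rw [if_pos (by linarith)]
        have : s ≤ (m : ℝ) + 1 + 1 := by exact_mod_cast h
        simp only [nsmul_eq_mul, mul_one]
        linarith

end Sums

section Riesz

variable {X : Type*} [TopologicalSpace X] [CompactSpace X] [T2Space X]

/-- The class of test functions for the Riesz content of `K`. -/
def rieszSet (K : Set X) : Set C(X, ℝ) :=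
  {g | (∀ x, 0 ≤ g x) ∧ ∀ x ∈ K, 1 ≤ g x}

variable (Λ : C(X, ℝ) →ₗ[ℝ] ℝ)

/-- The Riesz content of a set. -/
noncomputable def rieszFn (K : Set X) : ℝ := sInf (Λ '' rieszSet K)

variable {Λ}

lemma one_mem_rieszSet (K : Set X) : (1 : C(X, ℝ)) ∈ rieszSet K :=
  ⟨fun _ => zero_le_one, fun _ _ => le_refl 1⟩

lemma rieszSet_nonempty (K : Set X) : (Λ '' rieszSet K).Nonempty :=
  ⟨Λ 1, 1, one_mem_rieszSet K, rfl⟩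

variable (hpos : ∀ g : C(X, ℝ), (∀ x, 0 ≤ g x) → 0 ≤ Λ g)
include hpos

lemma rieszSet_bddBelow (K : Set X) : 0 ∈ lowerBounds (Λ '' rieszSet K) := by
  rintro r ⟨g, hg, rfl⟩
  exact hpos g hg.1

lemma rieszFn_nonneg (K : Set X) : 0 ≤ rieszFn Λ K :=
  le_csInf (rieszSet_nonempty K) (rieszSet_bddBelow hpos K)

lemma rieszFn_le {K : Set X} {g : C(X, ℝ)} (hg : g ∈ rieszSet K) : rieszFn Λ K ≤ Λ g :=
  csInf_le ⟨0, rieszSet_bddBelow hpos K⟩ ⟨g, hg, rfl⟩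

omit hpos in
lemma le_rieszFn {K : Set X} {c : ℝ} (h : ∀ g ∈ rieszSet K, c ≤ Λ g) : c ≤ rieszFn Λ K :=
  le_csInf (rieszSet_nonempty K) (by rintro r ⟨g, hg, rfl⟩; exact h g hg)

lemma rieszFn_mono {K₁ K₂ : Set X} (h : K₁ ⊆ K₂) : rieszFn Λ K₁ ≤ rieszFn Λ K₂ :=
  le_rieszFn fun g hg => rieszFn_le hpos ⟨hg.1, fun x hx => hg.2 x (h hx)⟩

lemma rieszFn_sup_le (K₁ K₂ : Set X) :
    rieszFn Λ (K₁ ∪ K₂) ≤ rieszFn Λ K₁ + rieszFn Λ K₂ := by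
  have key : ∀ g₁ ∈ rieszSet K₁, ∀ g₂ ∈ rieszSet (X := X) K₂,
      rieszFn Λ (K₁ ∪ K₂) ≤ Λ g₁ + Λ g₂ := by
    intro g₁ hg₁ g₂ hg₂
    have : g₁ + g₂ ∈ rieszSet (K₁ ∪ K₂) := by
      refine ⟨fun x => add_nonneg (hg₁.1 x) (hg₂.1 x), fun x hx => ?_⟩
      rcases hx with hx | hx
      · simpa using le_add_of_le_of_nonneg (hg₁.2 x hx) (hg₂.1 x)
      · simpa using le_add_of_nonneg_of_le (hg₁.1 x) (hg₂.2 x hx)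
    simpa using rieszFn_le hpos this
  have step1 : ∀ g₁ ∈ rieszSet (X := X) K₁,
      rieszFn Λ (K₁ ∪ K₂) - rieszFn Λ K₂ ≤ Λ g₁ := by
    intro g₁ hg₁
    have : rieszFn Λ (K₁ ∪ K₂) - Λ g₁ ≤ rieszFn Λ K₂ :=
      le_rieszFn fun g₂ hg₂ => by linarith [key g₁ hg₁ g₂ hg₂]
    linarith
  have : rieszFn Λ (K₁ ∪ K₂) - rieszFn Λ K₂ ≤ rieszFn Λ K₁ := le_rieszFn step1
  linarith

lemma rieszFn_sup_disjoint {K₁ K₂ : Set X} (hK₁ : IsClosed K₁) (hK₂ : IsClosed K₂)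
    (hd : Disjoint K₁ K₂) :
    rieszFn Λ K₁ + rieszFn Λ K₂ ≤ rieszFn Λ (K₁ ∪ K₂) := by
  obtain ⟨u, hu0, hu1, hu01⟩ := exists_continuous_zero_one_of_isClosed hK₁ hK₂ hd
  refine le_rieszFn fun g hg => ?_
  set h : C(X, ℝ) := 1 - u with hh
  have hg₁ : g * h ∈ rieszSet K₁ := by
    constructor
    · intro x
      have := (hu01 x).1
      have := (hu01 x).2
      have := hg.1 x
      simp only [hh, ContinuousMap.sub_apply, ContinuousMap.one_apply, ContinuousMap.mul_apply]
      nlinarith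
    · intro x hx
      have h0 : u x = 0 := hu0 hx
      have := hg.2 x (Or.inl hx)
      simp only [hh, ContinuousMap.sub_apply, ContinuousMap.one_apply, ContinuousMap.mul_apply, h0]
      linarith
  have hg₂ : g * (1 - h) ∈ rieszSet K₂ := by
    constructor
    · intro x
      have := (hu01 x).1
      have := hg.1 x
      simp only [hh, ContinuousMap.sub_apply, ContinuousMap.one_apply, ContinuousMap.mul_apply]
      nlinarith
    · intro x hx
      have h1 : u x = 1 := hu1 hx
      have := hg.2 x (Or.inr hx)
      simp only [hh, ContinuousMap.sub_apply, ContinuousMap.one_apply, ContinuousMap.mul_apply, h1]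
      linarith
  have hsum : g * h + g * (1 - h) = g := by ring
  calc rieszFn Λ K₁ + rieszFn Λ K₂ ≤ Λ (g * h) + Λ (g * (1 - h)) :=
        add_le_add (rieszFn_le hpos hg₁) (rieszFn_le hpos hg₂)
    _ = Λ g := by rw [← map_add, hsum]

/-- The Riesz content associated to a positive normalized linear functional. -/
noncomputable def rieszCont : Content X where
  toFun K := Real.toNNReal (rieszFn Λ K)
  mono' K₁ K₂ h := Real.toNNReal_le_toNNReal (rieszFn_mono hpos h)
  sup_disjoint' K₁ K₂ hd h₁ h₂ := by
    have hle := rieszFn_sup_le hpos (K₁ : Set X) K₂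
    have hge := rieszFn_sup_disjoint hpos h₁ h₂ hd
    have heq : rieszFn Λ ((K₁ : Set X) ∪ K₂) = rieszFn Λ K₁ + rieszFn Λ K₂ :=
      le_antisymm hle hge
    show Real.toNNReal (rieszFn Λ ((K₁ ⊔ K₂ : TopologicalSpace.Compacts X) : Set X)) = _
    have hcoe : ((K₁ ⊔ K₂ : TopologicalSpace.Compacts X) : Set X) = (K₁ : Set X) ∪ K₂ := rfl
    rw [hcoe, heq, Real.toNNReal_add (rieszFn_nonneg hpos _) (rieszFn_nonneg hpos _)]
  sup_le' K₁ K₂ := by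
    have hle := rieszFn_sup_le hpos (K₁ : Set X) K₂
    show Real.toNNReal (rieszFn Λ ((K₁ ⊔ K₂ : TopologicalSpace.Compacts X) : Set X)) ≤ _
    have hcoe : ((K₁ ⊔ K₂ : TopologicalSpace.Compacts X) : Set X) = (K₁ : Set X) ∪ K₂ := rfl
    rw [hcoe]
    calc Real.toNNReal (rieszFn Λ ((K₁ : Set X) ∪ K₂))
        ≤ Real.toNNReal (rieszFn Λ K₁ + rieszFn Λ K₂) := Real.toNNReal_le_toNNReal hle
      _ ≤ _ := by
          rw [Real.toNNReal_add (rieszFn_nonneg hpos _) (rieszFn_nonneg hpos _)]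


section Meas

variable [MeasurableSpace X] [BorelSpace X]

omit hpos in
/-- The Riesz measure. -/
noncomputable def rieszMeas (hpos : ∀ g : C(X, ℝ), (∀ x, 0 ≤ g x) → 0 ≤ Λ g) : Measure X :=
  (rieszCont hpos).measure

lemma rieszCont_apply (K : TopologicalSpace.Compacts X) :
    (rieszCont hpos) K = (ENNReal.ofReal (rieszFn Λ K) : ℝ≥0∞) := rfl

lemma rieszMeas_univ (hone : Λ 1 = 1) : rieszMeas hpos Set.univ = 1 := by
  have h1 : rieszMeas hpos Set.univ = (rieszCont hpos).outerMeasure Set.univ :=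
    Content.measure_apply _ MeasurableSet.univ
  have h2 : (rieszCont hpos).outerMeasure Set.univ
      = (rieszCont hpos).innerContent ⟨Set.univ, isOpen_univ⟩ :=
    Content.outerMeasure_of_isOpen _ _ isOpen_univ
  have h3 : (rieszCont hpos).innerContent ⟨Set.univ, isOpen_univ⟩
      = (rieszCont hpos) ⟨Set.univ, isCompact_univ⟩ :=
    Content.innerContent_of_isCompact _ isCompact_univ isOpen_univ
  have h4 : rieszFn Λ (Set.univ : Set X) = 1 := by
    refine le_antisymm ?_ ?_
    · have := rieszFn_le hpos (one_mem_rieszSet (Set.univ : Set X))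
      simpa [hone] using this
    · refine le_rieszFn fun g hg => ?_
      have : 0 ≤ Λ (g - 1) := hpos _ fun x => by
        have := hg.2 x (Set.mem_univ x)
        simp only [ContinuousMap.sub_apply, ContinuousMap.one_apply]
        linarith
      have := map_sub Λ g 1
      rw [hone] at *
      linarith [this ▸ ‹0 ≤ Λ (g - 1)›]
  rw [h1, h2, h3]
  show ENNReal.ofReal (rieszFn Λ (Set.univ : Set X)) = 1
  rw [h4]
  simp

lemma rieszMeas_compact_le {K : Set X} (hK : IsCompact K) {g : C(X, ℝ)}
    (hg : g ∈ rieszSet K) :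
    rieszMeas hpos K ≤ ENNReal.ofReal (Λ g) := by
  have hΛg : 0 ≤ Λ g := hpos g hg.1
  -- first: for every `α ∈ (0,1)`, `μ K ≤ ofReal (α⁻¹ * Λ g)`
  have key : ∀ α : ℝ, 0 < α → α < 1 →
      rieszMeas hpos K ≤ ENNReal.ofReal (α⁻¹ * Λ g) := by
    intro α hα0 hα1
    set U : Set X := {x | α < g x} with hU
    have hUopen : IsOpen U := isOpen_lt continuous_const g.continuous
    have hKU : K ⊆ U := fun x hx => lt_of_lt_of_le hα1 (hg.2 x hx)
    have h1 : rieszMeas hpos K ≤ (rieszCont hpos).outerMeasure U := by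
      rw [rieszMeas, Content.measure_apply _ (hK.isClosed.measurableSet)]
      exact measure_mono hKU
    have h2 : (rieszCont hpos).outerMeasure U
        = (rieszCont hpos).innerContent ⟨U, hUopen⟩ :=
      Content.outerMeasure_of_isOpen _ _ hUopen
    have h3 : (rieszCont hpos).innerContent ⟨U, hUopen⟩
        ≤ ENNReal.ofReal (α⁻¹ * Λ g) := by
      refine iSup₂_le fun K' hK' => ?_
      have hmem : α⁻¹ • g ∈ rieszSet (K' : Set X) := by
        constructor
        · intro x
          simp only [ContinuousMap.smul_apply, smul_eq_mul]
          exact mul_nonneg (inv_nonneg.mpr hα0.le) (hg.1 x)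
        · intro x hx
          have : α < g x := hK' hx
          have hinv : (1:ℝ) ≤ α⁻¹ * g x := by
            have h1 := mul_le_mul_of_nonneg_left this.le (le_of_lt (inv_pos.mpr hα0))
            rw [inv_mul_cancel₀ (ne_of_gt hα0)] at h1
            exact h1
          simpa [ContinuousMap.smul_apply] using hinv
      have := rieszFn_le hpos hmem
      rw [_root_.map_smul, smul_eq_mul] at this
      calc ((rieszCont hpos) K' : ℝ≥0∞) = ENNReal.ofReal (rieszFn Λ K') :=
            rieszCont_apply hpos K'
        _ ≤ ENNReal.ofReal (α⁻¹ * Λ g) := ENNReal.ofReal_le_ofReal this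
    exact h1.trans (h2.le.trans h3)
  -- now pass to the limit `α → 1`
  have hfin : rieszMeas hpos K ≠ ∞ := by
    have := key (1/2) (by norm_num) (by norm_num)
    exact ne_top_of_le_ne_top ENNReal.ofReal_ne_top this
  rw [ENNReal.le_ofReal_iff_toReal_le hfin hΛg]
  set r : ℝ := (rieszMeas hpos K).toReal with hr
  have hbound : ∀ α : ℝ, 0 < α → α < 1 → α * r ≤ Λ g := by
    intro α hα0 hα1
    have := key α hα0 hα1
    have h2 := ENNReal.toReal_mono ENNReal.ofReal_ne_top this
    rw [ENNReal.toReal_ofReal (by positivity)] at h2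
    calc α * r ≤ α * (α⁻¹ * Λ g) := by
          exact mul_le_mul_of_nonneg_left h2 hα0.le
      _ = Λ g := by field_simp
  have htend : Filter.Tendsto (fun α : ℝ => α * r) (nhdsWithin 1 (Set.Ioo 0 1)) (nhds r) := by
    have : Filter.Tendsto (fun α : ℝ => α * r) (nhds 1) (nhds (1 * r)) :=
      (continuous_mul_right r).continuousAt
    rw [one_mul] at this
    exact this.mono_left nhdsWithin_le_nhds
  have hne : (nhdsWithin (1:ℝ) (Set.Ioo 0 1)).NeBot := by
    apply mem_closure_iff_nhdsWithin_neBot.mp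
    rw [closure_Ioo (by norm_num : (0:ℝ) ≠ 1)]
    exact ⟨by norm_num, le_refl 1⟩
  refine le_of_tendsto htend ?_
  filter_upwards [self_mem_nhdsWithin] with α hα
  exact hbound α hα.1 hα.2

lemma rieszMeas_integral_le (hone : Λ 1 = 1) {g : C(X, ℝ)}
    (hg0 : ∀ x, 0 ≤ g x) (hg1 : ∀ x, g x ≤ 1) :
    ∫ x, g x ∂(rieszMeas hpos) ≤ Λ g := by
  set μ : Measure X := rieszMeas hpos with hμ
  haveI : IsProbabilityMeasure μ := ⟨rieszMeas_univ hpos hone⟩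
  have hint : MeasureTheory.Integrable (fun x => g x) μ := by
    apply Continuous.integrable_of_hasCompactSupport g.continuous
    exact IsCompact.of_isClosed_subset isCompact_univ (isClosed_tsupport _) (Set.subset_univ _)
  -- prove `∫ g ≤ Λ g + 1/n` for every positive `n`
  have key : ∀ n : ℕ, 0 < n → ∫ x, g x ∂μ ≤ Λ g + 1 / (n : ℝ) := by
    intro n hn
    have hn' : (0:ℝ) < n := by exact_mod_cast hn
    -- the slice functions
    set gi : ℕ → C(X, ℝ) := fun i =>
      ⟨fun x => min 1 (max 0 ((n : ℝ) * g x - (i : ℝ))),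
        continuous_const.min (continuous_const.max
          ((continuous_const.mul g.continuous).sub continuous_const))⟩ with hgi
    -- the slice compact sets
    set Ki : ℕ → Set X := fun i => {x | ((i : ℝ) + 1) / (n : ℝ) ≤ g x} with hKi
    have hKiClosed : ∀ i, IsClosed (Ki i) := fun i =>
      isClosed_le continuous_const g.continuous
    have hKiCompact : ∀ i, IsCompact (Ki i) := fun i => (hKiClosed i).isCompact
    -- each gi is in the Riesz set of Ki
    have hgiMem : ∀ i, gi i ∈ rieszSet (Ki i) := by
      intro i
      constructor
      · intro x
        exact le_min zero_le_one (le_max_left 0 _)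
      · intro x hx
        have hx' : ((i : ℝ) + 1) / (n : ℝ) ≤ g x := hx
        have h1 : (i : ℝ) + 1 ≤ (n : ℝ) * g x := by
          rw [div_le_iff₀ hn'] at hx'
          linarith [hx']
        have h2 : (1:ℝ) ≤ (n : ℝ) * g x - i := by linarith
        show (1:ℝ) ≤ min 1 (max 0 ((n : ℝ) * g x - (i : ℝ)))
        exact le_min le_rfl (le_trans h2 (le_max_right 0 _))
    -- sum of slices equals n • g
    have hsum : ∑ i ∈ Finset.range n, gi i = (n : ℝ) • g := by
      ext x
      have : (∑ i ∈ Finset.range n, gi i) x = ∑ i ∈ Finset.range n, gi i x := by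
        simp
      rw [this]
      have h0 : 0 ≤ (n : ℝ) * g x := mul_nonneg hn'.le (hg0 x)
      have h1 : (n : ℝ) * g x ≤ (n : ℝ) := by
        nlinarith [hg1 x]
      simpa [hgi] using sum_clamp_eq n ((n : ℝ) * g x) h0 h1
    -- measure of Ki bounded by Λ (gi i)
    have hμKi : ∀ i, (μ (Ki i)).toReal ≤ Λ (gi i) := by
      intro i
      have := rieszMeas_compact_le hpos (hKiCompact i) (hgiMem i)
      exact ENNReal.toReal_le_of_le_ofReal (hpos _ (hgiMem i).1) this
    -- pointwise comparison with indicators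
    have hpoint : ∀ x, g x ≤
        (1 + ∑ i ∈ Finset.range n, Set.indicator (Ki i) (fun _ => (1:ℝ)) x) / (n : ℝ) := by
      intro x
      rw [le_div_iff₀ hn']
      have hs : (n : ℝ) * g x ≤ (n : ℝ) + 1 := by nlinarith [hg1 x]
      have := sum_indicator_ge n ((n : ℝ) * g x) hs
      have hterm : ∀ i ∈ Finset.range n,
          (if ((i : ℝ) + 1) ≤ (n : ℝ) * g x then (1:ℝ) else 0)
            = Set.indicator (Ki i) (fun _ => (1:ℝ)) x := by
        intro i _
        by_cases hx : x ∈ Ki i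
        · have hx' : ((i : ℝ) + 1) / (n : ℝ) ≤ g x := hx
          rw [div_le_iff₀ hn'] at hx'
          rw [if_pos (by linarith), Set.indicator_of_mem hx]
        · have hx' : ¬ (((i : ℝ) + 1) / (n : ℝ) ≤ g x) := hx
          rw [div_le_iff₀ hn'] at hx'
          rw [if_neg (by intro hc; exact hx' (by linarith)), Set.indicator_of_notMem hx]
      rw [Finset.sum_congr rfl hterm] at this
      linarith
    -- integrate the pointwise bound
    have hindInt : ∀ i : ℕ, MeasureTheory.Integrable
        (fun x => Set.indicator (Ki i) (fun _ => (1:ℝ)) x) μ := by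
      intro i
      exact (MeasureTheory.integrable_const (1:ℝ)).indicator (hKiClosed i).measurableSet
    have hRHSInt : MeasureTheory.Integrable
        (fun x => (1 + ∑ i ∈ Finset.range n, Set.indicator (Ki i) (fun _ => (1:ℝ)) x) / (n : ℝ))
        μ := by
      apply MeasureTheory.Integrable.div_const
      exact (MeasureTheory.integrable_const (1:ℝ)).add
        (MeasureTheory.integrable_finset_sum _ fun i _ => hindInt i)
    have hintle : ∫ x, g x ∂μ ≤
        ∫ x, (1 + ∑ i ∈ Finset.range n, Set.indicator (Ki i) (fun _ => (1:ℝ)) x) / (n : ℝ) ∂μ :=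
      MeasureTheory.integral_mono hint hRHSInt hpoint
    have hRHSval : ∫ x, (1 + ∑ i ∈ Finset.range n,
          Set.indicator (Ki i) (fun _ => (1:ℝ)) x) / (n : ℝ) ∂μ
        = (1 + ∑ i ∈ Finset.range n, (μ (Ki i)).toReal) / (n : ℝ) := by
      rw [MeasureTheory.integral_div]
      congr 1
      rw [MeasureTheory.integral_add (MeasureTheory.integrable_const _)
        (MeasureTheory.integrable_finset_sum _ fun i _ => hindInt i)]
      congr 1
      · simp
      · rw [MeasureTheory.integral_finset_sum _ fun i _ => hindInt i]
        refine Finset.sum_congr rfl fun i _ => ?_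
        rw [MeasureTheory.integral_indicator_const (1:ℝ) (hKiClosed i).measurableSet]
        simp
        rfl
    -- bound the sum of measures by Λ applied to the sum of slices
    have hsumBound : ∑ i ∈ Finset.range n, (μ (Ki i)).toReal ≤ (n : ℝ) * Λ g := by
      calc ∑ i ∈ Finset.range n, (μ (Ki i)).toReal
          ≤ ∑ i ∈ Finset.range n, Λ (gi i) := Finset.sum_le_sum fun i _ => hμKi i
        _ = Λ (∑ i ∈ Finset.range n, gi i) := (map_sum Λ _ _).symm
        _ = Λ ((n : ℝ) • g) := by rw [hsum]
        _ = (n : ℝ) * Λ g := by rw [_root_.map_smul, smul_eq_mul]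
    calc ∫ x, g x ∂μ ≤ (1 + ∑ i ∈ Finset.range n, (μ (Ki i)).toReal) / (n : ℝ) := by
          rw [← hRHSval]; exact hintle
      _ ≤ (1 + (n : ℝ) * Λ g) / (n : ℝ) := by
          have h1n : (1:ℝ) + ∑ i ∈ Finset.range n, ((rieszMeas hpos) (Ki i)).toReal
              ≤ 1 + (n : ℝ) * Λ g := by linarith [hsumBound]
          gcongr
      _ = Λ g + 1 / (n : ℝ) := by field_simp; ring
  -- pass to the limit in n
  have htend : Filter.Tendsto (fun n : ℕ => Λ g + 1 / (n : ℝ)) Filter.atTop (nhds (Λ g)) := by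
    have := tendsto_one_div_atTop_nhds_zero_nat (𝕜 := ℝ)
    have h2 := Filter.Tendsto.const_add (Λ g) this
    simpa using h2
  refine ge_of_tendsto htend ?_
  filter_upwards [Filter.eventually_gt_atTop 0] with n hn
  exact key n hn

omit hpos in
lemma continuousMap_integrable (g : C(X, ℝ)) (μ : Measure X) [IsFiniteMeasure μ] :
    MeasureTheory.Integrable (fun x => g x) μ := by
  apply Continuous.integrable_of_hasCompactSupport g.continuous
  exact IsCompact.of_isClosed_subset isCompact_univ (isClosed_tsupport _) (Set.subset_univ _)

lemma rieszMeas_integral_eq (hone : Λ 1 = 1) (g : C(X, ℝ)) :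
    Λ g = ∫ x, g x ∂(rieszMeas hpos) := by
  set μ : Measure X := rieszMeas hpos with hμ
  haveI : IsProbabilityMeasure μ := ⟨rieszMeas_univ hpos hone⟩
  -- the two-sided bound for functions with values in `[0,1]`
  have both : ∀ h : C(X, ℝ), (∀ x, 0 ≤ h x) → (∀ x, h x ≤ 1) →
      Λ h = ∫ x, h x ∂μ := by
    intro h h0 h1
    have hle := rieszMeas_integral_le hpos hone h0 h1
    have h0' : ∀ x, 0 ≤ (1 - h) x := fun x => by
      simp only [ContinuousMap.sub_apply, ContinuousMap.one_apply]; linarith [h1 x]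
    have h1' : ∀ x, (1 - h) x ≤ 1 := fun x => by
      simp only [ContinuousMap.sub_apply, ContinuousMap.one_apply]; linarith [h0 x]
    have hle' := rieszMeas_integral_le hpos hone h0' h1'
    have hint : MeasureTheory.Integrable (fun x => h x) μ := continuousMap_integrable h μ
    have hintval : ∫ x, (1 - h) x ∂μ = 1 - ∫ x, h x ∂μ := by
      have : ∀ x, (1 - h) x = 1 - h x := fun x => by
        simp [ContinuousMap.sub_apply]
      rw [show (fun x => (1 - h) x) = (fun x => 1 - h x) from funext this]
      rw [MeasureTheory.integral_sub (MeasureTheory.integrable_const 1) hint]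
      simp
    have hΛval : Λ (1 - h) = 1 - Λ h := by rw [map_sub, hone]
    rw [hintval, hΛval] at hle'
    linarith
  -- reduce the general case by an affine renormalization
  set c : ℝ := ‖g‖ with hc
  have hcnn : 0 ≤ c := norm_nonneg g
  set d : ℝ := 2 * c + 1 with hd
  have hdpos : (0:ℝ) < d := by positivity
  set g' : C(X, ℝ) := d⁻¹ • (g + c • (1 : C(X, ℝ))) with hg'
  have hg'apply : ∀ x, g' x = d⁻¹ * (g x + c) := by
    intro x
    simp [hg', ContinuousMap.smul_apply, ContinuousMap.add_apply, smul_eq_mul]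
    ring
  have hbound : ∀ x, |g x| ≤ c := fun x => by
    simpa using g.norm_coe_le_norm x
  have h0 : ∀ x, 0 ≤ g' x := by
    intro x
    rw [hg'apply x]
    have := abs_le.mp (hbound x)
    have : 0 ≤ g x + c := by linarith [this.1]
    positivity
  have h1 : ∀ x, g' x ≤ 1 := by
    intro x
    rw [hg'apply x]
    have h2 := (abs_le.mp (hbound x)).2
    rw [inv_mul_le_iff₀ hdpos]
    linarith
  have heq := both g' h0 h1
  have hΛg' : Λ g' = d⁻¹ * (Λ g + c) := by
    rw [hg', _root_.map_smul, map_add, _root_.map_smul, hone, smul_eq_mul, smul_eq_mul, mul_one]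
  have hintg : MeasureTheory.Integrable (fun x => g x) μ := continuousMap_integrable g μ
  have hIg' : ∫ x, g' x ∂μ = d⁻¹ * ((∫ x, g x ∂μ) + c) := by
    rw [show (fun x => g' x) = (fun x => d⁻¹ * (g x + c)) from funext hg'apply]
    rw [MeasureTheory.integral_const_mul]
    congr 1
    rw [MeasureTheory.integral_add hintg (MeasureTheory.integrable_const c)]
    simp
  rw [hΛg', hIg'] at heq
  have := mul_left_cancel₀ (inv_ne_zero hdpos.ne') heq
  linarith

omit hpos in
/-- **Riesz–Markov–Kakutani** for compact Hausdorff spaces: a positive normalized linear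
functional on `C(X, ℝ)` is given by integration against a Borel probability measure. -/
theorem exists_riesz_measure (Λ : C(X, ℝ) →ₗ[ℝ] ℝ)
    (hpos : ∀ g : C(X, ℝ), (∀ x, 0 ≤ g x) → 0 ≤ Λ g) (hone : Λ 1 = 1) :
    ∃ μ : Measure X, IsProbabilityMeasure μ ∧ ∀ g : C(X, ℝ), Λ g = ∫ x, g x ∂μ :=
  ⟨rieszMeas hpos, ⟨rieszMeas_univ hpos hone⟩, rieszMeas_integral_eq hpos hone⟩

end Meas

end Riesz


section EoFProof

variable {V : Type*} [AddCommGroup V] [Module ℝ V] [TopologicalSpace V]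
    [IsTopologicalAddGroup V] [ContinuousSMul ℝ V] [T2Space V]
    [MeasurableSpace V] [BorelSpace V]
    {S : Set V} (hScpt : IsCompact S) {f : ↥S → ℝ} (hf : Continuous f)

/-- The continuous map on `S` induced by a continuous linear functional. -/
def restrictCLM (ℓ : V →L[ℝ] ℝ) : C(↥S, ℝ) :=
  ⟨fun x => ℓ (x : V), ℓ.continuous.comp continuous_subtype_val⟩

include hScpt hf

lemma dirac_hasBarycenter (x : ↥S) :
    HasBarycenter (⟨Measure.dirac x, inferInstance⟩ : ProbabilityMeasure ↥S) (x : V) := by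
  intro ℓ
  have hsm : MeasureTheory.StronglyMeasurable (fun φ : ↥S => ℓ (φ : V)) :=
    (ℓ.continuous.comp continuous_subtype_val).stronglyMeasurable
  show ℓ (x : V) = ∫ φ : ↥S, ℓ (φ : V) ∂(Measure.dirac x)
  rw [MeasureTheory.integral_dirac' _ x hsm]

lemma EoF_bddBelow (ω : V) :
    BddBelow (Set.range fun μ : {μ : ProbabilityMeasure ↥S // HasBarycenter μ ω} =>
      ∫ φ : ↥S, f φ ∂(μ.1 : Measure ↥S)) := by
  haveI : CompactSpace ↥S := isCompact_iff_compactSpace.mp hScpt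
  set fc : C(↥S, ℝ) := ⟨f, hf⟩ with hfc
  have hbd : ∀ x : ↥S, -‖fc‖ ≤ f x := by
    intro x
    have := (abs_le.mp (by simpa using fc.norm_coe_le_norm x)).1
    exact this
  refine ⟨-‖fc‖, ?_⟩
  rintro r ⟨μ', rfl⟩
  calc -‖fc‖ = ∫ _x : ↥S, -‖fc‖ ∂((μ'.1 : ProbabilityMeasure ↥S) : Measure ↥S) := by simp
    _ ≤ ∫ x : ↥S, f x ∂((μ'.1 : ProbabilityMeasure ↥S) : Measure ↥S) :=
      MeasureTheory.integral_mono (MeasureTheory.integrable_const _)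
        (continuousMap_integrable fc _) hbd

/-- The easy direction: continuous affine minorants of `f` are minorants of `EoF f` on `S`. -/
lemma affine_le_EoF (ℓ : V →L[ℝ] ℝ) (c : ℝ)
    (hmin : ∀ x : ↥S, ℓ (x : V) + c ≤ f x) (x : ↥S) :
    ℓ (x : V) + c ≤ EoF f (x : V) := by
  haveI : CompactSpace ↥S := isCompact_iff_compactSpace.mp hScpt
  haveI : Nonempty {μ : ProbabilityMeasure ↥S // HasBarycenter μ (x : V)} :=
    ⟨⟨⟨Measure.dirac x, inferInstance⟩, dirac_hasBarycenter hScpt hf x⟩⟩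
  refine le_ciInf fun μ' => ?_
  have hbar := μ'.2 ℓ
  have hℓint : MeasureTheory.Integrable (fun φ : ↥S => ℓ (φ : V) + c)
      (μ'.1 : Measure ↥S) := by
    have := continuousMap_integrable (restrictCLM (S := S) ℓ + ContinuousMap.const _ c)
      (μ'.1 : Measure ↥S)
    simpa [restrictCLM] using this
  calc ℓ (x : V) + c = ∫ φ : ↥S, (ℓ (φ : V) + c) ∂(μ'.1 : Measure ↥S) := by
        rw [MeasureTheory.integral_add ?_ (MeasureTheory.integrable_const c)]
        · rw [← hbar]
          simp
        · have := continuousMap_integrable (restrictCLM (S := S) ℓ) (μ'.1 : Measure ↥S)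
          simpa [restrictCLM] using this
    _ ≤ ∫ φ : ↥S, f φ ∂(μ'.1 : Measure ↥S) :=
        MeasureTheory.integral_mono hℓint
          (continuousMap_integrable (⟨f, hf⟩ : C(↥S, ℝ)) _) hmin

/-- The hard direction: if every continuous affine minorant of `f` has value at most `y`
at `ω`, then `EoF f ω ≤ y`. -/
lemma EoF_le_of_affine_bounds (ω : ↥S) (y : ℝ)
    (hyp : ∀ (ℓ : V →L[ℝ] ℝ) (c : ℝ), (∀ x : ↥S, ℓ (x : V) + c ≤ f x) → ℓ (ω : V) + c ≤ y) :
    EoF f (ω : V) ≤ y := by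
  haveI : CompactSpace ↥S := isCompact_iff_compactSpace.mp hScpt
  haveI : Nonempty ↥S := ⟨ω⟩
  set fc : C(↥S, ℝ) := ⟨f, hf⟩ with hfc
  -- the sublinear functional given by values of affine majorants at ω
  set Vals : C(↥S, ℝ) → Set ℝ := fun g =>
    {r | ∃ (ℓ : V →L[ℝ] ℝ) (c : ℝ), (∀ x : ↥S, g x ≤ ℓ (x : V) + c) ∧ r = ℓ (ω : V) + c}
    with hVals
  set P : C(↥S, ℝ) → ℝ := fun g => sInf (Vals g) with hP
  have hne : ∀ g, (Vals g).Nonempty := by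
    intro g
    refine ⟨(0 : V →L[ℝ] ℝ) (ω : V) + ‖g‖, 0, ‖g‖, fun x => ?_, rfl⟩
    have := (abs_le.mp (by simpa using g.norm_coe_le_norm x)).2
    simpa using this
  have hlb : ∀ g, ∀ r ∈ Vals g, g ω ≤ r := by
    rintro g r ⟨ℓ, c, hbd, rfl⟩
    exact hbd ω
  have hbddVals : ∀ g, BddBelow (Vals g) := fun g => ⟨g ω, hlb g⟩
  have hPle : ∀ g (ℓ : V →L[ℝ] ℝ) (c : ℝ), (∀ x : ↥S, g x ≤ ℓ (x : V) + c) →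
      P g ≤ ℓ (ω : V) + c := fun g ℓ c h => csInf_le (hbddVals g) ⟨ℓ, c, h, rfl⟩
  have hleP : ∀ g (b : ℝ), (∀ r ∈ Vals g, b ≤ r) → b ≤ P g := fun g b h =>
    le_csInf (hne g) h
  -- subadditivity
  have hPadd : ∀ g h : C(↥S, ℝ), P (g + h) ≤ P g + P h := by
    intro g h
    have key : ∀ r₁ ∈ Vals g, ∀ r₂ ∈ Vals h, P (g + h) ≤ r₁ + r₂ := by
      rintro r₁ ⟨ℓ₁, c₁, hbd₁, rfl⟩ r₂ ⟨ℓ₂, c₂, hbd₂, rfl⟩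
      have : ∀ x : ↥S, (g + h) x ≤ (ℓ₁ + ℓ₂) (x : V) + (c₁ + c₂) := by
        intro x
        have := add_le_add (hbd₁ x) (hbd₂ x)
        simpa [ContinuousMap.add_apply, ContinuousLinearMap.add_apply, add_assoc,
          add_comm, add_left_comm] using this
      have := hPle (g + h) (ℓ₁ + ℓ₂) (c₁ + c₂) this
      simpa [ContinuousLinearMap.add_apply, add_assoc, add_comm, add_left_comm] using this
    have step1 : ∀ r₁ ∈ Vals g, P (g + h) - r₁ ≤ P h := by
      intro r₁ hr₁
      refine hleP _ _ fun r₂ hr₂ => ?_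
      linarith [key r₁ hr₁ r₂ hr₂]
    have : P (g + h) - P h ≤ P g := hleP _ _ fun r₁ hr₁ => by linarith [step1 r₁ hr₁]
    linarith
  -- positive homogeneity
  have hPsmul_le : ∀ (t : ℝ), 0 < t → ∀ g : C(↥S, ℝ), P (t • g) ≤ t * P g := by
    intro t ht g
    have key : ∀ r ∈ Vals g, P (t • g) ≤ t * r := by
      rintro r ⟨ℓ, c, hbd, rfl⟩
      have : ∀ x : ↥S, (t • g) x ≤ (t • ℓ) (x : V) + t * c := by
        intro x
        have := mul_le_mul_of_nonneg_left (hbd x) ht.le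
        simpa [ContinuousMap.smul_apply, ContinuousLinearMap.smul_apply, smul_eq_mul,
          mul_add] using this
      have := hPle (t • g) (t • ℓ) (t * c) this
      calc P (t • g) ≤ (t • ℓ) (ω : V) + t * c := this
        _ = t * (ℓ (ω : V) + c) := by
            simp [ContinuousLinearMap.smul_apply, smul_eq_mul, mul_add]
    have h2 : ∀ r ∈ Vals g, t⁻¹ * P (t • g) ≤ r := by
      intro r hr
      have := key r hr
      have h3 := mul_le_mul_of_nonneg_left this (inv_nonneg.mpr ht.le)
      rwa [← mul_assoc, inv_mul_cancel₀ ht.ne', one_mul] at h3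
    have h4 : t⁻¹ * P (t • g) ≤ P g := hleP _ _ h2
    have h5 := mul_le_mul_of_nonneg_left h4 ht.le
    rwa [← mul_assoc, mul_inv_cancel₀ ht.ne', one_mul] at h5
  have hPsmul : ∀ (t : ℝ), 0 < t → ∀ g : C(↥S, ℝ), P (t • g) = t * P g := by
    intro t ht g
    refine le_antisymm (hPsmul_le t ht g) ?_
    have := hPsmul_le t⁻¹ (inv_pos.mpr ht) (t • g)
    rw [smul_smul, inv_mul_cancel₀ ht.ne', one_smul] at this
    have h5 := mul_le_mul_of_nonneg_left this ht.le
    rw [← mul_assoc, mul_inv_cancel₀ ht.ne', one_mul] at h5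
    linarith [h5]
  have hP0 : P 0 = 0 := by
    refine le_antisymm ?_ ?_
    · have := hPle 0 0 0 (fun x => by simp)
      simpa using this
    · refine hleP _ _ fun r hr => ?_
      have := hlb 0 r hr
      simpa using this
  -- the value to be assigned to `f`
  set t₀ : ℝ := -P (-fc) with ht₀
  have hPnegf : -y ≤ P (-fc) := by
    refine hleP _ _ ?_
    rintro r ⟨ℓ, c, hbd, rfl⟩
    have hmin : ∀ x : ↥S, (-ℓ) (x : V) + (-c) ≤ f x := by
      intro x
      have := hbd x
      simp only [ContinuousMap.neg_apply] at this
      have hthis : -(f x) ≤ ℓ (x : V) + c := this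
      simp only [ContinuousLinearMap.neg_apply]
      linarith
    have := hyp (-ℓ) (-c) hmin
    simp only [ContinuousLinearMap.neg_apply] at this
    linarith
  have ht₀y : t₀ ≤ y := by rw [ht₀]; linarith
  have ht₀Pf : t₀ ≤ P fc := by
    have h0 : P (fc + -fc) = 0 := by rw [add_neg_cancel, hP0]
    have := hPadd fc (-fc)
    rw [h0] at this
    rw [ht₀]
    linarith
  -- now split on whether `f` is identically zero
  by_cases hfc0 : fc = 0
  · -- trivial case: `f ≡ 0`
    have hf0 : ∀ x : ↥S, f x = 0 := by
      intro x
      have := congrFun (congrArg (fun g : C(↥S, ℝ) => (g : ↥S → ℝ)) hfc0) x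
      simpa [hfc] using this
    have hy0 : (0:ℝ) ≤ y := by
      have := hyp 0 0 (fun x => by simp [hf0 x])
      simpa using this
    have hd := dirac_hasBarycenter hScpt hf ω
    have hEoF : EoF f ((ω : ↥S) : V) = ⨅ μ : {μ : ProbabilityMeasure ↥S //
        HasBarycenter μ ((ω : ↥S) : V)}, ∫ φ : ↥S, f φ ∂(μ.1 : Measure ↥S) := rfl
    rw [hEoF]
    have hle : (⨅ μ : {μ : ProbabilityMeasure ↥S // HasBarycenter μ ((ω : ↥S) : V)},
        ∫ φ : ↥S, f φ ∂(μ.1 : Measure ↥S)) ≤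
        ∫ φ : ↥S, f φ ∂((⟨Measure.dirac ω, inferInstance⟩ : ProbabilityMeasure ↥S) :
          Measure ↥S) :=
      ciInf_le (EoF_bddBelow hScpt hf _) ⟨_, hd⟩
    refine hle.trans ?_
    have : ∀ φ : ↥S, f φ = 0 := hf0
    rw [show (fun φ : ↥S => f φ) = (fun _ : ↥S => (0:ℝ)) from funext this]
    simpa using hy0
  · -- Hahn–Banach extension of the functional determined by `t₀` on the span of `f`
    set pm : C(↥S, ℝ) →ₗ.[ℝ] ℝ := LinearPMap.mkSpanSingleton fc t₀ hfc0 with hpm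
    have hdom : ∀ z : pm.domain, pm z ≤ P z := by
      rintro ⟨z, hz⟩
      have hz' : z ∈ Submodule.span ℝ {fc} := hz
      obtain ⟨t, ht⟩ := Submodule.mem_span_singleton.mp hz'
      subst ht
      have happ : pm ⟨t • fc, hz⟩ = t • t₀ :=
        LinearPMap.mkSpanSingleton'_apply fc t₀ _ t hz
      rw [happ]
      rcases lt_trichotomy t 0 with htneg | ht0 | htpos
      · -- negative scalar: equality via `-fc`
        have hrw : t • fc = (-t) • (-fc) := by rw [neg_smul, smul_neg, neg_neg]
        have : P (t • fc) = (-t) * P (-fc) := by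
          rw [hrw]; exact hPsmul (-t) (by linarith) (-fc)
        show t • t₀ ≤ P (t • fc)
        rw [this, ht₀]
        have : (-t) * P (-fc) = t • (-P (-fc)) := by
          simp only [smul_eq_mul]; ring
        rw [this]
      · subst ht0
        show (0:ℝ) • t₀ ≤ P ((0:ℝ) • fc)
        rw [zero_smul, zero_smul, hP0]
      · show t • t₀ ≤ P (t • fc)
        rw [hPsmul t htpos fc, smul_eq_mul]
        exact mul_le_mul_of_nonneg_left ht₀Pf htpos.le
    obtain ⟨Λ, hext, hΛle⟩ := exists_extension_of_le_sublinear pm P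
      (fun c hc g => hPsmul c hc g) hPadd hdom
    have hΛf : Λ fc = t₀ := by
      have hmem : fc ∈ pm.domain := Submodule.mem_span_singleton_self fc
      have h1 := hext ⟨fc, hmem⟩
      have h2 : pm ⟨fc, hmem⟩ = t₀ := LinearPMap.mkSpanSingleton_apply ℝ ℝ hfc0 t₀
      rw [h1, h2]
    -- positivity and normalization of Λ
    have hpos : ∀ g : C(↥S, ℝ), (∀ x, 0 ≤ g x) → 0 ≤ Λ g := by
      intro g hg
      have h1 : Λ (-g) ≤ P (-g) := hΛle (-g)
      have h2 : P (-g) ≤ 0 := by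
        have := hPle (-g) 0 0 (fun x => by
          simp only [ContinuousMap.neg_apply, ContinuousLinearMap.zero_apply, add_zero]
          linarith [hg x])
        simpa using this
      have h3 : Λ (-g) = -Λ g := map_neg Λ g
      linarith
    have hone : Λ 1 = 1 := by
      have h1 : Λ 1 ≤ P 1 := hΛle 1
      have h2 : P 1 ≤ 1 := by
        have := hPle 1 0 1 (fun x => by simp)
        simpa using this
      have h3 : Λ (-1) ≤ P (-1) := hΛle (-1)
      have h4 : P (-1) ≤ -1 := by
        have := hPle (-1) 0 (-1) (fun x => by simp)
        simpa using this
      have h5 : Λ (-1) = -Λ 1 := map_neg Λ 1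
      linarith
    -- Λ agrees with evaluation at ω on linear functionals
    have hlin : ∀ ℓ : V →L[ℝ] ℝ, Λ (restrictCLM (S := S) ℓ) = ℓ (ω : V) := by
      intro ℓ
      have h1 : Λ (restrictCLM (S := S) ℓ) ≤ P (restrictCLM (S := S) ℓ) := hΛle _
      have h2 : P (restrictCLM (S := S) ℓ) ≤ ℓ (ω : V) := by
        have := hPle (restrictCLM (S := S) ℓ) ℓ 0 (fun x => by simp [restrictCLM])
        simpa using this
      have h3 : P (-(restrictCLM (S := S) ℓ)) ≤ -ℓ (ω : V) := by
        have := hPle (-(restrictCLM (S := S) ℓ)) (-ℓ) 0 (fun x => by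
          simp [restrictCLM])
        simpa using this
      have h4 : Λ (-(restrictCLM (S := S) ℓ)) ≤ P (-(restrictCLM (S := S) ℓ)) := hΛle _
      have h5 : Λ (-(restrictCLM (S := S) ℓ)) = -Λ (restrictCLM (S := S) ℓ) := map_neg Λ _
      linarith
    -- the representing measure
    obtain ⟨μ, hμprob, hμint⟩ := exists_riesz_measure Λ hpos hone
    set μP : ProbabilityMeasure ↥S := ⟨μ, hμprob⟩ with hμP
    have hbar : HasBarycenter μP ((ω : ↥S) : V) := by
      intro ℓ
      have h1 := hμint (restrictCLM (S := S) ℓ)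
      have h2 : ∫ x : ↥S, (restrictCLM (S := S) ℓ) x ∂μ
          = ∫ φ : ↥S, ℓ (φ : V) ∂(μP : Measure ↥S) := rfl
      rw [← h2, ← h1, hlin ℓ]
    have hintf : ∫ φ : ↥S, f φ ∂(μP : Measure ↥S) = t₀ := by
      have h1 := hμint fc
      have h2 : ∫ x : ↥S, fc x ∂μ = ∫ φ : ↥S, f φ ∂(μP : Measure ↥S) := rfl
      rw [← h2, ← h1, hΛf]
    have hEoF : EoF f ((ω : ↥S) : V) = ⨅ μ' : {μ' : ProbabilityMeasure ↥S //
        HasBarycenter μ' ((ω : ↥S) : V)}, ∫ φ : ↥S, f φ ∂(μ'.1 : Measure ↥S) := rfl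
    rw [hEoF]
    have hle : (⨅ μ' : {μ' : ProbabilityMeasure ↥S // HasBarycenter μ' ((ω : ↥S) : V)},
        ∫ φ : ↥S, f φ ∂(μ'.1 : Measure ↥S)) ≤ ∫ φ : ↥S, f φ ∂(μP : Measure ↥S) :=
      ciInf_le (EoF_bddBelow hScpt hf _) ⟨μP, hbar⟩
    rw [hintf] at hle
    exact hle.trans ht₀y

end EoFProof

end AuxEoF

/-- For continuous `f : S → ℝ`, the functional
`E(ω) = inf_{μ ∈ M_ω(S)} ∫_S f dμ` is lower semicontinuous on `S`. -/
theorem EoF_lowerSemicontinuous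
    {V : Type*} [AddCommGroup V] [Module ℝ V] [TopologicalSpace V]
    [IsTopologicalAddGroup V] [ContinuousSMul ℝ V] [T2Space V] [LocallyConvexSpace ℝ V]
    [MeasurableSpace V] [BorelSpace V]
    (S : Set V) (hSne : S.Nonempty) (hScpt : IsCompact S) (hSconv : Convex ℝ S)
    (f : ↥S → ℝ) (hf : Continuous f) :
    LowerSemicontinuous (fun ω : ↥S => EoF f (ω : V)) := by
  intro ω y hy
  have hex : ∃ (ℓ : V →L[ℝ] ℝ) (c : ℝ), (∀ x : ↥S, ℓ (x : V) + c ≤ f x) ∧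
      y < ℓ (ω : V) + c := by
    by_contra h
    push_neg at h
    exact absurd (EoF_le_of_affine_bounds hScpt hf ω y h) (not_le.mpr hy)
  obtain ⟨ℓ, c, hmin, hgt⟩ := hex
  have hcont : Continuous fun x : ↥S => ℓ (x : V) + c :=
    (ℓ.continuous.comp continuous_subtype_val).add continuous_const
  have htend : Filter.Tendsto (fun x : ↥S => ℓ (x : V) + c) (nhds ω)
      (nhds (ℓ (ω : V) + c)) := hcont.continuousAt
  have hev : ∀ᶠ x : ↥S in nhds ω, y < ℓ (x : V) + c :=
    htend.eventually (eventually_gt_nhds hgt)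
  filter_upwards [hev] with x hx
  exact hx.trans_le (affine_le_EoF hScpt hf ℓ c hmin x)
end

section
/- Let V be a Hausdorff locally convex real topological vector space, S ⊆ V a nonempty compact convex subset, g : S → ℝ a continuous convex function, and ω ∈ S. Then the set F₀ = {μ ∈ M_ω(S) : ∫_S g dμ = sup_{ν ∈ M_ω(S)} ∫_S g dν} is a nonempty, closed face of M_ω(S) which is hereditary upwards with respect to the Choquet order: if μ ∈ F₀, ν ∈ M_ω(S), and μ ≺ ν, then ν ∈ F₀. -/
open MeasureTheory
open scoped ENNReal NNReal

set_option linter.unusedSectionVars false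
set_option linter.unusedVariables false

namespace ChoquetAux

open BoundedContinuousFunction Set TopologicalSpace

variable {X : Type*} [TopologicalSpace X] [CompactSpace X] [T2Space X]
  [MeasurableSpace X] [BorelSpace X]

/-- Bundle a continuous `ℝ≥0`-valued function on a compact space. -/
noncomputable def bcnn (f : X → ℝ≥0) (hf : Continuous f) : X →ᵇ ℝ≥0 :=
  BoundedContinuousFunction.mkOfCompact ⟨f, hf⟩

@[simp] lemma bcnn_apply (f : X → ℝ≥0) (hf : Continuous f) (x : X) : bcnn f hf x = f x := rfl

lemma toNNReal_add_toNNReal_one_sub {a : ℝ} (h0 : 0 ≤ a) (h1 : a ≤ 1) :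
    Real.toNNReal a + Real.toNNReal (1 - a) = 1 := by
  have h2 : (0:ℝ) ≤ 1 - a := by linarith
  ext
  push_cast [Real.coe_toNNReal a h0, Real.coe_toNNReal _ h2]
  ring

/-- Old-style Riesz content on bounded continuous functions. -/
noncomputable def rieszContentAux (Λ : (X →ᵇ ℝ≥0) →ₗ[ℝ≥0] ℝ≥0) : Compacts X → ℝ≥0 :=
  fun K => sInf (Λ '' { f : X →ᵇ ℝ≥0 | ∀ x ∈ K, (1 : ℝ≥0) ≤ f x })

lemma rieszContentAux_image_nonempty (Λ : (X →ᵇ ℝ≥0) →ₗ[ℝ≥0] ℝ≥0) (K : Compacts X) :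
    (Λ '' { f : X →ᵇ ℝ≥0 | ∀ x ∈ K, (1 : ℝ≥0) ≤ f x }).Nonempty :=
  ⟨Λ 1, 1, fun x _ => by simp, rfl⟩

lemma rieszContentAux_mono (Λ : (X →ᵇ ℝ≥0) →ₗ[ℝ≥0] ℝ≥0) {K₁ K₂ : Compacts X} (h : K₁ ≤ K₂) :
    rieszContentAux Λ K₁ ≤ rieszContentAux Λ K₂ :=
  csInf_le_csInf (OrderBot.bddBelow _) (rieszContentAux_image_nonempty Λ K₂)
    (Set.image_mono fun f hf x hx => hf x (h hx))

lemma rieszContentAux_le (Λ : (X →ᵇ ℝ≥0) →ₗ[ℝ≥0] ℝ≥0) {K : Compacts X} {f : X →ᵇ ℝ≥0}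
    (h : ∀ x ∈ K, (1 : ℝ≥0) ≤ f x) : rieszContentAux Λ K ≤ Λ f :=
  csInf_le (OrderBot.bddBelow _) ⟨f, h, rfl⟩

lemma rieszContentAux_sup_le (Λ : (X →ᵇ ℝ≥0) →ₗ[ℝ≥0] ℝ≥0) (K1 K2 : Compacts X) :
    rieszContentAux Λ (K1 ⊔ K2) ≤ rieszContentAux Λ K1 + rieszContentAux Λ K2 := by
  apply _root_.le_of_forall_pos_le_add
  intro ε εpos
  obtain ⟨_, ⟨f1, hf1, rfl⟩, h1⟩ := exists_lt_of_csInf_lt (rieszContentAux_image_nonempty Λ K1)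
    (lt_add_of_pos_right (rieszContentAux Λ K1) (half_pos εpos))
  obtain ⟨_, ⟨f2, hf2, rfl⟩, h2⟩ := exists_lt_of_csInf_lt (rieszContentAux_image_nonempty Λ K2)
    (lt_add_of_pos_right (rieszContentAux Λ K2) (half_pos εpos))
  have hu : ∀ x ∈ K1 ⊔ K2, (1 : ℝ≥0) ≤ (f1 + f2) x := by
    rintro x (hx | hx)
    · exact le_add_right (hf1 x hx)
    · exact le_add_left (hf2 x hx)
  refine (rieszContentAux_le Λ hu).trans ?_
  rw [map_add]
  have h1' : Λ f1 ≤ rieszContentAux Λ K1 + ε / 2 := h1.le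
  have h2' : Λ f2 ≤ rieszContentAux Λ K2 + ε / 2 := h2.le
  calc Λ f1 + Λ f2 ≤ (rieszContentAux Λ K1 + ε / 2) + (rieszContentAux Λ K2 + ε / 2) :=
        add_le_add h1' h2'
    _ = rieszContentAux Λ K1 + rieszContentAux Λ K2 + ε := by
        rw [add_add_add_comm, add_halves]

variable (Λ : (X →ᵇ ℝ≥0) →ₗ[ℝ≥0] ℝ≥0)

/-- The content associated with a positive linear functional. -/
noncomputable def rieszC
    (hmono : ∀ f g : X →ᵇ ℝ≥0, (∀ x, f x ≤ g x) → Λ f ≤ Λ g) : Content X where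
  toFun K := rieszContentAux Λ K
  mono' K₁ K₂ h := rieszContentAux_mono Λ h
  sup_le' := rieszContentAux_sup_le Λ
  sup_disjoint' := by
    intro K₁ K₂ hd _ _
    refine le_antisymm (rieszContentAux_sup_le Λ K₁ K₂) ?_
    refine le_csInf (rieszContentAux_image_nonempty Λ _) ?_
    rintro b ⟨f, hf, rfl⟩
    obtain ⟨u, hu0, hu1, hu01⟩ :=
      exists_continuous_zero_one_of_isCompact K₂.2 K₁.2.isClosed hd.symm
    set e₁ : X →ᵇ ℝ≥0 := bcnn (fun x => f x * Real.toNNReal (u x))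
      (f.continuous.mul (continuous_real_toNNReal.comp u.continuous)) with he₁
    set e₂ : X →ᵇ ℝ≥0 := bcnn (fun x => f x * Real.toNNReal (1 - u x))
      (f.continuous.mul (continuous_real_toNNReal.comp (continuous_const.sub u.continuous)))
      with he₂
    have hsum : e₁ + e₂ = f := by
      ext x
      simp only [BoundedContinuousFunction.coe_add, Pi.add_apply, he₁, he₂, bcnn_apply]
      rw [← mul_add, toNNReal_add_toNNReal_one_sub (hu01 x).1 (hu01 x).2, mul_one]
    have h₁ : ∀ x ∈ K₁, 1 ≤ e₁ x := by
      intro x hx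
      have : u x = 1 := hu1 hx
      simp only [he₁, bcnn_apply, this]
      simpa using hf x (Or.inl hx)
    have h₂ : ∀ x ∈ K₂, 1 ≤ e₂ x := by
      intro x hx
      have : u x = 0 := hu0 hx
      simp only [he₂, bcnn_apply, this]
      simpa using hf x (Or.inr hx)
    calc rieszContentAux Λ K₁ + rieszContentAux Λ K₂
        ≤ Λ e₁ + Λ e₂ := add_le_add (rieszContentAux_le Λ h₁) (rieszContentAux_le Λ h₂)
      _ = Λ (e₁ + e₂) := (map_add Λ e₁ e₂).symm
      _ = Λ f := by rw [hsum]

variable {Λ}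
variable (hmono : ∀ f g : X →ᵇ ℝ≥0, (∀ x, f x ≤ g x) → Λ f ≤ Λ g)

lemma rieszC_measure_le (K : Set X) (hK : IsClosed K) (f : X →ᵇ ℝ≥0)
    (hf : ∀ x ∈ K, 1 ≤ f x) : (rieszC Λ hmono).measure K ≤ (Λ f : ℝ≥0∞) := by
  rw [Content.measure_apply _ hK.measurableSet]
  have step : ∀ t : ℝ≥0, 0 < t → t < 1 →
      (rieszC Λ hmono).outerMeasure K ≤ ((t⁻¹ * Λ f : ℝ≥0) : ℝ≥0∞) := by
    intro t ht0 ht1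
    have hU : IsOpen {x : X | t < f x} := isOpen_lt continuous_const f.continuous
    have hKU : K ⊆ {x : X | t < f x} := fun x hx => lt_of_lt_of_le ht1 (hf x hx)
    calc (rieszC Λ hmono).outerMeasure K
        ≤ (rieszC Λ hmono).outerMeasure {x : X | t < f x} :=
          OuterMeasure.mono _ hKU
      _ = (rieszC Λ hmono).innerContent ⟨_, hU⟩ :=
          Content.outerMeasure_of_isOpen _ _ hU
      _ ≤ ((t⁻¹ * Λ f : ℝ≥0) : ℝ≥0∞) := by
          refine iSup_le fun K' => iSup_le fun hK' => ?_
          have : rieszContentAux Λ K' ≤ Λ (t⁻¹ • f) := by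
            refine rieszContentAux_le Λ ?_
            intro x hx
            have hxf : t < f x := hK' hx
            calc (1 : ℝ≥0) = t⁻¹ * t := (inv_mul_cancel₀ ht0.ne').symm
              _ ≤ t⁻¹ * f x := mul_le_mul_right hxf.le t⁻¹
              _ = (t⁻¹ • f) x := by simp
          have h2 : Λ (t⁻¹ • f) = t⁻¹ * Λ f := by
            rw [Λ.map_smul]; simp
          have h3 : rieszContentAux Λ K' ≤ t⁻¹ * Λ f := this.trans h2.le
          change ((rieszContentAux Λ K' : ℝ≥0) : ℝ≥0∞) ≤ _
          exact_mod_cast h3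
  refine ENNReal.le_of_forall_pos_le_add fun ε hε _ => ?_
  by_cases hc : Λ f = 0
  · have := step (1/2) one_half_pos one_half_lt_one
    refine this.trans ?_
    simp [hc]
  · set c := Λ f with hcdef
    have hcpos : 0 < c := pos_iff_ne_zero.mpr hc
    have ht0 : 0 < c / (c + ε) := div_pos hcpos (by positivity)
    have ht1 : c / (c + ε) < 1 := by
      rw [div_lt_one (by positivity)]
      exact lt_add_of_pos_right _ hε
    have := step _ ht0 ht1
    refine this.trans ?_
    have : (c / (c + ε))⁻¹ * c = c + ε := by
      rw [inv_div, div_mul_cancel₀ _ hcpos.ne']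
    rw [this]
    push_cast
    rfl

lemma rieszC_le_measure (C : Set X) (hC : IsClosed C) (g : X →ᵇ ℝ≥0)
    (hg1 : ∀ x, g x ≤ 1) (hg0 : ∀ x ∉ C, g x = 0) :
    (Λ g : ℝ≥0∞) ≤ (rieszC Λ hmono).measure C := by
  rw [Content.measure_apply _ hC.measurableSet]
  have h1 : Λ g ≤ rieszContentAux Λ ⟨C, hC.isCompact⟩ := by
    refine le_csInf (rieszContentAux_image_nonempty Λ _) ?_
    rintro b ⟨f, hf, rfl⟩
    refine hmono g f fun x => ?_
    by_cases hx : x ∈ C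
    · exact (hg1 x).trans (hf x hx)
    · simp [hg0 x hx]
  calc (Λ g : ℝ≥0∞) ≤ (rieszContentAux Λ ⟨C, hC.isCompact⟩ : ℝ≥0∞) := by exact_mod_cast h1
    _ ≤ (rieszC Λ hmono).outerMeasure C :=
        Content.le_outerMeasure_compacts _ ⟨C, hC.isCompact⟩


section Part2
open BoundedContinuousFunction Set TopologicalSpace
variable {X : Type*} [TopologicalSpace X] [CompactSpace X] [T2Space X]
  [MeasurableSpace X] [BorelSpace X]
variable {Λ : (X →ᵇ ℝ≥0) →ₗ[ℝ≥0] ℝ≥0}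
variable (hmono : ∀ f g : X →ᵇ ℝ≥0, (∀ x, f x ≤ g x) → Λ f ≤ Λ g)

lemma lintegral_rieszC [Nonempty X] (f : X →ᵇ ℝ≥0) :
    ∫⁻ x, (f x : ℝ≥0∞) ∂((rieszC Λ hmono).measure) = (Λ f : ℝ≥0∞) := by
  set ν := (rieszC Λ hmono).measure with hνdef
  have hν1 : ν univ ≤ (Λ 1 : ℝ≥0∞) :=
    rieszC_measure_le hmono univ isClosed_univ 1 (fun x _ => by simp)
  have main : ∀ ε : ℝ≥0, 0 < ε →
      (∫⁻ x, (f x : ℝ≥0∞) ∂ν ≤ (Λ f : ℝ≥0∞) + ε * Λ 1) ∧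
      ((Λ f : ℝ≥0∞) ≤ ∫⁻ x, (f x : ℝ≥0∞) ∂ν + ε * Λ 1) := by
    intro ε hε
    obtain ⟨x₀, -, hx₀⟩ := isCompact_univ.exists_isMaxOn (univ_nonempty (α := X))
      (f.continuous.continuousOn (s := univ))
    obtain ⟨N₀, hN₀⟩ := exists_nat_ge (f x₀ / ε)
    set N : ℕ := max N₀ 1 with hNdef
    obtain ⟨M, hM⟩ : ∃ M, N = M + 1 :=
      ⟨N - 1, (Nat.succ_pred_eq_of_pos (lt_of_lt_of_le one_pos (le_max_right _ _))).symm⟩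
    have hN : ∀ x, f x ≤ (N : ℝ≥0) * ε := by
      intro x
      have h1 : f x ≤ f x₀ := hx₀ (mem_univ x)
      have h2 : f x₀ ≤ (N₀ : ℝ≥0) * ε := by
        rw [div_le_iff₀ hε] at hN₀
        exact hN₀
      refine h1.trans (h2.trans ?_)
      gcongr
      exact_mod_cast le_max_left N₀ 1
    set K : ℕ → Set X := fun i => {x | (i : ℝ≥0) * ε ≤ f x} with hKdef
    have hKcl : ∀ i, IsClosed (K i) := fun i => isClosed_le continuous_const f.continuous
    have hK0 : K 0 = univ := by
      ext x; simp [hKdef]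
    set d : ℕ → (X →ᵇ ℝ≥0) := fun i => bcnn
      (fun x => min (f x) (((i+1 : ℕ) : ℝ≥0) * ε) - min (f x) ((i : ℝ≥0) * ε))
      ((f.continuous.min continuous_const).sub (f.continuous.min continuous_const)) with hddef
    have hd_apply : ∀ i x,
        d i x = min (f x) (((i+1 : ℕ) : ℝ≥0) * ε) - min (f x) ((i : ℝ≥0) * ε) := fun i x => rfl
    have htel : ∀ x, ∑ i ∈ Finset.range N, d i x = f x := by
      intro x
      have key : ∀ n : ℕ, ∑ i ∈ Finset.range n, d i x = min (f x) ((n : ℝ≥0) * ε) := by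
        intro n
        induction n with
        | zero => simp
        | succ n ih =>
          rw [Finset.sum_range_succ, ih, hd_apply]
          have hmono' : min (f x) ((n : ℝ≥0) * ε) ≤ min (f x) (((n+1 : ℕ) : ℝ≥0) * ε) := by
            refine min_le_min le_rfl ?_
            gcongr
            exact_mod_cast Nat.le_succ n
          rw [add_tsub_cancel_of_le hmono']
      rw [key N, min_eq_left (hN x)]
    have hsum_d : ∑ i ∈ Finset.range N, d i = f := by
      ext x
      rw [BoundedContinuousFunction.coe_sum, Finset.sum_apply]
      exact_mod_cast htel x
    have hd_one : ∀ i, ∀ x ∈ K (i+1), ε ≤ d i x := by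
      intro i x hx
      have hx' : ((i+1 : ℕ) : ℝ≥0) * ε ≤ f x := by exact_mod_cast hx
      have hxi : (i : ℝ≥0) * ε ≤ f x := by
        refine le_trans ?_ hx'
        gcongr
        exact_mod_cast Nat.le_succ i
      rw [hd_apply, min_eq_right hx', min_eq_right hxi]
      have heq : ((i+1 : ℕ) : ℝ≥0) * ε = (i : ℝ≥0) * ε + ε := by push_cast; ring
      rw [heq, add_tsub_cancel_left]
    have hd_le : ∀ i x, d i x ≤ ε := by
      intro i x
      rw [hd_apply, tsub_le_iff_right]
      have heq : ((i+1 : ℕ) : ℝ≥0) * ε = (i : ℝ≥0) * ε + ε := by push_cast; ring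
      rw [heq]
      calc min (f x) ((i : ℝ≥0) * ε + ε) ≤ min (f x + ε) ((i : ℝ≥0) * ε + ε) :=
            min_le_min (le_add_right le_rfl) le_rfl
        _ = min (f x) ((i : ℝ≥0) * ε) + ε := by rw [min_add_add_right]
        _ = ε + min (f x) ((i : ℝ≥0) * ε) := add_comm _ _
    have hd_zero : ∀ i, ∀ x, x ∉ K i → d i x = 0 := by
      intro i x hx
      have hx' : f x < (i : ℝ≥0) * ε := not_le.mp hx
      have h1 : f x ≤ (i : ℝ≥0) * ε := hx'.le
      have h2 : f x ≤ ((i+1 : ℕ) : ℝ≥0) * ε := by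
        refine h1.trans ?_
        gcongr
        exact_mod_cast Nat.le_succ i
      rw [hd_apply, min_eq_left h2, min_eq_left h1, tsub_self]
    have hup : ∀ i, (ε : ℝ≥0∞) * ν (K (i+1)) ≤ (Λ (d i) : ℝ≥0∞) := by
      intro i
      have h1 : ν (K (i+1)) ≤ (Λ (ε⁻¹ • d i) : ℝ≥0∞) := by
        refine rieszC_measure_le hmono _ (hKcl (i+1)) _ ?_
        intro x hx
        have hdx := hd_one i x hx
        calc (1 : ℝ≥0) = ε⁻¹ * ε := (inv_mul_cancel₀ hε.ne').symm
          _ ≤ ε⁻¹ * d i x := mul_le_mul_right hdx ε⁻¹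
          _ = (ε⁻¹ • d i) x := by simp
      have h2 : Λ (ε⁻¹ • d i) = ε⁻¹ * Λ (d i) := by rw [Λ.map_smul]; simp
      calc (ε : ℝ≥0∞) * ν (K (i+1)) ≤ (ε : ℝ≥0∞) * (Λ (ε⁻¹ • d i) : ℝ≥0∞) :=
            mul_le_mul_right h1 _
        _ = ((ε * (ε⁻¹ * Λ (d i)) : ℝ≥0) : ℝ≥0∞) := by rw [h2]; push_cast; ring
        _ = (Λ (d i) : ℝ≥0∞) := by rw [← mul_assoc, mul_inv_cancel₀ hε.ne', one_mul]
    have hdown : ∀ i, (Λ (d i) : ℝ≥0∞) ≤ (ε : ℝ≥0∞) * ν (K i) := by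
      intro i
      have h1 : (Λ (ε⁻¹ • d i) : ℝ≥0∞) ≤ ν (K i) := by
        refine rieszC_le_measure hmono _ (hKcl i) _ ?_ ?_
        · intro x
          have hdx := hd_le i x
          calc (ε⁻¹ • d i) x = ε⁻¹ * d i x := by simp
            _ ≤ ε⁻¹ * ε := mul_le_mul_right hdx ε⁻¹
            _ = 1 := inv_mul_cancel₀ hε.ne'
        · intro x hx
          simp [hd_zero i x hx]
      have h2 : Λ (ε⁻¹ • d i) = ε⁻¹ * Λ (d i) := by rw [Λ.map_smul]; simp
      calc (Λ (d i) : ℝ≥0∞) = ((ε * (ε⁻¹ * Λ (d i)) : ℝ≥0) : ℝ≥0∞) := by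
            rw [← mul_assoc, mul_inv_cancel₀ hε.ne', one_mul]
        _ = (ε : ℝ≥0∞) * (Λ (ε⁻¹ • d i) : ℝ≥0∞) := by rw [h2]; push_cast; ring
        _ ≤ (ε : ℝ≥0∞) * ν (K i) := mul_le_mul_right h1 _
    have hind : ∀ (m : ℕ) (J : ℕ → ℕ),
        ∫⁻ x, ∑ i ∈ Finset.range m, (K (J i)).indicator (fun _ => (ε : ℝ≥0∞)) x ∂ν
          = ∑ i ∈ Finset.range m, (ε : ℝ≥0∞) * ν (K (J i)) := by
      intro m J
      rw [MeasureTheory.lintegral_finset_sum]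
      · refine Finset.sum_congr rfl fun i _ => ?_
        rw [MeasureTheory.lintegral_indicator_const (hKcl (J i)).measurableSet]
      · exact fun i _ => measurable_const.indicator (hKcl (J i)).measurableSet
    have hfloor1 : ∀ x, ((⌊f x / ε⌋₊ : ℝ≥0)) * ε ≤ f x := by
      intro x
      have h := Nat.floor_le (zero_le : 0 ≤ f x / ε)
      calc ((⌊f x / ε⌋₊ : ℝ≥0)) * ε ≤ (f x / ε) * ε := mul_le_mul_left h ε
        _ = f x := div_mul_cancel₀ _ hε.ne'
    have hmemK : ∀ i x, x ∈ K i ↔ (i : ℝ≥0) * ε ≤ f x := fun i x => Iff.rfl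
    -- upper pointwise bound
    have hI2 : ∀ x, (f x : ℝ≥0∞) ≤
        ∑ i ∈ Finset.range (N+1), (K i).indicator (fun _ => (ε : ℝ≥0∞)) x := by
      intro x
      set j : ℕ := ⌊f x / ε⌋₊ with hjdef
      have hjN : j ≤ N := by
        have h1 : (j : ℝ≥0) * ε ≤ (N : ℝ≥0) * ε := (hfloor1 x).trans (hN x)
        have h2 : (j : ℝ≥0) ≤ (N : ℝ≥0) := le_of_mul_le_mul_right h1 hε
        exact_mod_cast h2
      have hfx : f x < ((j+1 : ℕ) : ℝ≥0) * ε := by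
        have h := Nat.lt_floor_add_one (f x / ε)
        rw [div_lt_iff₀ hε] at h
        calc f x < ((j : ℝ≥0) + 1) * ε := h
          _ = ((j+1 : ℕ) : ℝ≥0) * ε := by push_cast; ring
      have hnn : f x ≤ ∑ i ∈ Finset.range (N+1), (K i).indicator (fun _ => ε) x := by
        calc f x ≤ ((j+1 : ℕ) : ℝ≥0) * ε := hfx.le
          _ = ∑ i ∈ Finset.range (j+1), (K i).indicator (fun _ => ε) x := by
              have hall : ∀ i ∈ Finset.range (j+1),
                  (K i).indicator (fun _ => ε) x = ε := by
                intro i hi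
                have hij : i ≤ j := Nat.lt_succ_iff.mp (Finset.mem_range.mp hi)
                have hxK : x ∈ K i := by
                  rw [hmemK]
                  calc (i : ℝ≥0) * ε ≤ (j : ℝ≥0) * ε :=
                        mul_le_mul_left (by exact_mod_cast hij) ε
                    _ ≤ f x := hfloor1 x
                rw [Set.indicator_of_mem hxK]
              rw [Finset.sum_congr rfl hall, Finset.sum_const, Finset.card_range,
                nsmul_eq_mul]
          _ ≤ ∑ i ∈ Finset.range (N+1), (K i).indicator (fun _ => ε) x := by
              refine Finset.sum_le_sum_of_subset ?_
              exact Finset.range_subset_range.mpr (by omega)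
      calc (f x : ℝ≥0∞)
          ≤ ((∑ i ∈ Finset.range (N+1), (K i).indicator (fun _ => ε) x : ℝ≥0) : ℝ≥0∞) := by
            exact_mod_cast hnn
        _ = ∑ i ∈ Finset.range (N+1), (K i).indicator (fun _ => (ε : ℝ≥0∞)) x := by
            rw [ENNReal.coe_finset_sum]
            refine Finset.sum_congr rfl fun i _ => ?_
            by_cases hx : x ∈ K i <;> simp [Set.indicator, hx]
    -- lower pointwise bound
    have hI3 : ∀ x, ∑ i ∈ Finset.range M, (K (i+1)).indicator (fun _ => (ε : ℝ≥0∞)) x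
        ≤ (f x : ℝ≥0∞) := by
      intro x
      set j : ℕ := ⌊f x / ε⌋₊ with hjdef
      have hnn : ∑ i ∈ Finset.range M, (K (i+1)).indicator (fun _ => ε) x ≤ f x := by
        calc ∑ i ∈ Finset.range M, (K (i+1)).indicator (fun _ => ε) x
            ≤ ∑ i ∈ Finset.range M, (if i + 1 ≤ j then ε else 0) := by
              refine Finset.sum_le_sum fun i _ => ?_
              by_cases hx : x ∈ K (i+1)
              · have hij : i + 1 ≤ j := by
                  refine Nat.le_floor ?_
                  rw [le_div_iff₀ hε]
                  exact_mod_cast (hmemK (i+1) x).mp hx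
                rw [Set.indicator_of_mem hx, if_pos hij]
              · rw [Set.indicator_of_notMem hx]
                exact zero_le
          _ = ∑ i ∈ (Finset.range M).filter (fun i => i + 1 ≤ j), ε :=
              (Finset.sum_filter _ _).symm
          _ ≤ ∑ i ∈ Finset.range j, ε := by
              refine Finset.sum_le_sum_of_subset ?_
              intro i hi
              simp only [Finset.mem_filter, Finset.mem_range] at hi ⊢
              omega
          _ = (j : ℝ≥0) * ε := by
              rw [Finset.sum_const, Finset.card_range, nsmul_eq_mul]
          _ ≤ f x := hfloor1 x
      calc ∑ i ∈ Finset.range M, (K (i+1)).indicator (fun _ => (ε : ℝ≥0∞)) x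
          = ((∑ i ∈ Finset.range M, (K (i+1)).indicator (fun _ => ε) x : ℝ≥0) : ℝ≥0∞) := by
            rw [ENNReal.coe_finset_sum]
            refine Finset.sum_congr rfl fun i _ => ?_
            by_cases hx : x ∈ K (i+1) <;> simp [Set.indicator, hx]
        _ ≤ (f x : ℝ≥0∞) := by exact_mod_cast hnn
    have hcoe_sum : ∑ i ∈ Finset.range N, (Λ (d i) : ℝ≥0∞) = (Λ f : ℝ≥0∞) := by
      rw [← ENNReal.coe_finset_sum]
      norm_cast
      rw [← map_sum Λ d (Finset.range N), hsum_d]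
    constructor
    · calc ∫⁻ x, (f x : ℝ≥0∞) ∂ν
          ≤ ∫⁻ x, ∑ i ∈ Finset.range (N+1), (K i).indicator (fun _ => (ε : ℝ≥0∞)) x ∂ν :=
            MeasureTheory.lintegral_mono hI2
        _ = ∑ i ∈ Finset.range (N+1), (ε : ℝ≥0∞) * ν (K i) := hind (N+1) (fun i => i)
        _ = (∑ i ∈ Finset.range N, (ε : ℝ≥0∞) * ν (K (i+1))) + (ε : ℝ≥0∞) * ν (K 0) :=
            Finset.sum_range_succ' _ N
        _ ≤ (∑ i ∈ Finset.range N, (Λ (d i) : ℝ≥0∞)) + (ε : ℝ≥0∞) * Λ 1 := by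
            refine add_le_add (Finset.sum_le_sum fun i _ => hup i) ?_
            rw [hK0]
            exact mul_le_mul_right hν1 _
        _ = (Λ f : ℝ≥0∞) + (ε : ℝ≥0∞) * Λ 1 := by rw [hcoe_sum]
    · calc (Λ f : ℝ≥0∞) = ∑ i ∈ Finset.range N, (Λ (d i) : ℝ≥0∞) := hcoe_sum.symm
        _ ≤ ∑ i ∈ Finset.range N, (ε : ℝ≥0∞) * ν (K i) :=
            Finset.sum_le_sum fun i _ => hdown i
        _ = (∑ i ∈ Finset.range M, (ε : ℝ≥0∞) * ν (K (i+1))) + (ε : ℝ≥0∞) * ν (K 0) := by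
            rw [hM]
            exact Finset.sum_range_succ' _ M
        _ ≤ (∫⁻ x, (f x : ℝ≥0∞) ∂ν) + (ε : ℝ≥0∞) * Λ 1 := by
            refine add_le_add ?_ ?_
            · rw [← hind M (fun i => i+1)]
              exact MeasureTheory.lintegral_mono hI3
            · rw [hK0]
              exact mul_le_mul_right hν1 _
  -- conclude
  have hΛ1 : ((Λ 1 : ℝ≥0) + 1 : ℝ≥0) ≠ 0 := by positivity
  refine le_antisymm ?_ ?_
  · refine ENNReal.le_of_forall_pos_le_add fun ε' hε' _ => ?_
    have hpos : 0 < ε' / (Λ 1 + 1) := div_pos hε' (by positivity)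
    refine (main _ hpos).1.trans ?_
    gcongr
    calc ((ε' / (Λ 1 + 1) : ℝ≥0) : ℝ≥0∞) * (Λ 1 : ℝ≥0∞)
        = (((ε' / (Λ 1 + 1)) * Λ 1 : ℝ≥0) : ℝ≥0∞) := by push_cast; ring
      _ ≤ ((ε' : ℝ≥0) : ℝ≥0∞) := by
          refine ENNReal.coe_le_coe.mpr ?_
          calc (ε' / (Λ 1 + 1)) * Λ 1 ≤ (ε' / (Λ 1 + 1)) * (Λ 1 + 1) :=
                mul_le_mul_right (le_add_right le_rfl) _
            _ = ε' := div_mul_cancel₀ _ hΛ1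
  · refine ENNReal.le_of_forall_pos_le_add fun ε' hε' _ => ?_
    have hpos : 0 < ε' / (Λ 1 + 1) := div_pos hε' (by positivity)
    refine (main _ hpos).2.trans ?_
    gcongr
    calc ((ε' / (Λ 1 + 1) : ℝ≥0) : ℝ≥0∞) * (Λ 1 : ℝ≥0∞)
        = (((ε' / (Λ 1 + 1)) * Λ 1 : ℝ≥0) : ℝ≥0∞) := by push_cast; ring
      _ ≤ ((ε' : ℝ≥0) : ℝ≥0∞) := by
          refine ENNReal.coe_le_coe.mpr ?_
          calc (ε' / (Λ 1 + 1)) * Λ 1 ≤ (ε' / (Λ 1 + 1)) * (Λ 1 + 1) :=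
                mul_le_mul_right (le_add_right le_rfl) _
            _ = ε' := div_mul_cancel₀ _ hΛ1
end Part2
section Part3
open BoundedContinuousFunction Set TopologicalSpace Filter Topology
variable {X : Type*} [TopologicalSpace X] [CompactSpace X] [T2Space X]
  [MeasurableSpace X] [BorelSpace X]

theorem compactSpace_probabilityMeasure [Nonempty X] :
    CompactSpace (ProbabilityMeasure X) := by
  rw [← isCompact_univ_iff, isCompact_iff_ultrafilter_le_nhds]
  intro 𝒰 _
  set I : (X →ᵇ ℝ≥0) → ProbabilityMeasure X → ℝ≥0∞ :=
    fun f μ => ∫⁻ x, (f x : ℝ≥0∞) ∂(μ : MeasureTheory.Measure X) with hIdef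
  have hmeas : ∀ f : X →ᵇ ℝ≥0, Measurable (fun x => (f x : ℝ≥0∞)) := fun f =>
    measurable_coe_nnreal_ennreal.comp f.continuous.measurable
  set L : (X →ᵇ ℝ≥0) → ℝ≥0∞ := fun f => (𝒰.map (I f)).lim with hLdef
  have hL : ∀ f, Tendsto (I f) 𝒰 (𝓝 (L f)) := fun f => (𝒰.map (I f)).le_nhds_lim
  have hbound : ∀ (f : X →ᵇ ℝ≥0) (μ : ProbabilityMeasure X), I f μ ≤ (nndist 0 f : ℝ≥0∞) := by
    intro f μ
    have hb : ∀ x, (f x : ℝ≥0∞) ≤ (nndist 0 f : ℝ≥0∞) := fun x =>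
      ENNReal.coe_le_coe.mpr (f.apply_le_nndist_zero x)
    calc I f μ ≤ ∫⁻ _, (nndist 0 f : ℝ≥0∞) ∂(μ : MeasureTheory.Measure X) :=
          MeasureTheory.lintegral_mono hb
      _ = (nndist 0 f : ℝ≥0∞) := by
          rw [MeasureTheory.lintegral_const, MeasureTheory.measure_univ, mul_one]
  have hfin : ∀ f, L f ≠ ∞ := by
    intro f
    have : L f ≤ (nndist 0 f : ℝ≥0∞) := le_of_tendsto (hL f) (Eventually.of_forall (hbound f))
    exact (this.trans_lt ENNReal.coe_lt_top).ne
  have hLadd : ∀ f g, L (f + g) = L f + L g := by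
    intro f g
    refine tendsto_nhds_unique (hL (f + g)) ?_
    have h1 : Tendsto (fun μ => I f μ + I g μ) 𝒰 (𝓝 (L f + L g)) := (hL f).add (hL g)
    have heq : I (f + g) = fun μ => I f μ + I g μ := by
      funext μ
      show (∫⁻ x, ((f + g) x : ℝ≥0∞) ∂(μ : MeasureTheory.Measure X)) = _
      have hpt : (fun x : X => (((f + g) x : ℝ≥0) : ℝ≥0∞))
          = fun x => (f x : ℝ≥0∞) + (g x : ℝ≥0∞) := by
        funext x
        push_cast
        simp
      rw [hpt, MeasureTheory.lintegral_add_left (hmeas f)]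
    rw [heq]
    exact h1
  have hLsmul : ∀ (c : ℝ≥0) (f : X →ᵇ ℝ≥0), L (c • f) = (c : ℝ≥0∞) * L f := by
    intro c f
    refine tendsto_nhds_unique (hL (c • f)) ?_
    have h1 : Tendsto (fun μ => (c : ℝ≥0∞) * I f μ) 𝒰 (𝓝 ((c : ℝ≥0∞) * L f)) :=
      ENNReal.Tendsto.const_mul (hL f) (Or.inr ENNReal.coe_ne_top)
    have heq : I (c • f) = fun μ => (c : ℝ≥0∞) * I f μ := by
      funext μ
      show (∫⁻ x, ((c • f) x : ℝ≥0∞) ∂(μ : MeasureTheory.Measure X)) = _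
      have hpt : (fun x : X => (((c • f) x : ℝ≥0) : ℝ≥0∞))
          = fun x => (c : ℝ≥0∞) * (f x : ℝ≥0∞) := by
        funext x
        push_cast
        simp
      rw [hpt, MeasureTheory.lintegral_const_mul _ (hmeas f)]
    rw [heq]
    exact h1
  have hLone : L 1 = 1 := by
    refine tendsto_nhds_unique (hL 1) ?_
    have : I 1 = fun _ => (1 : ℝ≥0∞) := by
      funext μ
      simp only [hIdef]
      rw [show (fun x : X => ((1 : X →ᵇ ℝ≥0) x : ℝ≥0∞)) = fun _ => (1 : ℝ≥0∞) by
        funext x; simp]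
      rw [MeasureTheory.lintegral_one, MeasureTheory.measure_univ]
    rw [this]
    exact tendsto_const_nhds
  set Λ : (X →ᵇ ℝ≥0) →ₗ[ℝ≥0] ℝ≥0 :=
    { toFun := fun f => (L f).toNNReal
      map_add' := by
        intro f g
        show (L (f + g)).toNNReal = (L f).toNNReal + (L g).toNNReal
        rw [hLadd]
        exact ENNReal.toNNReal_add (hfin f) (hfin g)
      map_smul' := by
        intro c f
        show (L (c • f)).toNNReal = c • (L f).toNNReal
        rw [hLsmul]
        simp [ENNReal.toNNReal_mul] } with hΛdef
  have hΛcoe : ∀ f, (Λ f : ℝ≥0∞) = L f := fun f => ENNReal.coe_toNNReal (hfin f)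
  have hmono : ∀ f g : X →ᵇ ℝ≥0, (∀ x, f x ≤ g x) → Λ f ≤ Λ g := by
    intro f g h
    have h2 : L f ≤ L g := by
      refine le_of_tendsto_of_tendsto' (hL f) (hL g) fun μ => ?_
      exact MeasureTheory.lintegral_mono fun x => ENNReal.coe_le_coe.mpr (h x)
    rw [← ENNReal.coe_le_coe, hΛcoe, hΛcoe]
    exact h2
  set ν := (rieszC Λ hmono).measure with hνdef
  have hint : ∀ f : X →ᵇ ℝ≥0, ∫⁻ x, (f x : ℝ≥0∞) ∂ν = L f := by
    intro f
    rw [lintegral_rieszC hmono f, hΛcoe]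
  have hprob : MeasureTheory.IsProbabilityMeasure ν := by
    constructor
    have h1 : ∫⁻ x, ((1 : X →ᵇ ℝ≥0) x : ℝ≥0∞) ∂ν = L 1 := hint 1
    rw [show (fun x : X => ((1 : X →ᵇ ℝ≥0) x : ℝ≥0∞)) = fun _ => (1 : ℝ≥0∞) by
      funext x; simp] at h1
    rw [MeasureTheory.lintegral_one] at h1
    rw [h1, hLone]
  refine ⟨⟨ν, hprob⟩, mem_univ _, ?_⟩
  have : Tendsto (id : ProbabilityMeasure X → ProbabilityMeasure X) 𝒰
      (𝓝 (⟨ν, hprob⟩ : ProbabilityMeasure X)) := by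
    refine MeasureTheory.ProbabilityMeasure.tendsto_iff_forall_lintegral_tendsto.mpr ?_
    intro f
    have := hL f
    rw [← hint f] at this
    exact this
  exact this
end Part3

end ChoquetAux

/-- The Choquet order on probability measures on `S`: `μ ≺ ν` iff `∫ h dμ ≤ ∫ h dν` for
every continuous convex real-valued function `h` on `S`. -/
def ChoquetLE {V : Type*} [AddCommGroup V] [Module ℝ V] [TopologicalSpace V]
    [MeasurableSpace V] {S : Set V} (μ ν : ProbabilityMeasure ↥S) : Prop :=
  ∀ h : V → ℝ, ContinuousOn h S → ConvexOn ℝ S h →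
    ∫ φ : ↥S, h (φ : V) ∂(μ : Measure ↥S) ≤ ∫ φ : ↥S, h (φ : V) ∂(ν : Measure ↥S)

/-- For a continuous convex `g` on `S` and `ω ∈ S`, the set
`F₀ = {μ ∈ M_ω(S) : ∫ g dμ = sup_{ν ∈ M_ω(S)} ∫ g dν}` is a nonempty closed face of
`M_ω(S)` which is hereditary upwards for the Choquet order. -/
theorem F0_nonempty_closed_face_hereditary
    {V : Type*} [AddCommGroup V] [Module ℝ V] [TopologicalSpace V]
    [IsTopologicalAddGroup V] [ContinuousSMul ℝ V] [T2Space V] [LocallyConvexSpace ℝ V]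
    [MeasurableSpace V] [BorelSpace V]
    (S : Set V) (hSne : S.Nonempty) (hScpt : IsCompact S) (hSconv : Convex ℝ S)
    (g : V → ℝ) (hgc : ContinuousOn g S) (hgx : ConvexOn ℝ S g) (ω : V) (hω : ω ∈ S) :
    ∀ F : Set (ProbabilityMeasure ↥S),
      F = {μ : ProbabilityMeasure ↥S | HasBarycenter μ ω ∧
            ∫ φ : ↥S, g (φ : V) ∂(μ : Measure ↥S)
              = sSup ((fun ν : ProbabilityMeasure ↥S =>
                  ∫ φ : ↥S, g (φ : V) ∂(ν : Measure ↥S)) ''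
                  {ν : ProbabilityMeasure ↥S | HasBarycenter ν ω})} →
      -- nonempty
      F.Nonempty ∧
      -- closed
      IsClosed F ∧
      -- convex
      (∀ μ₁ ∈ F, ∀ μ₂ ∈ F, ∀ a b : ℝ≥0∞, a + b = 1 →
        ∀ ν : ProbabilityMeasure ↥S,
          (ν : Measure ↥S) = a • (μ₁ : Measure ↥S) + b • (μ₂ : Measure ↥S) → ν ∈ F) ∧
      -- extreme (face of `M_ω(S)`)
      (∀ μ₁ μ₂ : ProbabilityMeasure ↥S, HasBarycenter μ₁ ω → HasBarycenter μ₂ ω →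
        ∀ a b : ℝ≥0∞, a ≠ 0 → b ≠ 0 → a + b = 1 → ∀ ν ∈ F,
          (ν : Measure ↥S) = a • (μ₁ : Measure ↥S) + b • (μ₂ : Measure ↥S) →
          μ₁ ∈ F ∧ μ₂ ∈ F) ∧
      -- hereditary upwards with respect to the Choquet order
      (∀ μ ∈ F, ∀ ν : ProbabilityMeasure ↥S, HasBarycenter ν ω → ChoquetLE μ ν → ν ∈ F) := by
  intro F hF
  haveI : CompactSpace ↥S := isCompact_iff_compactSpace.mp hScpt
  haveI : Nonempty ↥S := hSne.to_subtype
  haveI : CompactSpace (ProbabilityMeasure ↥S) := ChoquetAux.compactSpace_probabilityMeasure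
  -- notation
  set I : ProbabilityMeasure ↥S → ℝ :=
    fun μ => ∫ φ : ↥S, g (φ : V) ∂(μ : Measure ↥S) with hIdef
  set M : Set (ProbabilityMeasure ↥S) := {μ : ProbabilityMeasure ↥S | HasBarycenter μ ω}
    with hMdef
  have hFdef : F = {μ : ProbabilityMeasure ↥S | μ ∈ M ∧ I μ = sSup (I '' M)} := hF
  clear hF
  -- continuity of `I`
  set gb : BoundedContinuousFunction ↥S ℝ := BoundedContinuousFunction.mkOfCompact ⟨S.restrict g, hgc.restrict⟩
    with hgbdef
  have hIc : Continuous I :=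
    MeasureTheory.ProbabilityMeasure.continuous_integral_boundedContinuousFunction
      (X := ↥S) gb
  -- continuity of integration against functionals
  have hlc : ∀ ℓ : V →L[ℝ] ℝ, Continuous
      (fun μ : ProbabilityMeasure ↥S => ∫ φ : ↥S, ℓ (φ : V) ∂(μ : Measure ↥S)) := fun ℓ =>
    MeasureTheory.ProbabilityMeasure.continuous_integral_boundedContinuousFunction
      (X := ↥S) (BoundedContinuousFunction.mkOfCompact
        ⟨fun x : ↥S => ℓ (x : V), ℓ.continuous.comp continuous_subtype_val⟩)
  -- `M` is closed
  have hMclosed : IsClosed M := by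
    have : M = ⋂ ℓ : V →L[ℝ] ℝ,
        {μ : ProbabilityMeasure ↥S | ℓ ω = ∫ φ : ↥S, ℓ (φ : V) ∂(μ : Measure ↥S)} := by
      ext μ
      simp only [hMdef, Set.mem_setOf_eq, Set.mem_iInter, HasBarycenter]
    rw [this]
    exact isClosed_iInter fun ℓ => isClosed_eq continuous_const (hlc ℓ)
  -- `M` is nonempty: the Dirac measure at `ω`
  have hMne : M.Nonempty := by
    refine ⟨⟨MeasureTheory.Measure.dirac (⟨ω, hω⟩ : ↥S), inferInstance⟩, ?_⟩
    intro ℓ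
    have hsm : MeasureTheory.StronglyMeasurable (fun φ : ↥S => ℓ (φ : V)) :=
      (ℓ.continuous.comp continuous_subtype_val).stronglyMeasurable
    show ℓ ω = ∫ φ : ↥S, ℓ (φ : V) ∂(MeasureTheory.Measure.dirac (⟨ω, hω⟩ : ↥S))
    rw [MeasureTheory.integral_dirac' _ _ hsm]
  -- the image is bounded above
  have hbdd : BddAbove (I '' M) := by
    refine ⟨‖gb‖, ?_⟩
    rintro r ⟨μ, -, rfl⟩
    have h1 : ‖∫ x, gb x ∂(μ : Measure ↥S)‖ ≤ ‖gb‖ :=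
      BoundedContinuousFunction.norm_integral_le_norm ((μ : Measure ↥S)) gb
    calc I μ ≤ ‖I μ‖ := le_abs_self _
      _ ≤ ‖gb‖ := h1
  -- the supremum is attained
  obtain ⟨μ₀, hμ₀M, hμ₀⟩ := hMclosed.isCompact.exists_sSup_image_eq hMne hIc.continuousOn
  -- the combination formula
  have hcomb : ∀ (μ₁ μ₂ ν : ProbabilityMeasure ↥S) (a b : ℝ≥0∞), a + b = 1 →
      (ν : Measure ↥S) = a • (μ₁ : Measure ↥S) + b • (μ₂ : Measure ↥S) →
      ∀ h : ↥S → ℝ, Continuous h →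
      ∫ x, h x ∂(ν : Measure ↥S) =
        a.toReal * ∫ x, h x ∂(μ₁ : Measure ↥S) + b.toReal * ∫ x, h x ∂(μ₂ : Measure ↥S) := by
    intro μ₁ μ₂ ν a b hab hν h hc
    have ha : a ≠ ∞ := by
      rintro rfl
      simp at hab
    have hb : b ≠ ∞ := by
      rintro rfl
      simp at hab
    haveI i1 : MeasureTheory.IsFiniteMeasure (a • (μ₁ : Measure ↥S)) := by
      constructor
      rw [MeasureTheory.Measure.smul_apply, MeasureTheory.measure_univ, smul_eq_mul, mul_one]
      exact ha.lt_top
    haveI i2 : MeasureTheory.IsFiniteMeasure (b • (μ₂ : Measure ↥S)) := by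
      constructor
      rw [MeasureTheory.Measure.smul_apply, MeasureTheory.measure_univ, smul_eq_mul, mul_one]
      exact hb.lt_top
    have hint1 : MeasureTheory.Integrable h (a • (μ₁ : Measure ↥S)) :=
      (BoundedContinuousFunction.mkOfCompact ⟨h, hc⟩).integrable _
    have hint2 : MeasureTheory.Integrable h (b • (μ₂ : Measure ↥S)) :=
      (BoundedContinuousFunction.mkOfCompact ⟨h, hc⟩).integrable _
    rw [hν, MeasureTheory.integral_add_measure hint1 hint2,
      MeasureTheory.integral_smul_measure, MeasureTheory.integral_smul_measure,
      smul_eq_mul, smul_eq_mul]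
  have habr : ∀ a b : ℝ≥0∞, a + b = 1 → a.toReal + b.toReal = 1 := by
    intro a b hab
    have ha : a ≠ ∞ := by rintro rfl; simp at hab
    have hb : b ≠ ∞ := by rintro rfl; simp at hab
    rw [← ENNReal.toReal_add ha hb, hab, ENNReal.toReal_one]
  have hgcont : Continuous (fun x : ↥S => g (x : V)) := hgc.restrict
  refine ⟨?_, ?_, ?_, ?_, ?_⟩
  -- nonempty
  · refine ⟨μ₀, ?_⟩
    rw [hFdef]
    exact ⟨hμ₀M, hμ₀.symm⟩
  -- closed
  · rw [hFdef]
    have : {μ : ProbabilityMeasure ↥S | μ ∈ M ∧ I μ = sSup (I '' M)}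
        = M ∩ {μ | I μ = sSup (I '' M)} := rfl
    rw [this]
    exact hMclosed.inter (isClosed_eq hIc continuous_const)
  -- convex
  · intro μ₁ h1 μ₂ h2 a b hab ν hν
    rw [hFdef] at h1 h2 ⊢
    obtain ⟨hb1, hv1⟩ := h1
    obtain ⟨hb2, hv2⟩ := h2
    have hab' := habr a b hab
    have hbν : HasBarycenter ν ω := by
      intro ℓ
      rw [show (∫ φ : ↥S, ℓ (φ : V) ∂(ν : Measure ↥S)) =
          a.toReal * ∫ x : ↥S, ℓ (x : V) ∂(μ₁ : Measure ↥S)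
            + b.toReal * ∫ x : ↥S, ℓ (x : V) ∂(μ₂ : Measure ↥S) from
        hcomb μ₁ μ₂ ν a b hab hν _ (ℓ.continuous.comp continuous_subtype_val)]
      rw [← hb1 ℓ, ← hb2 ℓ, ← add_mul, hab', one_mul]
    refine ⟨hbν, ?_⟩
    have : I ν = a.toReal * I μ₁ + b.toReal * I μ₂ :=
      hcomb μ₁ μ₂ ν a b hab hν _ hgcont
    rw [this, hv1, hv2, ← add_mul, hab', one_mul]
  -- extreme
  · intro μ₁ μ₂ hbar1 hbar2 a b ha0 hb0 hab ν hνF hν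
    rw [hFdef] at hνF
    obtain ⟨hbν, hvν⟩ := hνF
    have ha : a ≠ ∞ := by rintro rfl; simp at hab
    have hb : b ≠ ∞ := by rintro rfl; simp at hab
    have ha' : 0 < a.toReal := ENNReal.toReal_pos ha0 ha
    have hb' : 0 < b.toReal := ENNReal.toReal_pos hb0 hb
    have hab' := habr a b hab
    have key : sSup (I '' M) = a.toReal * I μ₁ + b.toReal * I μ₂ := by
      rw [← hvν]
      exact hcomb μ₁ μ₂ ν a b hab hν _ hgcont
    have hle1 : I μ₁ ≤ sSup (I '' M) := le_csSup hbdd ⟨μ₁, hbar1, rfl⟩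
    have hle2 : I μ₂ ≤ sSup (I '' M) := le_csSup hbdd ⟨μ₂, hbar2, rfl⟩
    have heq1 : I μ₁ = sSup (I '' M) := by
      by_contra hne
      have hlt : I μ₁ < sSup (I '' M) := lt_of_le_of_ne hle1 hne
      have : sSup (I '' M) < sSup (I '' M) := by
        calc sSup (I '' M) = a.toReal * I μ₁ + b.toReal * I μ₂ := key
          _ < a.toReal * sSup (I '' M) + b.toReal * sSup (I '' M) := by
              refine add_lt_add_of_lt_of_le ?_ ?_
              · exact mul_lt_mul_of_pos_left hlt ha'
              · exact mul_le_mul_of_nonneg_left hle2 hb'.le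
          _ = sSup (I '' M) := by rw [← add_mul, hab', one_mul]
      exact absurd this (lt_irrefl _)
    have heq2 : I μ₂ = sSup (I '' M) := by
      by_contra hne
      have hlt : I μ₂ < sSup (I '' M) := lt_of_le_of_ne hle2 hne
      have : sSup (I '' M) < sSup (I '' M) := by
        calc sSup (I '' M) = a.toReal * I μ₁ + b.toReal * I μ₂ := key
          _ < a.toReal * sSup (I '' M) + b.toReal * sSup (I '' M) := by
              refine add_lt_add_of_le_of_lt ?_ ?_
              · exact mul_le_mul_of_nonneg_left hle1 ha'.le
              · exact mul_lt_mul_of_pos_left hlt hb'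
          _ = sSup (I '' M) := by rw [← add_mul, hab', one_mul]
      exact absurd this (lt_irrefl _)
    constructor
    · rw [hFdef]
      exact ⟨hbar1, heq1⟩
    · rw [hFdef]
      exact ⟨hbar2, heq2⟩
  -- hereditary upwards
  · intro μ hμ ν hbν hch
    rw [hFdef] at hμ ⊢
    obtain ⟨hbμ, hvμ⟩ := hμ
    refine ⟨hbν, le_antisymm (le_csSup hbdd ⟨ν, hbν, rfl⟩) ?_⟩
    calc sSup (I '' M) = I μ := hvμ.symm
      _ ≤ I ν := hch g hgc hgx
end

section
/- Let V be a Hausdorff locally convex real topological vector space, S ⊆ V a nonempty compact convex subset, f : S → ℝ a continuous function, and ω ∈ S. Then inf_{μ ∈ M_ω(S)} ∫_S f dμ = inf { Σ_{i=1}^n λᵢ f(νᵢ) : n ∈ ℕ, λᵢ ≥ 0, Σᵢ λᵢ = 1, νᵢ ∈ S, ω = Σᵢ λᵢ νᵢ }; that is, the infimum over all probability measures with barycenter ω equals the infimum over all finite convex decompositions of ω. -/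
open MeasureTheory
open scoped ENNReal NNReal

lemma exists_barycenter_aux
    {V : Type*} [AddCommGroup V] [Module ℝ V] [TopologicalSpace V]
    [IsTopologicalAddGroup V] [ContinuousSMul ℝ V] [T2Space V]
    [MeasurableSpace V] [BorelSpace V]
    {S : Set V} (hScpt : IsCompact S)
    {K : Set V} (hKcpt : IsCompact K) (hKconv : Convex ℝ K)
    (μ : Measure ↥S) [IsProbabilityMeasure μ]
    (hae : ∀ᵐ (φ : ↥S) ∂μ, (φ : V) ∈ K) :
    ∃ ν ∈ K, ∀ ℓ : V →L[ℝ] ℝ, ℓ ν = ∫ φ : ↥S, ℓ (φ : V) ∂μ := by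
  haveI : CompactSpace ↥S := isCompact_iff_compactSpace.mp hScpt
  set C : (V →L[ℝ] ℝ) → Set V := fun ℓ => {v | ℓ v = ∫ φ : ↥S, ℓ (φ : V) ∂μ} with hC
  have hCclosed : ∀ ℓ, IsClosed (C ℓ) := fun ℓ => isClosed_eq ℓ.continuous continuous_const
  have key : ∀ u : Finset (V →L[ℝ] ℝ), (K ∩ ⋂ ℓ ∈ u, C ℓ).Nonempty := by
    intro u
    set T : V →L[ℝ] (↥u → ℝ) := ContinuousLinearMap.pi (fun i => (i : V →L[ℝ] ℝ)) with hT
    set g : ↥S → (↥u → ℝ) := fun φ => T (φ : V) with hg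
    have hgc : Continuous g := T.continuous.comp continuous_subtype_val
    have hgi : Integrable g μ :=
      hgc.integrable_of_hasCompactSupport ((isClosed_tsupport g).isCompact)
    have hmem : (∫ φ, g φ ∂μ) ∈ T '' K := by
      refine Convex.integral_mem ?_ ?_ ?_ hgi
      · have := hKconv.linear_image (T : V →ₗ[ℝ] (↥u → ℝ))
        simpa using this
      · exact (hKcpt.image T.continuous).isClosed
      · exact hae.mono fun φ h => Set.mem_image_of_mem _ h
    obtain ⟨v, hvK, hv⟩ := hmem
    refine ⟨v, hvK, Set.mem_iInter₂.2 fun ℓ hℓ => ?_⟩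
    have h1 : T v ⟨ℓ, hℓ⟩ = (∫ φ, g φ ∂μ) ⟨ℓ, hℓ⟩ := by rw [hv]
    have h2 : (∫ φ, g φ ∂μ) ⟨ℓ, hℓ⟩ = ∫ φ : ↥S, g φ ⟨ℓ, hℓ⟩ ∂μ := by
      have := (ContinuousLinearMap.proj (R := ℝ) (φ := fun _ : ↥u => ℝ)
        ⟨ℓ, hℓ⟩).integral_comp_comm hgi
      simpa using this.symm
    simp only [hC, Set.mem_setOf_eq]
    calc ℓ v = T v ⟨ℓ, hℓ⟩ := rfl
    _ = ∫ φ : ↥S, g φ ⟨ℓ, hℓ⟩ ∂μ := h1.trans h2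
    _ = ∫ φ : ↥S, ℓ (φ : V) ∂μ := rfl
  obtain ⟨ν, hνK, hν⟩ := hKcpt.inter_iInter_nonempty C hCclosed key
  exact ⟨ν, hνK, fun ℓ => Set.mem_iInter.1 hν ℓ⟩

lemma exists_decomposition
    {V : Type*} [AddCommGroup V] [Module ℝ V] [TopologicalSpace V]
    [IsTopologicalAddGroup V] [ContinuousSMul ℝ V] [T2Space V] [LocallyConvexSpace ℝ V]
    [MeasurableSpace V] [BorelSpace V]
    (S : Set V) (hScpt : IsCompact S) (hSconv : Convex ℝ S)
    (f : ↥S → ℝ) (hf : Continuous f) (ω : V)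
    (μ : ProbabilityMeasure ↥S) (hμ : HasBarycenter μ ω)
    {ε : ℝ} (hε : 0 < ε) :
    ∃ (n : ℕ) (l : Fin n → ℝ) (ν : Fin n → ↥S),
      (∀ i, 0 ≤ l i) ∧ (∑ i, l i) = 1 ∧ (∑ i, l i • (ν i : V)) = ω ∧
      (∑ i, l i * f (ν i)) ≤ (∫ φ : ↥S, f φ ∂(μ : Measure ↥S)) + ε := by
  classical
  haveI : CompactSpace ↥S := isCompact_iff_compactSpace.mp hScpt
  set m : Measure ↥S := (μ : Measure ↥S) with hm
  -- Step 1: good convex open neighborhoods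
  have hU : ∀ x : ↥S, ∃ U : Set V, IsOpen U ∧ Convex ℝ U ∧ (x : V) ∈ U ∧
      ∀ y : ↥S, (y : V) ∈ U → |f y - f x| ≤ ε / 2 := by
    intro x
    have hW : f ⁻¹' (Metric.ball (f x) (ε / 2)) ∈ nhds x :=
      hf.continuousAt.preimage_mem_nhds (Metric.ball_mem_nhds _ (by positivity))
    rw [nhds_induced, Filter.mem_comap] at hW
    obtain ⟨O, hO, hOsub⟩ := hW
    obtain ⟨s, hs, hssub⟩ := ((LocallyConvexSpace.convex_basis (𝕜 := ℝ) (x : V)).mem_iff).1 hO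
    refine ⟨interior s, isOpen_interior, hs.2.interior, mem_interior_iff_mem_nhds.2 hs.1, ?_⟩
    intro y hy
    have : y ∈ Subtype.val ⁻¹' O := hssub (interior_subset hy)
    have := hOsub this
    simp only [Set.mem_preimage, Metric.mem_ball, Real.dist_eq] at this
    exact le_of_lt this
  choose U hUopen hUconv hUmem hUf using hU
  -- Step 2: finite subcover
  have hcover : S ⊆ ⋃ x : ↥S, U x := fun z hz => Set.mem_iUnion.2 ⟨⟨z, hz⟩, hUmem ⟨z, hz⟩⟩
  obtain ⟨t, ht⟩ := hScpt.elim_finite_subcover U hUopen hcover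
  set n := t.card with hn
  set x : Fin n → ↥S := fun i => (t.equivFin.symm i : ↥S) with hx
  -- Step 3: disjointified pieces
  set P : Fin n → Set ↥S := fun i => Subtype.val ⁻¹' (U (x i)) with hP
  have hPmeas : ∀ i, MeasurableSet (P i) :=
    fun i => ((hUopen (x i)).preimage continuous_subtype_val).measurableSet
  have hPcover : ∀ φ : ↥S, ∃ i, φ ∈ P i := by
    intro φ
    have := ht φ.2
    simp only [Set.mem_iUnion] at this
    obtain ⟨y, hy, hmem⟩ := this
    refine ⟨t.equivFin ⟨y, hy⟩, ?_⟩
    simp only [hP, Set.mem_preimage, hx, Equiv.symm_apply_apply]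
    exact hmem
  set B : Fin n → Set ↥S := fun i => P i \ ⋃ j, ⋃ (_ : j < i), P j with hB
  have hBsub : ∀ i, B i ⊆ P i := fun i => Set.diff_subset
  have hBmeas : ∀ i, MeasurableSet (B i) := fun i =>
    (hPmeas i).diff (MeasurableSet.iUnion fun j => MeasurableSet.iUnion fun _ => hPmeas j)
  have hBd : ∀ i j : Fin n, i < j → Disjoint (B i) (B j) := by
    intro i j hij
    refine Set.disjoint_left.2 fun φ hφi hφj => ?_
    exact hφj.2 (Set.mem_iUnion.2 ⟨i, Set.mem_iUnion.2 ⟨hij, hφi.1⟩⟩)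
  have hBdisj : Pairwise (Function.onFun Disjoint B) := fun i j hij =>
    hij.lt_or_gt.elim (fun h => hBd i j h) (fun h => (hBd j i h).symm)
  have hBunion : (⋃ i, B i) = Set.univ := by
    ext φ
    simp only [Set.mem_univ, iff_true, Set.mem_iUnion]
    obtain ⟨i₀, hi₀, hmin⟩ := Finset.exists_min_image
      (Finset.univ.filter (fun i => φ ∈ P i)) id
      (by obtain ⟨i, hi⟩ := hPcover φ; exact ⟨i, Finset.mem_filter.2 ⟨Finset.mem_univ _, hi⟩⟩)
    refine ⟨i₀, (Finset.mem_filter.1 hi₀).2, fun hmem => ?_⟩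
    obtain ⟨j, hjlt⟩ := Set.mem_iUnion.1 hmem
    obtain ⟨hj, hjP⟩ := Set.mem_iUnion.1 hjlt
    exact absurd (hmin j (Finset.mem_filter.2 ⟨Finset.mem_univ _, hjP⟩)) (not_le.2 hj)
  -- Step 4: integrability
  have hfint : Integrable f m :=
    hf.integrable_of_hasCompactSupport ((isClosed_tsupport f).isCompact)
  have hlint : ∀ ℓ : V →L[ℝ] ℝ, Integrable (fun φ : ↥S => ℓ (φ : V)) m := fun ℓ => by
    have hc : Continuous (fun φ : ↥S => ℓ (φ : V)) := ℓ.continuous.comp continuous_subtype_val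
    exact hc.integrable_of_hasCompactSupport ((isClosed_tsupport _).isCompact)
  -- Step 5: weights and barycenters of the pieces
  set l : Fin n → ℝ := fun i => (m (B i)).toReal with hl
  have hl0 : ∀ i, 0 ≤ l i := fun i => ENNReal.toReal_nonneg
  have hν : ∀ i, ∃ ν : ↥S,
      (∀ ℓ : V →L[ℝ] ℝ, ∫ φ in B i, ℓ (φ : V) ∂m = l i * ℓ (ν : V)) ∧
      l i * f ν ≤ (∫ φ in B i, f φ ∂m) + l i * ε := by
    intro i
    by_cases h0 : m (B i) = 0
    · refine ⟨x i, fun ℓ => ?_, ?_⟩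
      · rw [Measure.restrict_eq_zero.2 h0, integral_zero_measure]
        simp [hl, h0]
      · rw [Measure.restrict_eq_zero.2 h0, integral_zero_measure]
        simp [hl, h0]
    · have hl_ne : l i ≠ 0 := ENNReal.toReal_ne_zero.2 ⟨h0, measure_ne_top m _⟩
      set K := closure (convexHull ℝ (Subtype.val '' B i)) with hK
      have hKsubUS : convexHull ℝ (Subtype.val '' B i) ⊆ U (x i) ∩ S := by
        refine convexHull_min ?_ ((hUconv (x i)).inter hSconv)
        rintro - ⟨φ, hφ, rfl⟩
        exact ⟨hBsub i hφ, φ.2⟩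
      have hKS : K ⊆ S := by
        have h1 : K ⊆ closure S := closure_mono (hKsubUS.trans Set.inter_subset_right)
        rwa [hScpt.isClosed.closure_eq] at h1
      have hKcpt : IsCompact K := hScpt.of_isClosed_subset isClosed_closure hKS
      have hKconv : Convex ℝ K := (convex_convexHull ℝ _).closure
      set μi : Measure ↥S := (m (B i))⁻¹ • m.restrict (B i) with hμi
      haveI : IsProbabilityMeasure μi := ⟨by
        rw [hμi, Measure.smul_apply, Measure.restrict_apply_univ, smul_eq_mul,
          ENNReal.inv_mul_cancel h0 (measure_ne_top _ _)]⟩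
      have hae : ∀ᵐ (φ : ↥S) ∂μi, (φ : V) ∈ K := by
        have h1 : ∀ᵐ (φ : ↥S) ∂(m.restrict (B i)), φ ∈ B i := ae_restrict_mem (hBmeas i)
        filter_upwards [Measure.ae_smul_measure h1 ((m (B i))⁻¹)] with φ hφ
        exact subset_closure (subset_convexHull ℝ _ (Set.mem_image_of_mem _ hφ))
      obtain ⟨ν, hνK, hνbar⟩ := exists_barycenter_aux hScpt hKcpt hKconv μi hae
      have hrestr : ∀ g : ↥S → ℝ, (∫ φ, g φ ∂μi) = (l i)⁻¹ * ∫ φ in B i, g φ ∂m := by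
        intro g
        rw [hμi, integral_smul_measure, ENNReal.toReal_inv, smul_eq_mul, hl]
      refine ⟨⟨ν, hKS hνK⟩, fun ℓ => ?_, ?_⟩
      · have h2 : ℓ ν = (l i)⁻¹ * ∫ φ in B i, ℓ (φ : V) ∂m := (hνbar ℓ).trans (hrestr _)
        rw [h2, ← mul_assoc, mul_inv_cancel₀ hl_ne, one_mul]
      · -- f value estimate
        have hνf : f ⟨ν, hKS hνK⟩ ≤ f (x i) + ε / 2 := by
          set G : Set V := Subtype.val '' {y : ↥S | f y ≤ f (x i) + ε / 2} with hG
          have hGclosed : IsClosed G :=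
            (((isClosed_le hf continuous_const).isCompact).image continuous_subtype_val).isClosed
          have hsubG : convexHull ℝ (Subtype.val '' B i) ⊆ G := by
            intro z hz
            obtain ⟨hzU, hzS⟩ := hKsubUS hz
            have := hUf (x i) ⟨z, hzS⟩ hzU
            refine ⟨⟨z, hzS⟩, ?_, rfl⟩
            simp only [Set.mem_setOf_eq]
            have h2 := abs_le.1 this
            linarith [h2.2]
          have hνG : ν ∈ G := closure_minimal hsubG hGclosed hνK
          obtain ⟨y, hy, hyv⟩ := hνG
          have hyeq : y = ⟨ν, hKS hνK⟩ := Subtype.ext hyv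
          rw [← hyeq]
          exact hy
        have hlow : (f (x i) - ε / 2) * (m (B i)).toReal ≤ ∫ φ in B i, f φ ∂m := by
          refine setIntegral_ge_of_const_le_real (hBmeas i) (measure_ne_top m _)
            (fun φ hφ => ?_) hfint.integrableOn
          have := abs_le.1 (hUf (x i) φ (hBsub i hφ))
          linarith [this.1]
        have hmul : l i * f ⟨ν, hKS hνK⟩ ≤ l i * (f (x i) + ε / 2) :=
          mul_le_mul_of_nonneg_left hνf (hl0 i)
        have : l i * (f (x i) - ε / 2) ≤ ∫ φ in B i, f φ ∂m := by
          rw [mul_comm]; exact hlow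
        nlinarith [hl0 i, hε]
  choose ν hνbar hνf using hν
  -- Step 6: sums
  have hsum_int : ∀ g : ↥S → ℝ, Integrable g m →
      ∫ φ, g φ ∂m = ∑ i, ∫ φ in B i, g φ ∂m := by
    intro g hg
    rw [← setIntegral_univ, ← hBunion,
      integral_iUnion_fintype hBmeas hBdisj (fun i => hg.integrableOn)]
  have hl1 : (∑ i, l i) = 1 := by
    have h1 := hsum_int (fun _ => (1 : ℝ)) (integrable_const 1)
    simp only [Measure.real, integral_const, measure_univ, ENNReal.toReal_one, one_smul, smul_eq_mul,
      mul_one, Measure.restrict_apply_univ] at h1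
    rw [← h1]
  have hbar : (∑ i, l i • (ν i : V)) = ω := by
    by_contra hne
    obtain ⟨ℓ, hℓ⟩ := SeparatingDual.exists_separating_of_ne (R := ℝ) hne
    apply hℓ
    calc ℓ (∑ i, l i • (ν i : V)) = ∑ i, l i * ℓ (ν i : V) := by
          rw [map_sum]; exact Finset.sum_congr rfl fun i _ => by rw [ℓ.map_smul, smul_eq_mul]
    _ = ∑ i, ∫ φ in B i, ℓ (φ : V) ∂m :=
          Finset.sum_congr rfl fun i _ => (hνbar i ℓ).symm
    _ = ∫ φ, ℓ (φ : V) ∂m := (hsum_int _ (hlint ℓ)).symm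
    _ = ℓ ω := (hμ ℓ).symm
  refine ⟨n, l, ν, hl0, hl1, hbar, ?_⟩
  calc (∑ i, l i * f (ν i)) ≤ ∑ i, ((∫ φ in B i, f φ ∂m) + l i * ε) :=
        Finset.sum_le_sum fun i _ => hνf i
  _ = (∑ i, ∫ φ in B i, f φ ∂m) + (∑ i, l i) * ε := by
        rw [Finset.sum_add_distrib, Finset.sum_mul]
  _ = (∫ φ : ↥S, f φ ∂m) + ε := by rw [← hsum_int f hfint, hl1, one_mul]

/-- The infimum over all probability measures with barycenter `ω` equals the
infimum over all finite convex decompositions of `ω`: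
`inf_{μ ∈ M_ω(S)} ∫_S f dμ = inf {Σ λᵢ f(νᵢ) : λᵢ ≥ 0, Σ λᵢ = 1, νᵢ ∈ S, ω = Σ λᵢ νᵢ}`. -/
theorem EoF_eq_inf_over_finite_convex_decompositions
    {V : Type*} [AddCommGroup V] [Module ℝ V] [TopologicalSpace V]
    [IsTopologicalAddGroup V] [ContinuousSMul ℝ V] [T2Space V] [LocallyConvexSpace ℝ V]
    [MeasurableSpace V] [BorelSpace V]
    (S : Set V) (hSne : S.Nonempty) (hScpt : IsCompact S) (hSconv : Convex ℝ S)
    (f : ↥S → ℝ) (hf : Continuous f) (ω : V) (hω : ω ∈ S) :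
    EoF f ω = sInf {x : ℝ | ∃ (n : ℕ) (l : Fin n → ℝ) (ν : Fin n → ↥S),
      (∀ i, 0 ≤ l i) ∧ (∑ i, l i) = 1 ∧ (∑ i, l i • (ν i : V)) = ω ∧
      (∑ i, l i * f (ν i)) = x} := by
  classical
  haveI : CompactSpace ↥S := isCompact_iff_compactSpace.mp hScpt
  haveI : Nonempty ↥S := hSne.to_subtype
  have hfsm : StronglyMeasurable f := hf.stronglyMeasurable
  -- a lower bound for f
  obtain ⟨z, -, hz⟩ := isCompact_univ.exists_isMinOn Set.univ_nonempty hf.continuousOn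
  set c : ℝ := f z with hc
  have hcle : ∀ y : ↥S, c ≤ f y := fun y => hz (Set.mem_univ y)
  set D : Set ℝ := {x : ℝ | ∃ (n : ℕ) (l : Fin n → ℝ) (ν : Fin n → ↥S),
      (∀ i, 0 ≤ l i) ∧ (∑ i, l i) = 1 ∧ (∑ i, l i • (ν i : V)) = ω ∧
      (∑ i, l i * f (ν i)) = x} with hD
  have hDbdd : BddBelow D := by
    refine ⟨c, ?_⟩
    rintro r ⟨n, l, ν, h0, h1, -, rfl⟩
    calc c = (∑ i, l i) * c := by rw [h1, one_mul]
    _ = ∑ i, l i * c := by rw [Finset.sum_mul]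
    _ ≤ ∑ i, l i * f (ν i) := Finset.sum_le_sum fun i _ => by
          exact mul_le_mul_of_nonneg_left (hcle (ν i)) (h0 i)
  have hDne : D.Nonempty := by
    refine ⟨f ⟨ω, hω⟩, 1, (fun _ => 1), (fun _ => ⟨ω, hω⟩), fun i => zero_le_one, ?_, ?_, ?_⟩
    · simp
    · simp
    · simp
  have hωbar : HasBarycenter (⟨Measure.dirac ⟨ω, hω⟩, inferInstance⟩ : ProbabilityMeasure ↥S) ω := by
    intro ℓ
    have hsm : StronglyMeasurable (fun φ : ↥S => ℓ (φ : V)) :=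
      (ℓ.continuous.comp continuous_subtype_val).stronglyMeasurable
    show ℓ ω = ∫ φ : ↥S, ℓ (φ : V) ∂(Measure.dirac (⟨ω, hω⟩ : ↥S))
    rw [integral_dirac' _ _ hsm]
  haveI hNE : Nonempty {μ : ProbabilityMeasure ↥S // HasBarycenter μ ω} :=
    ⟨⟨⟨Measure.dirac ⟨ω, hω⟩, inferInstance⟩, hωbar⟩⟩
  have hintf : ∀ (μ : ProbabilityMeasure ↥S), Integrable f (μ : Measure ↥S) := fun μ =>
    hf.integrable_of_hasCompactSupport ((isClosed_tsupport f).isCompact)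
  have hEbdd : BddBelow (Set.range fun μ : {μ : ProbabilityMeasure ↥S // HasBarycenter μ ω} =>
      ∫ φ : ↥S, f φ ∂(μ.1 : Measure ↥S)) := by
    refine ⟨c, ?_⟩
    rintro r ⟨μ, rfl⟩
    have h1 : ∫ φ : ↥S, c ∂(μ.1 : Measure ↥S) ≤ ∫ φ : ↥S, f φ ∂(μ.1 : Measure ↥S) :=
      integral_mono (integrable_const c) (hintf μ.1) hcle
    rwa [integral_const, Measure.real, measure_univ, ENNReal.toReal_one, one_smul] at h1
  refine le_antisymm (le_csInf hDne ?_) (le_ciInf ?_)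
  · -- EoF ≤ every element of D
    rintro r ⟨n, l, ν, h0, h1, hb, rfl⟩
    set mb : Measure ↥S := ∑ i : Fin n, ENNReal.ofReal (l i) • Measure.dirac (ν i) with hmb
    haveI : IsProbabilityMeasure mb := by
      constructor
      rw [hmb, Measure.finset_sum_apply]
      simp only [Measure.smul_apply, measure_univ, smul_eq_mul, mul_one]
      rw [← ENNReal.ofReal_sum_of_nonneg (fun i _ => h0 i), h1, ENNReal.ofReal_one]
    have hint : ∀ g : ↥S → ℝ, Continuous g → ∫ φ, g φ ∂mb = ∑ i, l i * g (ν i) := by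
      intro g hg
      have hgi : ∀ i ∈ Finset.univ, Integrable g (ENNReal.ofReal (l i) • Measure.dirac (ν i)) :=
        fun i _ =>
          (hg.integrable_of_hasCompactSupport ((isClosed_tsupport g).isCompact)).smul_measure
            ENNReal.ofReal_ne_top
      rw [hmb, integral_finset_sum_measure hgi]
      refine Finset.sum_congr rfl fun i _ => ?_
      rw [integral_smul_measure, integral_dirac' _ _ hg.stronglyMeasurable,
        ENNReal.toReal_ofReal (h0 i), smul_eq_mul]
    have hbary : HasBarycenter (⟨mb, inferInstance⟩ : ProbabilityMeasure ↥S) ω := by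
      intro ℓ
      have h2 : ∫ φ : ↥S, ℓ (φ : V) ∂mb = ∑ i, l i * ℓ (ν i : V) :=
        hint _ (ℓ.continuous.comp continuous_subtype_val)
      show ℓ ω = ∫ φ : ↥S, ℓ (φ : V) ∂mb
      rw [h2, ← hb, map_sum]
      exact Finset.sum_congr rfl fun i _ => by rw [ℓ.map_smul, smul_eq_mul]
    have h3 := ciInf_le hEbdd (⟨⟨mb, inferInstance⟩, hbary⟩ :
      {μ : ProbabilityMeasure ↥S // HasBarycenter μ ω})
    exact h3.trans (le_of_eq (hint f hf))
  · -- sInf D ≤ each integral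
    rintro ⟨μ, hμ⟩
    show sInf D ≤ ∫ φ : ↥S, f φ ∂(μ : Measure ↥S)
    refine le_of_forall_sub_le fun ε hε => ?_
    obtain ⟨n, l, ν, h0, h1, hb, hle⟩ := exists_decomposition S hScpt hSconv f hf ω μ hμ hε
    have h2 : sInf D ≤ ∑ i, l i * f (ν i) := csInf_le hDbdd ⟨n, l, ν, h0, h1, hb, rfl⟩
    linarith
end

section
/- Let K ⊆ ℝ^d be a nonempty compact convex set, ω ∈ K, and μ a Borel probability measure on K with barycenter ω. Then μ is an extreme point of M_ω(K) (i.e., μ is simplicial) if and only if μ is supported by a finite affinely independent set of points of K (hence by at most d + 1 points). -/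
open MeasureTheory
open scoped ENNReal NNReal


open scoped Classical in
/-- A measure giving zero mass to the complement of a finite set is a combination of diracs. -/
lemma meas_eq_sum_dirac {X : Type*} [MeasurableSpace X] [MeasurableSingletonClass X]
    (ν : Measure X) (T : Finset X) (h : ν ((↑T : Set X))ᶜ = 0) :
    ν = ∑ t ∈ T, ν {t} • Measure.dirac t := by
  ext s hs
  rw [Measure.finset_sum_apply]
  have h1 : ν s = ν (s ∩ ↑T) := by
    have h0 : ν (s \ ↑T) = 0 := measure_mono_null (Set.diff_subset_compl s ↑T) h
    rw [← measure_inter_add_diff s T.measurableSet, h0, add_zero]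
  have h2 : s ∩ ↑T = ⋃ t ∈ T.filter (· ∈ s), ({t} : Set X) := by
    ext x
    simp only [Set.mem_inter_iff, Set.mem_iUnion, Finset.mem_filter, Set.mem_singleton_iff,
      Finset.mem_coe]
    constructor
    · rintro ⟨hx, hxT⟩; exact ⟨x, ⟨hxT, hx⟩, rfl⟩
    · rintro ⟨t, ⟨ht, hts⟩, rfl⟩; exact ⟨hts, ht⟩
  have h3 : ν (s ∩ ↑T) = ∑ t ∈ T.filter (· ∈ s), ν {t} := by
    rw [h2, measure_biUnion_finset]
    · intro a ha b hb hab
      simp only [Function.onFun, Set.disjoint_singleton_left, Set.mem_singleton_iff]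
      exact hab
    · intro t _; exact measurableSet_singleton t
  rw [h1, h3, Finset.sum_filter]
  congr 1
  ext t
  rw [Measure.smul_apply, Measure.dirac_apply' t hs, smul_eq_mul]
  by_cases hts : t ∈ s <;> simp [hts, Set.indicator, mul_comm]

lemma integral_sum_dirac {X : Type*} [MeasurableSpace X] [MeasurableSingletonClass X]
    {E : Type*} [NormedAddCommGroup E] [NormedSpace ℝ E] [CompleteSpace E]
    (T : Finset X) (c : X → ℝ≥0∞) (hc : ∀ t ∈ T, c t ≠ ⊤)
    (f : X → E) (hf : StronglyMeasurable f) :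
    ∫ x, f x ∂(∑ t ∈ T, c t • Measure.dirac t) = ∑ t ∈ T, (c t).toReal • f t := by
  rw [integral_finset_sum_measure]
  · exact Finset.sum_congr rfl fun t ht => by
      rw [integral_smul_measure, integral_dirac' f t hf]
  · intro t ht
    refine Integrable.smul_measure ⟨hf.aestronglyMeasurable, ?_⟩ (hc t ht)
    rw [HasFiniteIntegral, lintegral_dirac' _ hf.enorm]
    exact enorm_lt_top

lemma eq_of_supported_affineIndependent {X : Type*} [MeasurableSpace X]
    [MeasurableSingletonClass X]
    {E : Type*} [NormedAddCommGroup E] [NormedSpace ℝ E] [CompleteSpace E]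
    (φ : X → E) (hφ : StronglyMeasurable φ)
    (T : Finset X) (hT : AffineIndependent ℝ (fun t : T => φ t))
    (ν₁ ν₂ : Measure X) [IsProbabilityMeasure ν₁] [IsProbabilityMeasure ν₂]
    (h₁ : ν₁ ((↑T : Set X))ᶜ = 0) (h₂ : ν₂ ((↑T : Set X))ᶜ = 0)
    (hb : ∫ x, φ x ∂ν₁ = ∫ x, φ x ∂ν₂) : ν₁ = ν₂ := by
  have hr₁ := meas_eq_sum_dirac ν₁ T h₁
  have hr₂ := meas_eq_sum_dirac ν₂ T h₂
  have hne₁ : ∀ t ∈ T, ν₁ {t} ≠ ⊤ := fun t _ => measure_ne_top _ _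
  have hne₂ : ∀ t ∈ T, ν₂ {t} ≠ ⊤ := fun t _ => measure_ne_top _ _
  -- total masses
  have hm₁ : ∑ t ∈ T, (ν₁ {t}).toReal = 1 := by
    have : ν₁ Set.univ = ∑ t ∈ T, ν₁ {t} := by
      conv_lhs => rw [hr₁]
      rw [Measure.finset_sum_apply]
      simp
    rw [measure_univ] at this
    rw [← ENNReal.toReal_sum hne₁, ← this]
    simp
  have hm₂ : ∑ t ∈ T, (ν₂ {t}).toReal = 1 := by
    have : ν₂ Set.univ = ∑ t ∈ T, ν₂ {t} := by
      conv_lhs => rw [hr₂]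
      rw [Measure.finset_sum_apply]
      simp
    rw [measure_univ] at this
    rw [← ENNReal.toReal_sum hne₂, ← this]
    simp
  -- barycenters
  have hb₁ : ∫ x, φ x ∂ν₁ = ∑ t ∈ T, (ν₁ {t}).toReal • φ t := by
    conv_lhs => rw [hr₁]
    exact integral_sum_dirac T _ hne₁ φ hφ
  have hb₂ : ∫ x, φ x ∂ν₂ = ∑ t ∈ T, (ν₂ {t}).toReal • φ t := by
    conv_lhs => rw [hr₂]
    exact integral_sum_dirac T _ hne₂ φ hφ
  -- uniqueness of weights
  have key : ∀ t : T, (ν₁ {(t : X)}).toReal = (ν₂ {(t : X)}).toReal := by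
    have := hT.eq_of_sum_eq_sum (s := Finset.univ)
      (w₁ := fun t : T => (ν₁ {(t : X)}).toReal) (w₂ := fun t : T => (ν₂ {(t : X)}).toReal)
      ?_ ?_
    · exact fun t => this t (Finset.mem_univ t)
    · rw [← Finset.sum_coe_sort T fun x => (ν₁ {x}).toReal,
        ← Finset.sum_coe_sort T fun x => (ν₂ {x}).toReal] at *
      rw [hm₁, hm₂]
    · have e₁ : ∑ t : T, (ν₁ {(t : X)}).toReal • φ t = ∑ t ∈ T, (ν₁ {t}).toReal • φ t :=
        Finset.sum_coe_sort T fun x => (ν₁ {x}).toReal • φ x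
      have e₂ : ∑ t : T, (ν₂ {(t : X)}).toReal • φ t = ∑ t ∈ T, (ν₂ {t}).toReal • φ t :=
        Finset.sum_coe_sort T fun x => (ν₂ {x}).toReal • φ x
      rw [e₁, e₂, ← hb₁, ← hb₂, hb]
  have key' : ∀ t ∈ T, ν₁ {t} = ν₂ {t} := by
    intro t ht
    have := key ⟨t, ht⟩
    exact (ENNReal.toReal_eq_toReal_iff' (measure_ne_top _ _) (measure_ne_top _ _)).mp this
  rw [hr₁, hr₂]
  exact Finset.sum_congr rfl fun t ht => by rw [key' t ht]

lemma pert {X : Type*} [MeasurableSpace X]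
    {E : Type*} [NormedAddCommGroup E] [NormedSpace ℝ E] [CompleteSpace E]
    (μ : ProbabilityMeasure X) (φ : X → E) (hφm : AEStronglyMeasurable φ (μ : Measure X))
    (hφ : Integrable φ (μ : Measure X)) (ω : E)
    (hμbar : ∫ x, φ x ∂(μ : Measure X) = ω)
    (hExt : ∀ μ₁ μ₂ : ProbabilityMeasure X,
        (∫ x, φ x ∂(μ₁ : Measure X)) = ω → (∫ x, φ x ∂(μ₂ : Measure X)) = ω →
        ∀ a b : ℝ≥0∞, a ≠ 0 → b ≠ 0 → a + b = 1 →
          (μ : Measure X) = a • (μ₁ : Measure X) + b • (μ₂ : Measure X) →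
          μ₁ = μ ∧ μ₂ = μ)
    (f : X → ℝ) (hf : Measurable f) (hfb : ∀ x, |f x| ≤ 1)
    (hf0 : ∫ x, f x ∂(μ : Measure X) = 0)
    (hf1 : ∫ x, f x • φ x ∂(μ : Measure X) = 0)
    (s : Set X) (hs : MeasurableSet s)
    (hsf : ∫ x in s, f x ∂(μ : Measure X) ≠ 0) : False := by
  set ν : Measure X := (μ : Measure X)
  have hfint : Integrable f ν :=
    ⟨hf.aestronglyMeasurable, (hasFiniteIntegral_const (1 : ℝ)).mono
      (Filter.Eventually.of_forall fun x => by simpa using hfb x)⟩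
  have hpos : ∀ x, 0 ≤ 1 + f x := fun x => by have := hfb x; rw [abs_le] at this; linarith
  have hneg : ∀ x, 0 ≤ 1 - f x := fun x => by have := hfb x; rw [abs_le] at this; linarith
  -- the two perturbed measures
  set g₁ : X → ℝ≥0 := fun x => Real.toNNReal (1 + f x) with hg₁
  set g₂ : X → ℝ≥0 := fun x => Real.toNNReal (1 - f x) with hg₂
  have hg₁m : Measurable g₁ := (measurable_const.add hf).real_toNNReal
  have hg₂m : Measurable g₂ := (measurable_const.sub hf).real_toNNReal
  set ν₁ : Measure X := ν.withDensity (fun x => (g₁ x : ℝ≥0∞)) with hν₁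
  set ν₂ : Measure X := ν.withDensity (fun x => (g₂ x : ℝ≥0∞)) with hν₂
  have hint₁ : Integrable (fun x => 1 + f x) ν := (integrable_const 1).add hfint
  have hint₂ : Integrable (fun x => 1 - f x) ν := (integrable_const 1).sub hfint
  have hcoe₁ : ∀ x, ((g₁ x : ℝ≥0∞)) = ENNReal.ofReal (1 + f x) := fun x => rfl
  have hcoe₂ : ∀ x, ((g₂ x : ℝ≥0∞)) = ENNReal.ofReal (1 - f x) := fun x => rfl
  have happ₁ : ∀ t : Set X, MeasurableSet t →
      ν₁ t = ENNReal.ofReal (∫ x in t, (1 + f x) ∂ν) := by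
    intro t ht
    rw [hν₁, withDensity_apply _ ht]
    rw [ofReal_integral_eq_lintegral_ofReal (hint₁.restrict)
      (Filter.Eventually.of_forall fun x => hpos x)]
    exact lintegral_congr fun x => hcoe₁ x
  have happ₂ : ∀ t : Set X, MeasurableSet t →
      ν₂ t = ENNReal.ofReal (∫ x in t, (1 - f x) ∂ν) := by
    intro t ht
    rw [hν₂, withDensity_apply _ ht]
    rw [ofReal_integral_eq_lintegral_ofReal (hint₂.restrict)
      (Filter.Eventually.of_forall fun x => hneg x)]
    exact lintegral_congr fun x => hcoe₂ x
  have hprob₁ : IsProbabilityMeasure ν₁ := by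
    constructor
    rw [happ₁ _ MeasurableSet.univ]
    simp only [Measure.restrict_univ]
    rw [integral_add (integrable_const 1) hfint, hf0, integral_const]
    simp
  have hprob₂ : IsProbabilityMeasure ν₂ := by
    constructor
    rw [happ₂ _ MeasurableSet.univ]
    simp only [Measure.restrict_univ]
    rw [integral_sub (integrable_const 1) hfint, hf0, integral_const]
    simp
  set μ₁ : ProbabilityMeasure X := ⟨ν₁, hprob₁⟩
  set μ₂ : ProbabilityMeasure X := ⟨ν₂, hprob₂⟩
  have hfφ : Integrable (fun x => f x • φ x) ν := by
    refine Integrable.mono' hφ.norm (hf.aestronglyMeasurable.smul hφm) ?_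
    exact Filter.Eventually.of_forall fun x => by
      rw [norm_smul]
      calc ‖f x‖ * ‖φ x‖ ≤ 1 * ‖φ x‖ := by
            apply mul_le_mul_of_nonneg_right _ (norm_nonneg _)
            simpa [Real.norm_eq_abs] using hfb x
        _ = ‖φ x‖ := one_mul _
  -- barycenters
  have hbar₁ : ∫ x, φ x ∂ν₁ = ω := by
    rw [hν₁, integral_withDensity_eq_integral_smul hg₁m]
    have : ∀ x, g₁ x • φ x = φ x + f x • φ x := by
      intro x
      rw [NNReal.smul_def, Real.coe_toNNReal _ (hpos x)]
      rw [add_smul, one_smul]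
    simp only [this]
    rw [integral_add hφ hfφ, hf1, hμbar, add_zero]
  have hbar₂ : ∫ x, φ x ∂ν₂ = ω := by
    rw [hν₂, integral_withDensity_eq_integral_smul hg₂m]
    have : ∀ x, g₂ x • φ x = φ x - f x • φ x := by
      intro x
      rw [NNReal.smul_def, Real.coe_toNNReal _ (hneg x)]
      rw [sub_smul, one_smul]
    simp only [this]
    rw [integral_sub hφ hfφ, hf1, hμbar, sub_zero]
  -- decomposition
  have hdecomp : ν = (2⁻¹ : ℝ≥0∞) • ν₁ + (2⁻¹ : ℝ≥0∞) • ν₂ := by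
    have hsum : ν₁ + ν₂ = (2 : ℝ≥0∞) • ν := by
      rw [hν₁, hν₂, ← withDensity_add_right _ hg₂m.coe_nnreal_ennreal]
      have : ((fun x => (g₁ x : ℝ≥0∞)) + (fun x => (g₂ x : ℝ≥0∞))) = fun _ => (2 : ℝ≥0∞) := by
        funext x
        show (g₁ x : ℝ≥0∞) + (g₂ x : ℝ≥0∞) = 2
        rw [hcoe₁, hcoe₂, ← ENNReal.ofReal_add (hpos x) (hneg x)]
        norm_num
      rw [this, withDensity_const]
    rw [← smul_add, hsum, smul_smul, ENNReal.inv_mul_cancel (by norm_num) (by norm_num), one_smul]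
  have := hExt μ₁ μ₂ hbar₁ hbar₂ 2⁻¹ 2⁻¹ (by norm_num) (by norm_num)
    ENNReal.inv_two_add_inv_two hdecomp
  -- contradiction on the set s
  have heq : ν₁ = ν := congrArg ProbabilityMeasure.toMeasure this.1
  have h1 : ν₁ s = ENNReal.ofReal ((ν s).toReal + ∫ x in s, f x ∂ν) := by
    rw [happ₁ _ hs, integral_add (integrable_const 1).restrict hfint.restrict, integral_const]
    simp [Measure.restrict_apply_univ]
    rfl
  have h2 : ν s = ENNReal.ofReal ((ν s).toReal) := by
    rw [ENNReal.ofReal_toReal (measure_ne_top _ _)]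
  have hn1 : 0 ≤ (ν s).toReal + ∫ x in s, f x ∂ν := by
    have : ∫ x in s, (1 + f x) ∂ν ≥ 0 :=
      integral_nonneg fun x => hpos x
    rw [integral_add (integrable_const 1).restrict hfint.restrict, integral_const] at this
    show 0 ≤ ν.real s + ∫ x in s, f x ∂ν
    simpa [Measure.restrict_apply_univ] using this
  have h4 : ENNReal.ofReal ((ν s).toReal) =
      ENNReal.ofReal ((ν s).toReal + ∫ x in s, f x ∂ν) := by
    rw [← h2, ← h1, heq]
  rw [ENNReal.ofReal_eq_ofReal_iff ENNReal.toReal_nonneg hn1] at h4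
  exact hsf (by linarith)

lemma pert2 {X : Type*} [MeasurableSpace X]
    {E : Type*} [NormedAddCommGroup E] [NormedSpace ℝ E] [CompleteSpace E]
    (μ : ProbabilityMeasure X) (φ : X → E) (hφm : AEStronglyMeasurable φ (μ : Measure X))
    (hφ : Integrable φ (μ : Measure X)) (ω : E)
    (hμbar : ∫ x, φ x ∂(μ : Measure X) = ω)
    (hExt : ∀ μ₁ μ₂ : ProbabilityMeasure X,
        (∫ x, φ x ∂(μ₁ : Measure X)) = ω → (∫ x, φ x ∂(μ₂ : Measure X)) = ω →
        ∀ a b : ℝ≥0∞, a ≠ 0 → b ≠ 0 → a + b = 1 →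
          (μ : Measure X) = a • (μ₁ : Measure X) + b • (μ₂ : Measure X) →
          μ₁ = μ ∧ μ₂ = μ)
    {ι : Type*} [Fintype ι] (A : ι → Set X) (hAm : ∀ i, MeasurableSet (A i))
    (hdisj : Pairwise (Function.onFun Disjoint A)) (c : ι → ℝ)
    (hsum0 : ∑ i, c i * ((μ : Measure X) (A i)).toReal = 0)
    (hbar0 : ∑ i, c i • (∫ x in A i, φ x ∂(μ : Measure X)) = 0)
    (i₀ : ι) (hc : c i₀ ≠ 0) (hA : 0 < (μ : Measure X) (A i₀)) : False := by
  set ν : Measure X := (μ : Measure X)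
  set ε : ℝ := (1 + ∑ i, |c i|)⁻¹ with hε
  have hcpos : 0 ≤ ∑ i, |c i| := Finset.sum_nonneg fun i _ => abs_nonneg _
  have hεpos : 0 < ε := by positivity
  set f : X → ℝ := fun x => ε * ∑ i, c i * (A i).indicator (fun _ => (1:ℝ)) x with hfdef
  have hind : ∀ i, Measurable ((A i).indicator (fun _ => (1:ℝ))) :=
    fun i => measurable_const.indicator (hAm i)
  have hfmeas : Measurable f :=
    (Finset.measurable_sum Finset.univ fun i _ => (hind i).const_mul (c i)).const_mul ε
  have hindle : ∀ i x, |(A i).indicator (fun _ => (1:ℝ)) x| ≤ 1 := by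
    intro i x
    by_cases h : x ∈ A i <;> simp [Set.indicator, h]
  have hfb : ∀ x, |f x| ≤ 1 := by
    intro x
    rw [hfdef]
    simp only
    rw [abs_mul, abs_of_pos hεpos]
    have h1 : |∑ i, c i * (A i).indicator (fun _ => (1:ℝ)) x| ≤ ∑ i, |c i| := by
      refine (Finset.abs_sum_le_sum_abs _ _).trans (Finset.sum_le_sum fun i _ => ?_)
      rw [abs_mul]
      calc |c i| * |(A i).indicator (fun _ => (1:ℝ)) x| ≤ |c i| * 1 :=
            mul_le_mul_of_nonneg_left (hindle i x) (abs_nonneg _)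
        _ = |c i| := mul_one _
    calc ε * |∑ i, c i * (A i).indicator (fun _ => (1:ℝ)) x| ≤ ε * (∑ i, |c i|) :=
          mul_le_mul_of_nonneg_left h1 hεpos.le
      _ ≤ ε * (1 + ∑ i, |c i|) := by nlinarith
      _ = 1 := by rw [hε]; field_simp
  have hindint : ∀ i, Integrable ((A i).indicator (fun _ => (1:ℝ))) ν :=
    fun i => (integrable_const (1:ℝ)).indicator (hAm i)
  have hf0 : ∫ x, f x ∂ν = 0 := by
    rw [hfdef]
    simp only
    rw [integral_const_mul, integral_finset_sum Finset.univ
      (fun i _ => ((hindint i).const_mul (c i)))]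
    have : ∀ i, ∫ x, c i * (A i).indicator (fun _ => (1:ℝ)) x ∂ν
        = c i * (ν (A i)).toReal := by
      intro i
      rw [integral_const_mul, integral_indicator_const (1:ℝ) (hAm i)]
      simp [measureReal_def]
    simp only [this]
    rw [hsum0, mul_zero]
  have hptws : ∀ x, f x • φ x = ε • ∑ i, c i • ((A i).indicator φ x) := by
    intro x
    rw [hfdef]
    simp only
    rw [mul_smul]
    congr 1
    rw [Finset.sum_smul]
    refine Finset.sum_congr rfl fun i _ => ?_
    rw [mul_smul]
    congr 1
    by_cases h : x ∈ A i <;> simp [h]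
  have hf1 : ∫ x, f x • φ x ∂ν = 0 := by
    simp only [hptws]
    rw [integral_smul, integral_finset_sum (f := fun i a => c i • ((A i).indicator φ a))
      Finset.univ (fun i _ => ((hφ.indicator (hAm i)).smul (c i)))]
    have : ∀ i, ∫ x, c i • ((A i).indicator φ x) ∂ν = c i • ∫ x in A i, φ x ∂ν := by
      intro i
      rw [integral_smul, integral_indicator (hAm i)]
    simp only [this]
    rw [hbar0, smul_zero]
  have hsf : ∫ x in A i₀, f x ∂ν ≠ 0 := by
    have hrw : ∫ x in A i₀, f x ∂ν = ε * ∑ i, c i * (ν (A i ∩ A i₀)).toReal := by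
      rw [hfdef]
      simp only
      rw [integral_const_mul, integral_finset_sum Finset.univ
        (fun i _ => ((hindint i).const_mul (c i)).restrict)]
      congr 1
      refine Finset.sum_congr rfl fun i _ => ?_
      rw [integral_const_mul, integral_indicator_const (1:ℝ) (hAm i),
        measureReal_def, Measure.restrict_apply (hAm i)]
      simp
    rw [hrw]
    have hz : ∀ i ∈ Finset.univ, i ≠ i₀ → c i * (ν (A i ∩ A i₀)).toReal = 0 := by
      intro i _ hi
      have : A i ∩ A i₀ = ∅ := Set.disjoint_iff_inter_eq_empty.mp (hdisj hi)
      rw [this]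
      simp
    rw [Finset.sum_eq_single i₀ hz (fun h => absurd (Finset.mem_univ i₀) h)]
    rw [Set.inter_self]
    have htr : 0 < (ν (A i₀)).toReal :=
      ENNReal.toReal_pos hA.ne' (measure_ne_top _ _)
    positivity
  exact pert μ φ hφm hφ ω hμbar hExt f hfmeas hfb hf0 hf1 (A i₀) (hAm i₀) hsf

/-- For a nonempty compact convex `K ⊆ ℝ^d`, `ω ∈ K`, and a Borel probability
measure `μ` on `K` with barycenter `ω`, `μ` is an extreme point of `M_ω(K)` (simplicial)
if and only if `μ` is supported by a finite affinely independent set of points of `K`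
(hence by at most `d + 1` points). -/
theorem simplicial_iff_supported_by_affineIndependent_finset (d : ℕ)
    (K : Set (EuclideanSpace ℝ (Fin d))) (hKne : K.Nonempty) (hKcpt : IsCompact K)
    (hKconv : Convex ℝ K) (ω : EuclideanSpace ℝ (Fin d)) (hω : ω ∈ K)
    (μ : ProbabilityMeasure ↥K)
    (hμ : ∫ x : ↥K, (x : EuclideanSpace ℝ (Fin d)) ∂(μ : Measure ↥K) = ω) :
    ((∀ μ₁ μ₂ : ProbabilityMeasure ↥K,
        (∫ x : ↥K, (x : EuclideanSpace ℝ (Fin d)) ∂(μ₁ : Measure ↥K)) = ω →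
        (∫ x : ↥K, (x : EuclideanSpace ℝ (Fin d)) ∂(μ₂ : Measure ↥K)) = ω →
        ∀ a b : ℝ≥0∞, a ≠ 0 → b ≠ 0 → a + b = 1 →
          (μ : Measure ↥K) = a • (μ₁ : Measure ↥K) + b • (μ₂ : Measure ↥K) →
          μ₁ = μ ∧ μ₂ = μ)
      ↔ (∃ T : Finset ↥K, μ (↑T : Set ↥K) = 1 ∧
          AffineIndependent ℝ (fun t : T => ((t : ↥K) : EuclideanSpace ℝ (Fin d))) ∧
          T.card ≤ d + 1)) := by
  haveI : CompactSpace ↥K := isCompact_iff_compactSpace.mp hKcpt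
  set φ : ↥K → EuclideanSpace ℝ (Fin d) := fun x => (x : EuclideanSpace ℝ (Fin d)) with hφdef
  have hφc : Continuous φ := continuous_subtype_val
  have hφint : Integrable φ (μ : Measure ↥K) :=
    hφc.integrable_of_hasCompactSupport (isClosed_tsupport _).isCompact
  set ν : Measure ↥K := (μ : Measure ↥K) with hνdef
  constructor
  · intro hExt
    by_contra hno
    set S : Set ↥K := ν.everywherePosSubset Set.univ with hSdef
    have hSmem : ∀ x ∈ S, ∀ n ∈ nhds x, 0 < ν n := by
      intro x hx n hn
      exact hx.2 n (by rwa [nhdsWithin_univ])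
    have hS0 : ν Sᶜ = 0 := by
      have h := Measure.everywherePosSubset_ae_eq (μ := ν) MeasurableSet.univ
      exact ae_eq_univ.mp h
    by_cases hfin : S.Finite
    · -- finite support case
      set T : Finset ↥K := hfin.toFinset with hTdef
      have hTc : (↑T : Set ↥K) = S := hfin.coe_toFinset
      have hTnull : ν ((↑T : Set ↥K))ᶜ = 0 := by rw [hTc]; exact hS0
      have hT1 : μ (↑T : Set ↥K) = 1 := by
        have h3 : ν (↑T : Set ↥K) = 1 := by
          rw [← prob_compl_eq_zero_iff T.measurableSet]
          exact hTnull
        simp only [hνdef, ← ProbabilityMeasure.ennreal_coeFn_eq_coeFn_toMeasure] at h3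
        exact_mod_cast h3
      have hatom : ∀ x ∈ T, 0 < ν {x} := by
        intro x hx
        have hxS : x ∈ S := hTc ▸ hx
        set n : Set ↥K := ((↑T : Set ↥K) \ {x})ᶜ with hndef
        have hopen : IsOpen n := (T.finite_toSet.diff (t := {x})).isClosed.isOpen_compl
        have hxn : x ∈ n := by simp [hndef]
        have hpos : 0 < ν n := hSmem x hxS n (hopen.mem_nhds hxn)
        have hsub : n ⊆ {x} ∪ ((↑T : Set ↥K))ᶜ := by
          intro y hy
          simp only [hndef, Set.mem_compl_iff, Set.mem_diff, not_and, not_not] at hy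
          by_cases hyT : y ∈ (↑T : Set ↥K)
          · exact Or.inl (hy hyT)
          · exact Or.inr hyT
        have : ν n ≤ ν {x} + ν ((↑T : Set ↥K))ᶜ :=
          le_trans (measure_mono hsub) (measure_union_le _ _)
        rw [hTnull, add_zero] at this
        exact lt_of_lt_of_le hpos this
      by_cases hai : AffineIndependent ℝ (fun t : T => φ ↑t)
      · refine hno ⟨T, hT1, hai, ?_⟩
        have h1 := hai.card_le_finrank_succ
        rw [Fintype.card_coe] at h1
        refine h1.trans ?_
        have h2 : Module.finrank ℝ (vectorSpan ℝ (Set.range fun t : T => φ ↑t)) ≤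
            Module.finrank ℝ (EuclideanSpace ℝ (Fin d)) := Submodule.finrank_le _
        rw [finrank_euclideanSpace_fin] at h2
        omega
      · rw [affineIndependent_iff] at hai
        push_neg at hai
        obtain ⟨s, w, hw0, hwp, e₀, he₀s, he₀⟩ := hai
        classical
        set w' : ↥T → ℝ := fun e => if e ∈ s then w e else 0 with hw'def
        set A : ↥T → Set ↥K := fun e => {(e : ↥K)} with hAdef
        set c : ↥T → ℝ := fun e => w' e / (ν {(e : ↥K)}).toReal with hcdef
        have hposT : ∀ e : ↥T, 0 < (ν {(e : ↥K)}).toReal :=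
          fun e => ENNReal.toReal_pos (hatom _ e.2).ne' (measure_ne_top _ _)
        have hsumw' : ∀ (g : ↥T → ℝ), (∀ e, w' e • g e = (if e ∈ s then w e • g e else 0)) →
            True := fun _ _ => trivial
        have hext : ∀ (F : ↥T → ℝ) , (∀ e ∈ Finset.univ, e ∉ s → F e = 0) →
            ∑ e ∈ s, F e = ∑ e, F e := fun F h =>
          Finset.sum_subset (Finset.subset_univ s) h
        refine pert2 μ φ hφc.aestronglyMeasurable hφint ω hμ hExt A
          (fun e => measurableSet_singleton _) ?_ c ?_ ?_ e₀ ?_ ?_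
        · intro i j hij
          simp only [Function.onFun, hAdef, Set.disjoint_singleton]
          exact fun h => hij (Subtype.ext h)
        · have : ∀ e : ↥T, c e * (ν (A e)).toReal = w' e := by
            intro e
            rw [hcdef, hAdef]
            simp only
            rw [div_mul_cancel₀ _ (hposT e).ne']
          change ∑ i, c i * (ν (A i)).toReal = 0
          simp only [this]
          rw [← hext w' (fun e _ he => by simp [hw'def, he])]
          rw [← hw0]
          exact Finset.sum_congr rfl fun e he => by simp [hw'def, he]
        · have hsing : ∀ e : ↥T, ∫ x in A e, φ x ∂ν = (ν {(e : ↥K)}).toReal • φ ↑e := by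
            intro e
            rw [hAdef]
            simp only
            rw [Measure.restrict_singleton, integral_smul_measure,
              integral_dirac' φ _ hφc.stronglyMeasurable]
          have : ∀ e : ↥T, c e • (∫ x in A e, φ x ∂ν) = w' e • φ ↑e := by
            intro e
            rw [hsing e, hcdef, smul_smul]
            simp only
            rw [div_mul_cancel₀ _ (hposT e).ne']
          change ∑ i, c i • (∫ x in A i, φ x ∂ν) = 0
          simp only [this]
          rw [← Finset.sum_subset (Finset.subset_univ s)
            (f := fun e => w' e • φ ↑e) (fun e _ he => by simp [hw'def, he])]
          rw [← hwp]
          exact Finset.sum_congr rfl fun e he => by simp [hw'def, he]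
        · rw [hcdef]
          simp only
          exact div_ne_zero (by simp [hw'def, he₀s, he₀]) (hposT e₀).ne'
        · exact hatom _ e₀.2
    · -- infinite support case
      have hinf : S.Infinite := hfin
      obtain ⟨T', hT'S, hT'card⟩ := hinf.exists_subset_card_eq (d + 2)
      have hcard : Fintype.card ↥T' = d + 2 := by rw [Fintype.card_coe, hT'card]
      classical
      set A : ↥T' → Set ↥K := fun i =>
        ⋂ j ∈ Finset.univ.erase i, {x : ↥K | dist x (i : ↥K) < dist x (j : ↥K)} with hAdef
      have hopen : ∀ i, IsOpen (A i) := by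
        intro i
        refine isOpen_biInter_finset fun j _ => ?_
        exact isOpen_lt (Continuous.dist continuous_id continuous_const)
          (Continuous.dist continuous_id continuous_const)
      have hmemA : ∀ i : ↥T', ∀ x : ↥K,
          x ∈ A i ↔ ∀ j : ↥T', j ≠ i → dist x (i : ↥K) < dist x (j : ↥K) := by
        intro i x
        simp only [hAdef, Set.mem_iInter, Set.mem_setOf_eq, Finset.mem_erase, Finset.mem_univ,
          and_true]
      have hiA : ∀ i : ↥T', (i : ↥K) ∈ A i := by
        intro i
        rw [hmemA]
        intro j hj
        rw [dist_self]
        rw [dist_pos]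
        exact fun h => hj (Subtype.ext h.symm)
      have hApos : ∀ i, 0 < ν (A i) := by
        intro i
        exact hSmem _ (hT'S i.2) _ ((hopen i).mem_nhds (hiA i))
      have hdisj : Pairwise (Function.onFun Disjoint A) := by
        intro i j hij
        rw [Function.onFun, Set.disjoint_left]
        intro x hxi hxj
        have h1 := (hmemA i x).mp hxi j (Ne.symm hij)
        have h2 := (hmemA j x).mp hxj i hij
        linarith
      set v : ↥T' → (EuclideanSpace ℝ (Fin d)) × ℝ :=
        fun i => (∫ x in A i, φ x ∂ν, (ν (A i)).toReal) with hvdef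
      have hnli : ¬ LinearIndependent ℝ v := by
        intro h
        have h1 := h.fintype_card_le_finrank
        rw [hcard, Module.finrank_prod, finrank_euclideanSpace_fin, Module.finrank_self] at h1
        omega
      obtain ⟨c, hc0, i₀, hci₀⟩ := Fintype.not_linearIndependent_iff.mp hnli
      have hfst : ∑ i, c i • (∫ x in A i, φ x ∂ν) = 0 := by
        have := congrArg Prod.fst hc0
        simpa [Prod.fst_sum, hvdef] using this
      have hsnd : ∑ i, c i * (ν (A i)).toReal = 0 := by
        have := congrArg Prod.snd hc0
        simpa [Prod.snd_sum, hvdef] using this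
      exact pert2 μ φ hφc.aestronglyMeasurable hφint ω hμ hExt A
        (fun i => (hopen i).measurableSet) hdisj c hsnd hfst i₀ hci₀ (hApos i₀)
  · rintro ⟨T, hT1, hTa, -⟩
    intro μ₁ μ₂ h₁ h₂ a b ha hb hab hdec
    have hμT : (μ : Measure ↥K) ((↑T : Set ↥K))ᶜ = 0 := by
      rw [prob_compl_eq_zero_iff T.measurableSet]
      have := hT1
      simp only [← ProbabilityMeasure.ennreal_coeFn_eq_coeFn_toMeasure]
      exact_mod_cast this
    have hz : a * (μ₁ : Measure ↥K) ((↑T : Set ↥K))ᶜ + b * (μ₂ : Measure ↥K) ((↑T : Set ↥K))ᶜ = 0 := by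
      have := congrArg (fun ν : Measure ↥K => ν ((↑T : Set ↥K))ᶜ) hdec
      simpa [Measure.smul_apply, smul_eq_mul] using this.symm.trans hμT
    rw [add_eq_zero] at hz
    have h₁T : (μ₁ : Measure ↥K) ((↑T : Set ↥K))ᶜ = 0 := by
      rcases mul_eq_zero.mp hz.1 with h | h
      · exact absurd h ha
      · exact h
    have h₂T : (μ₂ : Measure ↥K) ((↑T : Set ↥K))ᶜ = 0 := by
      rcases mul_eq_zero.mp hz.2 with h | h
      · exact absurd h hb
      · exact h
    constructor
    · exact ProbabilityMeasure.toMeasure_injective <|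
        eq_of_supported_affineIndependent φ hφc.stronglyMeasurable T hTa _ _ h₁T hμT
          (by rw [h₁, hμ])
    · exact ProbabilityMeasure.toMeasure_injective <|
        eq_of_supported_affineIndependent φ hφc.stronglyMeasurable T hTa _ _ h₂T hμT
          (by rw [h₂, hμ])
end

section
/- Let K ⊆ ℝ^d be a nonempty compact convex set, f : K → ℝ a continuous concave function, and ω ∈ K. Then there exists an optimal decomposition of ω: finitely many extreme points ρ₁, …, ρ_n of K and weights λᵢ ≥ 0 with Σᵢ λᵢ = 1 such that ω = Σᵢ λᵢ ρᵢ and Σᵢ λᵢ f(ρᵢ) = E(ω), where E(ω) = inf_{μ ∈ M_ω(K)} ∫_K f dμ. In particular, in finite dimensions the infimum over all barycentric measures equals the minimum over finite convex decompositions into extreme points. -/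
open MeasureTheory
open scoped ENNReal NNReal

section Aux

open Set Finset Module
open scoped RealInnerProductSpace

lemma aux_isCompact_convexHull {E : Type*} [NormedAddCommGroup E] [NormedSpace ℝ E]
    [FiniteDimensional ℝ E] {s : Set E} (hs : IsCompact s) :
    IsCompact (convexHull ℝ s) := by
  classical
  rcases s.eq_empty_or_nonempty with rfl | ⟨s₀, hs₀⟩
  · simp
  set D := finrank ℝ E + 1 with hD
  set φ : (Fin D → ℝ) × (Fin D → E) → E := fun p => ∑ i, p.1 i • p.2 i with hφdef
  have hφ : Continuous φ := by
    apply continuous_finset_sum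
    intro i _
    exact ((continuous_apply i).comp continuous_fst).smul ((continuous_apply i).comp continuous_snd)
  have hQ : IsCompact ((stdSimplex ℝ (Fin D)) ×ˢ (Set.univ.pi fun _ : Fin D => s)) :=
    (isCompact_stdSimplex ℝ (Fin D)).prod (isCompact_univ_pi fun _ => hs)
  have himg : φ '' ((stdSimplex ℝ (Fin D)) ×ˢ (Set.univ.pi fun _ : Fin D => s)) = convexHull ℝ s := by
    apply Set.Subset.antisymm
    · rintro x ⟨⟨w, z⟩, ⟨hw, hz⟩, rfl⟩
      exact (convex_convexHull ℝ s).sum_mem (fun i _ => hw.1 i) hw.2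
        (fun i _ => subset_convexHull ℝ s (hz i trivial))
    · intro x hx
      obtain ⟨ι, hι, z, w, hzs, hai, hw0, hw1, hwz⟩ := eq_pos_convex_span_of_mem_convexHull hx
      letI := hι
      haveI : Nonempty ι := by
        by_contra h
        rw [not_nonempty_iff] at h
        simp [Finset.univ_eq_empty] at hw1
      have hcard : Fintype.card ι ≤ D := by
        have h1 := hai.finrank_vectorSpan_add_one (k := ℝ)
        have h2 : finrank ℝ (vectorSpan ℝ (Set.range z)) ≤ finrank ℝ E :=
          Submodule.finrank_le _
        omega
      obtain ⟨ψ⟩ : Nonempty (ι ↪ Fin D) :=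
        Function.Embedding.nonempty_of_card_le (by simpa using hcard)
      refine ⟨⟨fun j => ∑ i ∈ Finset.univ.filter (fun i => (ψ i : Fin D) = j), w i,
        fun j => if h : ∃ i, ψ i = j then z h.choose else s₀⟩, ⟨?_, ?_⟩, ?_⟩
      · constructor
        · intro j
          exact Finset.sum_nonneg fun i _ => (hw0 i).le
        · rw [Finset.sum_fiberwise univ ψ w]; exact hw1
      · intro j _
        by_cases h : ∃ i, ψ i = j
        · simp only [h, dif_pos]
          exact hzs ⟨h.choose, rfl⟩
        · simp only [h, dif_neg, not_false_iff]
          exact hs₀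
      · simp only [hφdef]
        rw [← hwz]
        rw [← Finset.sum_fiberwise univ ψ (fun i => w i • z i)]
        refine Finset.sum_congr rfl fun j _ => ?_
        rw [Finset.sum_smul]
        refine Finset.sum_congr rfl fun i hi => ?_
        simp only [Finset.mem_filter] at hi
        have h : ∃ i', ψ i' = j := ⟨i, hi.2⟩
        simp only [h, dif_pos]
        congr 1
        have := h.choose_spec
        exact congrArg z (ψ.injective (this.trans hi.2.symm))
  rw [← himg]
  exact hQ.image hφ

lemma support_aux {E : Type*} [NormedAddCommGroup E] [InnerProductSpace ℝ E]
    [FiniteDimensional ℝ E] {K : Set E} (hcpt : IsCompact K) (hconv : Convex ℝ K)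
    {b v : E} (hb : b ∈ K) (hv : v ∈ (affineSpan ℝ K).direction)
    (hout : ∀ ε : ℝ, 0 < ε → b + ε • v ∉ K) :
    ∃ u : E, ‖u‖ = 1 ∧ u ∈ (affineSpan ℝ K).direction ∧ ∀ z ∈ K, ⟪u, z - b⟫ ≤ 0 := by
  classical
  set W := (affineSpan ℝ K).direction with hW
  haveI : CompleteSpace W := FiniteDimensional.complete ℝ W
  have hmemW : ∀ z ∈ K, z - b ∈ W := fun z hz => by
    simpa using AffineSubspace.vsub_mem_direction (mem_affineSpan ℝ hz) (mem_affineSpan ℝ hb)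
  have hstep : ∀ k : ℕ, ∃ c : E, c ∈ W ∧ ‖c‖ = 1 ∧
      ∀ z ∈ K, ⟪c, z - b⟫ ≤ (1 / (k + 1 : ℝ)) * ‖v‖ := by
    intro k
    set ε : ℝ := 1 / (k + 1 : ℝ) with hε
    have hεpos : 0 < ε := by positivity
    obtain ⟨ℓ, t, hlt, hgt⟩ :=
      geometric_hahn_banach_point_closed hconv hcpt.isClosed (hout ε hεpos)
    set w : E := -((InnerProductSpace.toDual ℝ E).symm ℓ : E) with hwdef
    have hwinner : ∀ y : E, ⟪w, y⟫ = -(ℓ y) := by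
      intro y
      rw [hwdef, inner_neg_left]
      simp [InnerProductSpace.toDual_symm_apply]
    set u' : E := (W.orthogonalProjectionOnto w : E) with hu'
    have hu'W : u' ∈ W := (W.orthogonalProjectionOnto w).2
    have hproj : ∀ m, m ∈ W → ⟪u', m⟫ = ⟪w, m⟫ := by
      intro m hm
      have h0 := W.starProjection_inner_eq_zero w m hm
      rw [← Submodule.coe_orthogonalProjectionOnto_apply, inner_sub_left] at h0
      linarith
    have hkey : ∀ z ∈ K, ⟪u', z - b⟫ < ε * ⟪u', v⟫ := by
      intro z hz
      have h2 : ℓ (b + ε • v) < ℓ z := hlt.trans (hgt z hz)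
      have h3 : ℓ (b + ε • v) = ℓ b + ε * ℓ v := by simp
      have e1 : ⟪u', z - b⟫ = ℓ b - ℓ z := by
        rw [hproj _ (hmemW z hz), hwinner, map_sub]; ring
      have e2 : ⟪u', v⟫ = -(ℓ v) := by rw [hproj _ hv, hwinner]
      rw [e1, e2]
      have : ε * -(ℓ v) = -(ε * ℓ v) := by ring
      rw [this]
      linarith
    have hu'v : 0 < ⟪u', v⟫ := by
      have h0 := hkey b hb
      simp only [sub_self, inner_zero_right] at h0
      nlinarith
    have hu'ne : u' ≠ 0 := by
      intro h
      rw [h, inner_zero_left] at hu'v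
      exact lt_irrefl _ hu'v
    have hc1 : ‖‖u'‖⁻¹ • u'‖ = 1 := by
      rw [norm_smul, norm_inv, norm_norm]
      exact inv_mul_cancel₀ (norm_ne_zero_iff.mpr hu'ne)
    refine ⟨‖u'‖⁻¹ • u', W.smul_mem _ hu'W, hc1, ?_⟩
    intro z hz
    have hinv : 0 < ‖u'‖⁻¹ := inv_pos.mpr (norm_pos_iff.mpr hu'ne)
    have h1 : ⟪‖u'‖⁻¹ • u', z - b⟫ < ‖u'‖⁻¹ * (ε * ⟪u', v⟫) := by
      rw [real_inner_smul_left]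
      exact mul_lt_mul_of_pos_left (hkey z hz) hinv
    have h2 : ‖u'‖⁻¹ * (ε * ⟪u', v⟫) = ε * ⟪‖u'‖⁻¹ • u', v⟫ := by
      rw [real_inner_smul_left]; ring
    have h3 : ⟪‖u'‖⁻¹ • u', v⟫ ≤ ‖v‖ := by
      have := real_inner_le_norm (‖u'‖⁻¹ • u') v
      rwa [hc1, one_mul] at this
    calc ⟪‖u'‖⁻¹ • u', z - b⟫ ≤ ε * ⟪‖u'‖⁻¹ • u', v⟫ := by rw [← h2]; exact h1.le
      _ ≤ ε * ‖v‖ := mul_le_mul_of_nonneg_left h3 hεpos.le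
  choose c hcW hcnorm hcbound using hstep
  have hScpt : IsCompact (Metric.sphere (0 : E) 1 ∩ (W : Set E)) :=
    (isCompact_sphere 0 1).inter_right (Submodule.closed_of_finiteDimensional W)
  obtain ⟨u, huS, φ, hφmono, hφtend⟩ := hScpt.tendsto_subseq
    (x := c) (fun k => ⟨mem_sphere_zero_iff_norm.mpr (hcnorm k), hcW k⟩)
  refine ⟨u, mem_sphere_zero_iff_norm.mp huS.1, huS.2, ?_⟩
  intro z hz
  have hf : Filter.Tendsto (fun k => ⟪c (φ k), z - b⟫) Filter.atTop (nhds ⟪u, z - b⟫) :=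
    hφtend.inner tendsto_const_nhds
  have hg : Filter.Tendsto (fun k => (1 / ((φ k : ℝ) + 1)) * ‖v‖) Filter.atTop (nhds 0) := by
    have h0 : Filter.Tendsto (fun n : ℕ => 1 / ((n : ℝ) + 1)) Filter.atTop (nhds 0) :=
      tendsto_one_div_add_atTop_nhds_zero_nat
    have := (h0.comp hφmono.tendsto_atTop).mul_const ‖v‖
    simpa using this
  exact le_of_tendsto_of_tendsto' hf hg fun k => hcbound (φ k) z hz

lemma minkowski_aux {E : Type*} [NormedAddCommGroup E] [InnerProductSpace ℝ E]
    [FiniteDimensional ℝ E] :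
    ∀ (n : ℕ) (K : Set E), IsCompact K → Convex ℝ K →
      finrank ℝ (affineSpan ℝ K).direction ≤ n →
      K ⊆ convexHull ℝ (K.extremePoints ℝ) := by
  intro n
  induction n with
  | zero =>
    intro K hcpt hconv hdim x hx
    have hsub : ∀ y ∈ K, y = x := by
      intro y hy
      have h0 : (affineSpan ℝ K).direction = ⊥ := by
        have : finrank ℝ (affineSpan ℝ K).direction = 0 := le_antisymm hdim (Nat.zero_le _)
        exact Submodule.finrank_eq_zero.mp this
      have : y - x ∈ (affineSpan ℝ K).direction := by
        simpa using AffineSubspace.vsub_mem_direction (mem_affineSpan ℝ hy) (mem_affineSpan ℝ hx)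
      rw [h0, Submodule.mem_bot, sub_eq_zero] at this
      exact this
    exact subset_convexHull ℝ _ ⟨hx, fun x1 h1 x2 h2 _ => hsub x1 h1⟩
  | succ n ih =>
    intro K hcpt hconv hdim x hx
    by_cases hsing : ∀ y ∈ K, y = x
    · exact subset_convexHull ℝ _ ⟨hx, fun x1 h1 x2 h2 _ => hsing x1 h1⟩
    push_neg at hsing
    obtain ⟨y, hy, hyx⟩ := hsing
    set v : E := y - x with hvdef
    have hvne : v ≠ 0 := sub_ne_zero_of_ne hyx
    have hvW : v ∈ (affineSpan ℝ K).direction := by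
      simpa using AffineSubspace.vsub_mem_direction (mem_affineSpan ℝ hy) (mem_affineSpan ℝ hx)
    set T : Set ℝ := {t : ℝ | x + t • v ∈ K} with hTdef
    have hTclosed : IsClosed T := by
      have hcont : Continuous fun t : ℝ => x + t • v :=
        continuous_const.add (continuous_id.smul continuous_const)
      exact hcpt.isClosed.preimage hcont
    have hTbdd : Bornology.IsBounded T := by
      obtain ⟨C, hC⟩ := hcpt.isBounded.exists_norm_le
      apply isBounded_iff_forall_norm_le.mpr
      refine ⟨(C + ‖x‖) / ‖v‖, fun t ht => ?_⟩
      have h1 : ‖x + t • v‖ ≤ C := hC _ ht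
      have h2 : ‖t • v‖ ≤ C + ‖x‖ := by
        have h3 : ‖t • v‖ = ‖(x + t • v) - x‖ := by rw [add_sub_cancel_left]
        rw [h3]
        calc ‖(x + t • v) - x‖ ≤ ‖x + t • v‖ + ‖x‖ := norm_sub_le _ _
          _ ≤ C + ‖x‖ := by linarith
      rw [norm_smul] at h2
      rw [le_div_iff₀ (norm_pos_iff.mpr hvne)]
      exact h2
    have hTcpt : IsCompact T := Metric.isCompact_of_isClosed_isBounded hTclosed hTbdd
    have hT0 : (0 : ℝ) ∈ T := by simp [hTdef, hx]
    have hT1 : (1 : ℝ) ∈ T := by simp [hTdef, hvdef, hy]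
    have hTne : T.Nonempty := ⟨0, hT0⟩
    have ht₁T : sSup T ∈ T := hTcpt.sSup_mem hTne
    have ht₀T : sInf T ∈ T := hTcpt.sInf_mem hTne
    have ht₀le : sInf T ≤ 0 := csInf_le hTbdd.bddBelow hT0
    have ht₁ge : 1 ≤ sSup T := le_csSup hTbdd.bddAbove hT1
    have hface : ∀ (bb vv : E), bb ∈ K → vv ∈ (affineSpan ℝ K).direction →
        (∀ ε : ℝ, 0 < ε → bb + ε • vv ∉ K) → bb ∈ convexHull ℝ (K.extremePoints ℝ) := by
      intro bb vv hbbK hvvW hbout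
      obtain ⟨u, hu1, huW, hsup⟩ := support_aux hcpt hconv hbbK hvvW hbout
      have hlin : ∀ (p q : E) (s t : ℝ), s + t = 1 →
          ⟪u, s • p + t • q - bb⟫ = s * ⟪u, p - bb⟫ + t * ⟪u, q - bb⟫ := by
        intro p q s t hst
        have hid : s • (p - bb) + t • (q - bb) = s • p + t • q - (s + t) • bb := by
          rw [smul_sub, smul_sub, add_smul]; abel
        rw [hst, one_smul] at hid
        rw [← hid, inner_add_right, real_inner_smul_right, real_inner_smul_right]
      set F := {z ∈ K | ⟪u, z - bb⟫ = 0} with hFdef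
      have hbbF : bb ∈ F := ⟨hbbK, by simp⟩
      have hFK : F ⊆ K := fun z hz => hz.1
      have hgcont : Continuous fun z : E => ⟪u, z - bb⟫ :=
        continuous_const.inner (continuous_id.sub continuous_const)
      have hFcpt : IsCompact F :=
        hcpt.inter_right (isClosed_eq hgcont continuous_const)
      have hFconv : Convex ℝ F := by
        intro p hp q hq s t hs ht hst
        exact ⟨hconv hp.1 hq.1 hs ht hst, by rw [hlin p q s t hst, hp.2, hq.2]; ring⟩
      have hFextreme : IsExtreme ℝ K F := by
        refine ⟨hFK, ?_⟩
        rintro x1 hx1 x2 hx2 z hzF hseg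
        obtain ⟨s, t, hs, ht, hst, hz⟩ := hseg
        have hcalc : s * ⟪u, x1 - bb⟫ + t * ⟪u, x2 - bb⟫ = 0 := by
          rw [← hlin x1 x2 s t hst, hz]
          exact hzF.2
        have h1 : ⟪u, x1 - bb⟫ ≤ 0 := hsup x1 hx1
        have h2 : ⟪u, x2 - bb⟫ ≤ 0 := hsup x2 hx2
        have e1 : ⟪u, x1 - bb⟫ = 0 := by nlinarith
        have e2 : ⟪u, x2 - bb⟫ = 0 := by nlinarith
        exact ⟨hx1, e1⟩
      -- dimension drop
      have hperp : ∀ m ∈ (affineSpan ℝ F).direction, ⟪u, m⟫ = 0 := by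
        intro m hm
        rw [direction_affineSpan, vectorSpan_def] at hm
        induction hm using Submodule.span_induction with
        | mem z hz =>
          obtain ⟨z1, hz1, z2, hz2, rfl⟩ := Set.mem_sub.mp hz
          have : (z1 : E) - z2 = (z1 - bb) - (z2 - bb) := by abel
          rw [this, inner_sub_right, hz1.2, hz2.2, sub_zero]
        | zero => simp
        | add p q _ _ hp hq => rw [inner_add_right, hp, hq, add_zero]
        | smul c p _ hp => rw [real_inner_smul_right, hp, mul_zero]
      have huNot : u ∉ (affineSpan ℝ F).direction := by
        intro h
        have h2 := hperp u h
        rw [real_inner_self_eq_norm_sq, hu1] at h2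
        norm_num at h2
      have hlt : (affineSpan ℝ F).direction < (affineSpan ℝ K).direction := by
        refine lt_of_le_of_ne (AffineSubspace.direction_le (affineSpan_mono ℝ hFK)) ?_
        intro h
        rw [h] at huNot
        exact huNot huW
      have hdimF : finrank ℝ (affineSpan ℝ F).direction ≤ n := by
        have := Submodule.finrank_lt_finrank_of_lt hlt
        omega
      exact convexHull_mono hFextreme.extremePoints_subset_extremePoints
        (ih F hFcpt hFconv hdimF hbbF)
    -- apply the face argument to both endpoints
    have hbK : x + sSup T • v ∈ K := ht₁T
    have haK : x + sInf T • v ∈ K := ht₀T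
    have hbmem : x + sSup T • v ∈ convexHull ℝ (K.extremePoints ℝ) := by
      refine hface _ v hbK hvW fun ε hε hmem => ?_
      have : sSup T + ε ∈ T := by
        have : x + sSup T • v + ε • v = x + (sSup T + ε) • v := by
          rw [add_smul]; abel
        rwa [this] at hmem
      have := le_csSup hTbdd.bddAbove this
      linarith
    have hamem : x + sInf T • v ∈ convexHull ℝ (K.extremePoints ℝ) := by
      refine hface _ (-v) haK (Submodule.neg_mem _ hvW) fun ε hε hmem => ?_
      have : sInf T - ε ∈ T := by
        have : x + sInf T • v + ε • (-v) = x + (sInf T - ε) • v := by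
          rw [sub_smul, smul_neg]; abel
        rwa [this] at hmem
      have := csInf_le hTbdd.bddBelow this
      linarith
    -- x is a convex combination of the endpoints
    have hpos : 0 < sSup T - sInf T := by linarith
    set θ : ℝ := -sInf T / (sSup T - sInf T) with hθdef
    have hθ0 : 0 ≤ θ := div_nonneg (by linarith) hpos.le
    have hθ1 : θ ≤ 1 := by
      rw [div_le_one hpos]
      linarith
    have hxcomb : (1 - θ) • (x + sInf T • v) + θ • (x + sSup T • v) = x := by
      have hc : (1 - θ) * sInf T + θ * sSup T = 0 := by
        have h := div_mul_cancel₀ (-sInf T) hpos.ne'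
        rw [← hθdef] at h
        linear_combination h
      have : (1 - θ) • (x + sInf T • v) + θ • (x + sSup T • v)
          = x + ((1 - θ) * sInf T + θ * sSup T) • v := by
        module
      rw [this, hc, zero_smul, add_zero]
    exact hxcomb ▸ (convex_convexHull ℝ _) hamem hbmem (by linarith) hθ0 (by ring)

lemma mem_convexHull_fin {E : Type*} [AddCommGroup E] [Module ℝ E] {A : Set E} {x : E}
    (hx : x ∈ convexHull ℝ A) :
    ∃ (n : ℕ) (z : Fin n → E) (w : Fin n → ℝ), (∀ j, z j ∈ A) ∧ (∀ j, 0 ≤ w j) ∧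
      ∑ j, w j = 1 ∧ ∑ j, w j • z j = x := by
  obtain ⟨ι, hι, z, w, hzs, _, hw0, hw1, hwz⟩ := eq_pos_convex_span_of_mem_convexHull hx
  letI := hι
  refine ⟨Fintype.card ι, z ∘ (Fintype.equivFin ι).symm, w ∘ (Fintype.equivFin ι).symm,
    fun j => hzs ⟨_, rfl⟩, fun j => (hw0 _).le, ?_, ?_⟩
  · rw [← hw1]
    exact Fintype.sum_equiv (Fintype.equivFin ι).symm _ _ fun j => rfl
  · rw [← hwz]
    exact Fintype.sum_equiv (Fintype.equivFin ι).symm _ _ fun j => rfl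

end Aux

section Main

open Set Module

set_option maxHeartbeats 2000000 in
/-- For a nonempty compact convex `K ⊆ ℝ^d`, a continuous concave
`f : K → ℝ`, and `ω ∈ K`, there exists an optimal decomposition of `ω`: finitely many
extreme points `ρᵢ` of `K` and weights `λᵢ ≥ 0`, `Σ λᵢ = 1`, with `ω = Σ λᵢ ρᵢ` and
`Σ λᵢ f(ρᵢ) = E(ω)`, where `E(ω) = inf_{μ ∈ M_ω(K)} ∫_K f dμ`. -/
theorem exists_optimal_decomposition (d : ℕ)
    (K : Set (EuclideanSpace ℝ (Fin d))) (hKne : K.Nonempty) (hKcpt : IsCompact K)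
    (hKconv : Convex ℝ K) (f : EuclideanSpace ℝ (Fin d) → ℝ)
    (hfc : ContinuousOn f K) (hfv : ConcaveOn ℝ K f)
    (ω : EuclideanSpace ℝ (Fin d)) (hω : ω ∈ K) :
    ∃ (n : ℕ) (ρ : Fin n → EuclideanSpace ℝ (Fin d)) (l : Fin n → ℝ),
      (∀ i, ρ i ∈ Set.extremePoints ℝ K) ∧ (∀ i, 0 ≤ l i) ∧ (∑ i, l i) = 1 ∧
      (∑ i, l i • ρ i) = ω ∧
      (∑ i, l i * f (ρ i)) =
        ⨅ μ : {μ : ProbabilityMeasure ↥K //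
            ∫ x : ↥K, (x : EuclideanSpace ℝ (Fin d)) ∂(μ : Measure ↥K) = ω},
          ∫ x : ↥K, f (x : EuclideanSpace ℝ (Fin d)) ∂(μ.1 : Measure ↥K) := by
  classical
  let E' := EuclideanSpace ℝ (Fin d)
  -- the graph of f over K and its convex hull
  set G : Set (E' × ℝ) := (fun x => (x, f x)) '' K with hGdef
  have hGcpt : IsCompact G :=
    hKcpt.image_of_continuousOn
      (ContinuousOn.prodMk continuousOn_id hfc : ContinuousOn (fun x => (x, f x)) K)
  set C := convexHull ℝ G with hCdef
  have hCcpt : IsCompact C := aux_isCompact_convexHull hGcpt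
  have hCconv : Convex ℝ C := convex_convexHull ℝ G
  have hGC : G ⊆ C := subset_convexHull ℝ G
  set S : Set ℝ := {t | ((ω, t) : E' × ℝ) ∈ C} with hSdef
  have hfωS : f ω ∈ S := hGC ⟨ω, hω, rfl⟩
  have hSne : S.Nonempty := ⟨f ω, hfωS⟩
  have hSclosed : IsClosed S := hCcpt.isClosed.preimage (Continuous.prodMk_right ω)
  have hSbdd : BddBelow S := by
    obtain ⟨R, hR⟩ := hCcpt.isBounded.exists_norm_le
    refine ⟨-R, fun t ht => ?_⟩
    have h1 : ‖((ω, t) : E' × ℝ)‖ ≤ R := hR _ ht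
    have h2 : |t| ≤ ‖((ω, t) : E' × ℝ)‖ := by
      rw [Prod.norm_def]
      simpa using le_max_right ‖ω‖ |t|
    have := abs_le.mp (h2.trans h1)
    linarith [this.1]
  set m := sInf S with hmdef
  have hmS : m ∈ S := hSclosed.csInf_mem hSne hSbdd
  have hmle : m ≤ f ω := csInf_le hSbdd hfωS
  -- decompose (ω, m) as a convex combination of graph points
  obtain ⟨N, zP, w, hzPG, hw0, hw1, hwsum⟩ := mem_convexHull_fin hmS
  have hxsK : ∀ i, (zP i).1 ∈ K ∧ (zP i).2 = f ((zP i).1) := by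
    intro i
    obtain ⟨x, hxK, hxe⟩ := hzPG i
    refine ⟨by rw [← hxe]; exact hxK, by rw [← hxe]⟩
  have hsum1 : ∑ i, w i • (zP i).1 = ω := by
    have h := congrArg Prod.fst hwsum
    rw [Prod.fst_sum] at h
    simpa using h
  have hsum2 : ∑ i, w i * (zP i).2 = m := by
    have h := congrArg Prod.snd hwsum
    rw [Prod.snd_sum] at h
    simpa using h
  -- Minkowski decomposition of each point into extreme points
  have hmink : ∀ x ∈ K, x ∈ convexHull ℝ (K.extremePoints ℝ) := fun x hxK =>
    minkowski_aux (finrank ℝ (affineSpan ℝ K).direction) K hKcpt hKconv le_rfl hxK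
  have hdecomp : ∀ i : Fin N, ∃ (kk : ℕ) (zz : Fin kk → E') (ww : Fin kk → ℝ),
      (∀ j, zz j ∈ K.extremePoints ℝ) ∧ (∀ j, 0 ≤ ww j) ∧
      ∑ j, ww j = 1 ∧ ∑ j, ww j • zz j = (zP i).1 :=
    fun i => mem_convexHull_fin (hmink _ (hxsK i).1)
  choose kk zz ww hzzE hww0 hww1 hwwsum using hdecomp
  set σt := (i : Fin N) × Fin (kk i) with hσt
  set ρ' : σt → E' := fun s => zz s.1 s.2 with hρ'
  set l' : σt → ℝ := fun s => w s.1 * ww s.1 s.2 with hl'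
  have hl'0 : ∀ s, 0 ≤ l' s := fun s => mul_nonneg (hw0 s.1) (hww0 s.1 s.2)
  have hl'sum : ∑ s, l' s = 1 := by
    rw [← Finset.univ_sigma_univ, Finset.sum_sigma]
    rw [← hw1]
    refine Finset.sum_congr rfl fun i _ => ?_
    simp only [hl']
    rw [← Finset.mul_sum, hww1 i, mul_one]
  have hl'vec : ∑ s, l' s • ρ' s = ω := by
    rw [← Finset.univ_sigma_univ, Finset.sum_sigma]
    rw [← hsum1]
    refine Finset.sum_congr rfl fun i _ => ?_
    simp only [hl', hρ', mul_smul]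
    rw [← Finset.smul_sum, hwwsum i]
  set V := ∑ s, l' s * f (ρ' s) with hV
  have hρ'E : ∀ s, ρ' s ∈ K.extremePoints ℝ := fun s => hzzE s.1 s.2
  have hρ'K : ∀ s, ρ' s ∈ K := fun s => extremePoints_subset (hρ'E s)
  have hVle : V ≤ m := by
    rw [hV, ← Finset.univ_sigma_univ, Finset.sum_sigma, ← hsum2]
    refine Finset.sum_le_sum fun i _ => ?_
    simp only [hl', hρ']
    have hjensen : ∑ j, ww i j • f (zz i j) ≤ f (∑ j, ww i j • zz i j) :=
      hfv.le_map_sum (fun j _ => hww0 i j) (hww1 i)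
        (fun j _ => extremePoints_subset (hzzE i j))
    rw [hwwsum i] at hjensen
    have : ∑ j, (w i * ww i j) * f (zz i j) = w i * ∑ j, ww i j * f (zz i j) := by
      rw [Finset.mul_sum]
      exact Finset.sum_congr rfl fun j _ => by ring
    rw [this, (hxsK i).2]
    exact mul_le_mul_of_nonneg_left (by simpa [smul_eq_mul] using hjensen) (hw0 i)
  have hVge : m ≤ V := by
    have hmem : ((ω, V) : E' × ℝ) ∈ C := by
      have : ((ω, V) : E' × ℝ) = ∑ s, l' s • ((ρ' s, f (ρ' s)) : E' × ℝ) := by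
        rw [Prod.ext_iff]
        constructor
        · rw [Prod.fst_sum]
          simpa using hl'vec.symm
        · rw [Prod.snd_sum]
          simp [hV, smul_eq_mul]
      rw [this]
      exact hCconv.sum_mem (fun s _ => hl'0 s) hl'sum
        (fun s _ => hGC ⟨ρ' s, hρ'K s, rfl⟩)
    exact csInf_le hSbdd hmem
  have hVm : V = m := le_antisymm hVle hVge
  -- measure theory side
  haveI : CompactSpace ↥K := isCompact_iff_compactSpace.mp hKcpt
  have hfK : Continuous fun x : ↥K => f ↑x := hfc.restrict
  have hcoe : Continuous fun x : ↥K => (↑x : E') := continuous_subtype_val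
  -- lower bound for any barycentric probability measure
  have hlower : ∀ μ : ProbabilityMeasure ↥K,
      (∫ x : ↥K, (↑x : E') ∂(μ : Measure ↥K)) = ω →
      m ≤ ∫ x : ↥K, f ↑x ∂(μ : Measure ↥K) := by
    intro μ hbar
    have hint_f : Integrable (fun x : ↥K => f ↑x) (μ : Measure ↥K) :=
      hfK.integrable_of_hasCompactSupport (HasCompactSupport.of_compactSpace _)
    have hint_c : Integrable (fun x : ↥K => (↑x : E')) (μ : Measure ↥K) :=
      hcoe.integrable_of_hasCompactSupport (HasCompactSupport.of_compactSpace _)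
    refine le_of_forall_pos_le_add fun ε hε => ?_
    have hnot : ((ω, m - ε) : E' × ℝ) ∉ C := by
      intro hmem
      have : m ≤ m - ε := csInf_le hSbdd hmem
      linarith
    obtain ⟨ℓ, t, hlt, hgt⟩ := geometric_hahn_banach_point_closed hCconv hCcpt.isClosed hnot
    set β := ℓ (0, 1) with hβ
    set L1 : E' →L[ℝ] ℝ := ℓ.comp (ContinuousLinearMap.inl ℝ E' ℝ) with hL1
    have hsplit : ∀ (x : E') (s : ℝ), ℓ (x, s) = L1 x + s * β := by
      intro x s
      have hxs : ((x, s) : E' × ℝ) = (x, 0) + s • ((0 : E'), (1 : ℝ)) := by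
        simp [Prod.ext_iff]
      rw [hxs, map_add, ContinuousLinearMap.map_smul, smul_eq_mul]
      rfl
    have hωstrict : L1 ω + (m - ε) * β < t := by
      have := hlt
      rwa [hsplit] at this
    have hKgt : ∀ x ∈ K, t < L1 x + f x * β := by
      intro x hxK
      have := hgt _ (hGC ⟨x, hxK, rfl⟩)
      rwa [hsplit] at this
    have hβpos : 0 < β := by
      have h1 := hKgt ω hω
      nlinarith
    have hint_L : Integrable (fun x : ↥K => L1 ↑x) (μ : Measure ↥K) :=
      (L1.continuous.comp hcoe).integrable_of_hasCompactSupport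
        (HasCompactSupport.of_compactSpace _)
    have hL1int : ∫ x : ↥K, L1 ↑x ∂(μ : Measure ↥K) = L1 ω := by
      rw [← hbar]
      exact L1.integral_comp_comm hint_c
    have hptwise : ∀ x : ↥K, (t - L1 ↑x) / β ≤ f ↑x := by
      intro x
      have := hKgt ↑x x.2
      rw [div_le_iff₀ hβpos]
      nlinarith
    have hint_g : Integrable (fun x : ↥K => (t - L1 ↑x) / β) (μ : Measure ↥K) :=
      ((integrable_const t).sub hint_L).div_const β
    have hmono := integral_mono hint_g hint_f hptwise
    have hlhs : ∫ x : ↥K, (t - L1 ↑x) / β ∂(μ : Measure ↥K) = (t - L1 ω) / β := by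
      rw [integral_div, integral_sub (integrable_const t) hint_L, integral_const, hL1int]
      simp [measure_univ]
    rw [hlhs] at hmono
    have : m - ε < (t - L1 ω) / β := by
      rw [lt_div_iff₀ hβpos]
      nlinarith
    linarith
  -- build the optimal measure
  set pts : σt → ↥K := fun s => ⟨ρ' s, hρ'K s⟩ with hpts
  set μ₀ : Measure ↥K := ∑ s : σt, (ENNReal.ofReal (l' s)) • Measure.dirac (pts s) with hμ₀
  haveI hFin : ∀ s : σt, IsFiniteMeasure ((ENNReal.ofReal (l' s)) • Measure.dirac (pts s)) := by
    intro s
    constructor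
    rw [Measure.smul_apply, smul_eq_mul]
    exact ENNReal.mul_lt_top ENNReal.ofReal_lt_top (by simp [measure_univ])
  have hμ₀prob : IsProbabilityMeasure μ₀ := by
    constructor
    rw [hμ₀, Measure.finset_sum_apply]
    have : ∀ s : σt, ((ENNReal.ofReal (l' s)) • Measure.dirac (pts s)) Set.univ
        = ENNReal.ofReal (l' s) := by
      intro s
      rw [Measure.smul_apply, smul_eq_mul, measure_univ, mul_one]
    rw [Finset.sum_congr rfl fun s _ => this s]
    rw [← ENNReal.ofReal_sum_of_nonneg fun s _ => hl'0 s, hl'sum, ENNReal.ofReal_one]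
  -- integrals against μ₀
  have hμ₀int : ∀ {X : Type} [NormedAddCommGroup X] [NormedSpace ℝ X] [CompleteSpace X]
      (g : ↥K → X), Continuous g → ∫ x, g x ∂μ₀ = ∑ s : σt, l' s • g (pts s) := by
    intro X _ _ _ g hg
    rw [hμ₀]
    rw [integral_finset_sum_measure (fun s _ =>
      hg.integrable_of_hasCompactSupport (HasCompactSupport.of_compactSpace _))]
    refine Finset.sum_congr rfl fun s _ => ?_
    rw [integral_smul_measure, integral_dirac, ENNReal.toReal_ofReal (hl'0 s)]
  have hbary₀ : ∫ x : ↥K, (↑x : E') ∂μ₀ = ω := by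
    rw [hμ₀int _ hcoe]
    exact hl'vec
  have hval₀ : ∫ x : ↥K, f ↑x ∂μ₀ = V := by
    rw [hμ₀int _ hfK]
    simp only [smul_eq_mul]
    rfl
  -- assemble everything
  set Jty := {μ : ProbabilityMeasure ↥K //
      ∫ x : ↥K, (x : EuclideanSpace ℝ (Fin d)) ∂(μ : Measure ↥K) = ω} with hJty
  let μP : ProbabilityMeasure ↥K := ⟨μ₀, hμ₀prob⟩
  have hμPcoe : (μP : Measure ↥K) = μ₀ := rfl
  have he₀ : ∫ x : ↥K, (x : EuclideanSpace ℝ (Fin d)) ∂(μP : Measure ↥K) = ω := hbary₀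
  let e₀ : Jty := ⟨μP, he₀⟩
  haveI : Nonempty Jty := ⟨e₀⟩
  have hbddJ : BddBelow (Set.range fun μ : Jty =>
      ∫ x : ↥K, f (x : EuclideanSpace ℝ (Fin d)) ∂(μ.1 : Measure ↥K)) := by
    refine ⟨m, ?_⟩
    rintro _ ⟨μ, rfl⟩
    exact hlower μ.1 μ.2
  have hinf : (⨅ μ : Jty, ∫ x : ↥K, f (x : EuclideanSpace ℝ (Fin d)) ∂(μ.1 : Measure ↥K)) = m := by
    apply le_antisymm
    · have h1 : (⨅ μ : Jty, ∫ x : ↥K, f (x : E') ∂(μ.1 : Measure ↥K))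
          ≤ ∫ x : ↥K, f (x : E') ∂(e₀.1 : Measure ↥K) := ciInf_le hbddJ e₀
      calc (⨅ μ : Jty, ∫ x : ↥K, f (x : E') ∂(μ.1 : Measure ↥K))
          ≤ ∫ x : ↥K, f (x : E') ∂(e₀.1 : Measure ↥K) := h1
        _ = V := hval₀
        _ = m := hVm
    · exact le_ciInf fun μ => hlower μ.1 μ.2
  -- reindex the sigma type by Fin n
  refine ⟨Fintype.card σt, ρ' ∘ (Fintype.equivFin σt).symm, l' ∘ (Fintype.equivFin σt).symm,
    fun i => hρ'E _, fun i => hl'0 _, ?_, ?_, ?_⟩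
  · rw [← hl'sum]
    exact Fintype.sum_equiv (Fintype.equivFin σt).symm _ _ fun j => rfl
  · rw [← hl'vec]
    exact Fintype.sum_equiv (Fintype.equivFin σt).symm _ _ fun j => rfl
  · rw [hinf, ← hVm, hV]
    exact Fintype.sum_equiv (Fintype.equivFin σt).symm _ _ fun j => rfl
end Main
end
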